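/- arXiv:2111.10424 — 15 statements merged into one kernel-verified Lean document; each statement's English description precedes it below -/
import Mathlib

section
/- Let X be a compact metric space and id_X : X → X the identity map. The dynamical system (X, id_X) has shadowing if and only if X is totally disconnected. -/
open Metric Set

/-- The system `(X, f)` has shadowing: for every `ε > 0` there is `δ > 0` such that every
`δ`-pseudo-orbit is `ε`-shadowed by a true orbit. -/
def HasShadowing {X : Type*} [MetricSpace X] (f : X → X) : Prop :=
  ∀ ε > (0 : ℝ), ∃ δ > (0 : ℝ), ∀ x : ℕ → X,
    (∀ i : ℕ, dist (f (x i)) (x (i + 1)) < δ) →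
      ∃ z : X, ∀ i : ℕ, dist (f^[i] z) (x i) < ε

/-- The set of points reachable from `a` by a finite `δ`-chain. -/
def chainSet {X : Type*} [MetricSpace X] (δ : ℝ) (a : X) : Set X :=
  {y | ∃ n : ℕ, ∃ c : ℕ → X, c 0 = a ∧ c n = y ∧ ∀ i < n, dist (c i) (c (i + 1)) < δ}

lemma self_mem_chainSet {X : Type*} [MetricSpace X] (δ : ℝ) (a : X) :
    a ∈ chainSet δ a :=
  ⟨0, fun _ => a, rfl, rfl, fun i hi => absurd hi (Nat.not_lt_zero i)⟩

lemma chainSet_extend {X : Type*} [MetricSpace X] {δ : ℝ} {a y z : X}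
    (hy : y ∈ chainSet δ a) (hz : dist y z < δ) : z ∈ chainSet δ a := by
  obtain ⟨n, c, h0, hn, hstep⟩ := hy
  refine ⟨n + 1, fun i => if i ≤ n then c i else z, by simp [h0], by simp, ?_⟩
  intro i hi
  rcases lt_or_ge i n with h | h
  · have h1 : i ≤ n := h.le
    have h2 : i + 1 ≤ n := h
    simp only [h1, h2, if_true]
    exact hstep i h
  · have h1 : i = n := by omega
    subst h1
    simp only [le_refl, if_true, Nat.not_succ_le_self i, if_false]
    rwa [hn]

lemma isClopen_chainSet {X : Type*} [MetricSpace X] {δ : ℝ} (hδ : 0 < δ) (a : X) :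
    IsClopen (chainSet δ a) := by
  constructor
  · rw [← isOpen_compl_iff]
    rw [Metric.isOpen_iff]
    intro y hy
    refine ⟨δ, hδ, fun z hz hzc => hy ?_⟩
    exact chainSet_extend hzc (mem_ball.1 hz)
  · rw [Metric.isOpen_iff]
    intro y hy
    exact ⟨δ, hδ, fun z hz => chainSet_extend hy (by rw [dist_comm]; exact mem_ball.1 hz)⟩

/-- The system `(X, id_X)` has shadowing if and only if `X` is totally disconnected. -/
theorem identity_shadowing_iff_totallyDisconnected
    {X : Type*} [MetricSpace X] [CompactSpace X] :
    HasShadowing (id : X → X) ↔ TotallyDisconnectedSpace X := by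
  constructor
  · intro hsh
    refine ⟨fun s _ hs a ha b hb => ?_⟩
    by_contra hab
    have hd : 0 < dist a b := dist_pos.2 hab
    obtain ⟨δ, hδ, hδsh⟩ := hsh (dist a b / 3) (by linarith)
    -- b is reachable from a by a δ-chain
    have hbC : b ∈ chainSet δ a := by
      have hsub : s ⊆ chainSet δ a :=
        hs.subset_isClopen (isClopen_chainSet hδ a) ⟨a, ha, self_mem_chainSet δ a⟩
      exact hsub hb
    obtain ⟨n, c, h0, hn, hstep⟩ := hbC
    set x : ℕ → X := fun i => c (min i n) with hx
    have hpo : ∀ i : ℕ, dist (id (x i)) (x (i + 1)) < δ := by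
      intro i
      simp only [id_eq, hx]
      rcases lt_or_ge i n with h | h
      · have h1 : min i n = i := min_eq_left h.le
        have h2 : min (i + 1) n = i + 1 := min_eq_left h
        rw [h1, h2]; exact hstep i h
      · have h1 : min i n = n := min_eq_right h
        have h2 : min (i + 1) n = n := min_eq_right (by omega)
        rw [h1, h2, dist_self]; exact hδ
    obtain ⟨z, hz⟩ := hδsh x hpo
    have hz0 := hz 0
    have hzn := hz n
    simp only [Function.iterate_id, id_eq, hx, Nat.min_self, min_self] at hz0 hzn
    rw [Nat.zero_min, h0] at hz0
    rw [hn] at hzn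
    have : dist a b ≤ dist z a + dist z b := by
      rw [dist_comm z a]; exact dist_triangle a z b
    linarith
  · intro htd
    intro ε hε
    cases isEmpty_or_nonempty X with
    | inl h =>
        exact ⟨1, one_pos, fun x _ => (h.false (x 0)).elim⟩
    | inr h =>
        -- choose clopen neighborhoods inside ε/2-balls
        have hbasis := isTopologicalBasis_isClopen (X := X)
        have hU : ∀ p : X, ∃ U : Set X, IsClopen U ∧ p ∈ U ∧ U ⊆ ball p (ε / 2) := by
          intro p
          obtain ⟨U, hUc, hpU, hUsub⟩ := hbasis.exists_subset_of_mem_open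
            (show p ∈ ball p (ε / 2) from mem_ball_self (by linarith)) isOpen_ball
          exact ⟨U, hUc, hpU, hUsub⟩
        choose U hUc hUm hUb using hU
        -- for each p, a thickening of U p stays in U p
        have hD : ∀ p : X, ∃ d > (0 : ℝ), thickening d (U p) ⊆ U p := fun p =>
          ((hUc p).1.isCompact).exists_thickening_subset_open (hUc p).2
            (subset_refl _)
        choose D hDpos hDsub using hD
        obtain ⟨t, ht⟩ := isCompact_univ.elim_finite_subcover U (fun p => (hUc p).2)
          (fun p _ => mem_iUnion.2 ⟨p, hUm p⟩)
        have htne : t.Nonempty := by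
          obtain ⟨p⟩ := h
          obtain ⟨q, hq⟩ := mem_iUnion.1 (ht (mem_univ p))
          simp only [mem_iUnion, exists_prop] at hq
          exact ⟨q, hq.1⟩
        refine ⟨t.inf' htne D, ?_, ?_⟩
        · exact (Finset.lt_inf'_iff htne).2 fun p _ => hDpos p
        · intro x hx
          obtain ⟨q, hq⟩ := mem_iUnion.1 (ht (mem_univ (x 0)))
          simp only [mem_iUnion, exists_prop] at hq
          obtain ⟨hqt, hx0⟩ := hq
          have hall : ∀ i, x i ∈ U q := by
            intro i
            induction i with
            | zero => exact hx0
            | succ k ih =>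
                apply hDsub q
                rw [mem_thickening_iff]
                refine ⟨x k, ih, ?_⟩
                rw [dist_comm]
                calc dist (x k) (x (k + 1)) < t.inf' htne D := by
                      simpa using hx k
                  _ ≤ D q := Finset.inf'_le D hqt
          refine ⟨x 0, fun i => ?_⟩
          rw [Function.iterate_id, id_eq]
          have h1 : x 0 ∈ ball q (ε / 2) := hUb q (hall 0)
          have h2 : x i ∈ ball q (ε / 2) := hUb q (hall i)
          rw [mem_ball] at h1 h2
          calc dist (x 0) (x i) ≤ dist (x 0) q + dist q (x i) := dist_triangle _ _ _
            _ < ε / 2 + ε / 2 := by rw [dist_comm q (x i)]; linarith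
            _ = ε := by ring
end

section
/- Let X be a compact metric space and f : X → X a continuous map such that f^n = id_X for some n > 0 (i.e., (X,f) is periodic). Then (X,f) has shadowing if and only if X is totally disconnected. -/
open Function Metric Relation Set

section PseudoMetric

variable {X : Type*} [PseudoMetricSpace X]

def IsPseudoOrbit (f : X → X) (δ : ℝ) (p : ℕ → X) : Prop :=
  ∀ i, dist (f (p i)) (p (i + 1)) < δ

lemma IsPreconnected.reflTransGen_dist_lt {s : Set X} (hs : IsPreconnected s) {δ : ℝ}
    (hδ : 0 < δ) {x y : X} (hx : x ∈ s) (hy : y ∈ s) :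
    ReflTransGen (fun a b => dist a b < δ) x y := by
  refine hs.induction₂' _ (fun a _ => ?_) (fun _ _ _ _ _ _ => ReflTransGen.trans) hx hy
  filter_upwards [nhdsWithin_le_nhds (ball_mem_nhds a hδ)] with b hb
  exact ⟨.single (by rwa [mem_ball, dist_comm] at hb), .single hb⟩

/-- Each link `x ~ x'` of the chain is crossed by running once around the orbit of `x`,
which ends `δ`-close to `x'` because `f^[n] x = x`. -/
lemma exists_isPseudoOrbit_of_reflTransGen {f : X → X} {n : ℕ} (hn : 0 < n) (hfn : f^[n] = id)
    {δ : ℝ} (hδ : 0 < δ) {x y : X} (h : ReflTransGen (fun a b => dist a b < δ) x y) :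
    ∃ p, IsPseudoOrbit f δ p ∧ p 0 = x ∧ ∃ m, p (n * m) = y := by
  induction h using ReflTransGen.head_induction_on with
  | refl => exact ⟨fun i => f^[i] y, fun i => by simpa [← iterate_succ_apply'] using hδ,
      rfl, 0, by simp⟩
  | @head x x' hxx' _ ih =>
    obtain ⟨p, hp, hp0, m, hpm⟩ := ih
    refine ⟨fun i => if i < n then f^[i] x else p (i - n), fun i => ?_, by simp [hn],
      m + 1, by simpa [Nat.mul_succ] using hpm⟩
    rcases lt_trichotomy (i + 1) n with hi | hi | hi
    · simpa [hi, Nat.lt_of_succ_lt hi, ← iterate_succ_apply'] using hδ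
    · have hfx : f (f^[i] x) = x := by
        rw [← iterate_succ_apply' f, Nat.succ_eq_add_one, hi, hfn, id]
      simpa [hi, show i < n by omega, hfx, hp0] using hxx'
    · simpa [show ¬ i < n by omega, show ¬ i + 1 < n by omega,
        Nat.sub_add_comm (by omega : n ≤ i)] using hp (i - n)

lemma IsPseudoOrbit.apply_iterate_eq_of_semiconj {Y : Type*} {f : X → X} {δ : ℝ}
    {p : ℕ → X} (hp : IsPseudoOrbit f δ p) {φ : X → Y} {σ : Y → Y} (hφ : Semiconj φ f σ)
    (hδ : ∀ u w, dist u w < δ → φ u = φ w) (i : ℕ) : φ (f^[i] (p 0)) = φ (p i) := by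
  induction i with
  | zero => rfl
  | succ i ih => rw [iterate_succ_apply', hφ, ih, ← hφ, hδ _ _ (hp i)]

lemma Continuous.exists_pos_forall_dist_lt_imp_eq [CompactSpace X] {Y : Type*}
    [TopologicalSpace Y] [DiscreteTopology Y] {φ : X → Y} (hφ : Continuous φ) :
    ∃ δ > 0, ∀ u w, dist u w < δ → φ u = φ w := by
  obtain ⟨δ, hδ, hball⟩ := lebesgue_number_lemma_of_metric isCompact_univ
    (fun y => (isOpen_discrete {y}).preimage hφ) (fun x _ => mem_iUnion.mpr ⟨φ x, rfl⟩)
  refine ⟨δ, hδ, fun u w huw => ?_⟩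
  obtain ⟨y, hy⟩ := hball u (mem_univ u)
  exact (hy (mem_ball_self hδ)).trans (hy (mem_ball'.mpr huw)).symm

end PseudoMetric

lemma iterate_finRotate {X : Type*} {f : X → X} {n : ℕ} (hfn : f^[n] = id) (i : Fin n) :
    f^[(finRotate n i : ℕ)] = f^[(i : ℕ) + 1] := by
  obtain _ | n := n
  · exact i.elim0
  rw [coe_finRotate]
  split_ifs with hi
  · rw [hi, Fin.val_last, hfn, iterate_zero]
  · rfl

lemma semiconj_iterate_finRotate {X Y : Type*} {f : X → X} {n : ℕ} (hfn : f^[n] = id)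
    (g : X → Y) :
    Semiconj (fun x (i : Fin n) => g (f^[i] x)) f (fun v => v ∘ finRotate n) := by
  intro x
  funext i
  simp only [comp_apply, iterate_finRotate hfn, iterate_succ_apply]

lemma exists_continuous_fin_dist_lt_of_eq {X : Type*} [MetricSpace X] [CompactSpace X]
    [TotallyDisconnectedSpace X] {ε : ℝ} (hε : 0 < ε) :
    ∃ (m : ℕ) (g : X → Fin m), Continuous g ∧ ∀ u w, g u = g w → dist u w < ε := by
  have hS : {p : X × X | dist p.1 p.2 < ε / 2} ∈ nhdsSet (diagonal X) :=
    (isOpen_lt continuous_dist continuous_const).mem_nhdsSet.mpr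
      fun p (hp : p.1 = p.2) => by simp [hp, hε]
  obtain ⟨m, g, c, hg, hgc⟩ :=
    (ContinuousMap.id X).exists_finite_approximation_of_mem_nhds_diagonal hS
  refine ⟨m, g, hg, fun u w huw => ?_⟩
  have hu : dist u (c (g u)) < ε / 2 := hgc u
  have hw : dist w (c (g u)) < ε / 2 := huw ▸ hgc w
  linarith [dist_triangle_right u w (c (g u))]

section Periodic

variable {X : Type*} [MetricSpace X] {f : X → X} {n : ℕ}

theorem totallyDisconnectedSpace_of_hasShadowing (hn : 0 < n) (hfn : f^[n] = id)
    (h : HasShadowing f) : TotallyDisconnectedSpace X := by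
  refine ⟨fun s _ hs x hx y hy => eq_of_forall_dist_le fun ε hε => ?_⟩
  obtain ⟨δ, hδ, hshadow⟩ := h (ε / 2) (half_pos hε)
  obtain ⟨p, hp, rfl, m, rfl⟩ :=
    exists_isPseudoOrbit_of_reflTransGen hn hfn hδ (hs.reflTransGen_dist_lt hδ hx hy)
  obtain ⟨z, hz⟩ := hshadow p hp
  have hz0 : dist z (p 0) < ε / 2 := hz 0
  have hzm : dist z (p (n * m)) < ε / 2 := by
    simpa only [iterate_mul, hfn, iterate_id, id] using hz (n * m)
  linarith [dist_triangle_left (p 0) (p (n * m)) z]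

theorem hasShadowing_of_totallyDisconnectedSpace [CompactSpace X] [TotallyDisconnectedSpace X]
    (hf : Continuous f) (hn : 0 < n) (hfn : f^[n] = id) : HasShadowing f := by
  intro ε hε
  obtain ⟨m, g, hg, hgε⟩ := exists_continuous_fin_dist_lt_of_eq (X := X) hε
  have hφ : Continuous fun x (i : Fin n) => g (f^[i] x) :=
    continuous_pi fun i => hg.comp (hf.iterate i)
  obtain ⟨δ, hδ, hφδ⟩ := hφ.exists_pos_forall_dist_lt_imp_eq
  refine ⟨δ, hδ, fun p hp => ⟨p 0, fun i => hgε _ _ ?_⟩⟩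
  exact congrFun (IsPseudoOrbit.apply_iterate_eq_of_semiconj hp
    (semiconj_iterate_finRotate hfn g) hφδ i) ⟨0, hn⟩

end Periodic

/-- A periodic system `(X, f)` (i.e. `f^n = id` for some `n > 0`) has shadowing if and only
if `X` is totally disconnected. -/
theorem periodic_shadowing_iff_totallyDisconnected
    {X : Type*} [MetricSpace X] [CompactSpace X]
    (f : X → X) (hf : Continuous f)
    (hper : ∃ n : ℕ, 0 < n ∧ f^[n] = id) :
    HasShadowing f ↔ TotallyDisconnectedSpace X := by
  obtain ⟨n, hn, hfn⟩ := hper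
  exact ⟨totallyDisconnectedSpace_of_hasShadowing hn hfn,
    fun _ => hasShadowing_of_totallyDisconnectedSpace hf hn hfn⟩
end

section
/- Let (X,f) be a recurrent dynamical system (X compact metric, f : X → X continuous, every point recurrent). Then for every δ > 0 there exists η > 0 such that for all x, y ∈ X with d(f(x), y) < η, there exists a δ-chain from y to x. -/
/-- A point `x` is recurrent for `f`. -/
def IsRecurrentPt {X : Type*} [MetricSpace X] (f : X → X) (x : X) : Prop :=
  ∀ ε > (0 : ℝ), ∃ n : ℕ, 0 < n ∧ dist (f^[n] x) x < ε

/-- There is a `δ`-chain for `f` from `a` to `b`: a finite sequence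
`x_0 = a, x_1, …, x_n = b` with `d(f(x_i), x_{i+1}) < δ` for all `i < n`. -/
def ExistsDeltaChain {X : Type*} [MetricSpace X] (f : X → X) (δ : ℝ) (a b : X) : Prop :=
  ∃ n : ℕ, 0 < n ∧ ∃ x : ℕ → X, x 0 = a ∧ x n = b ∧
    ∀ i < n, dist (f (x i)) (x (i + 1)) < δ

/-- In a recurrent system, for every `δ > 0` there is `η > 0` such that whenever
`d(f(x), y) < η`, there is a `δ`-chain from `y` to `x`. -/
theorem recurrent_reversing_chains
    {X : Type*} [MetricSpace X] [CompactSpace X]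
    (f : X → X) (hf : Continuous f)
    (hrec : ∀ x : X, IsRecurrentPt f x) :
    ∀ δ > (0 : ℝ), ∃ η > (0 : ℝ), ∀ x y : X,
      dist (f x) y < η → ExistsDeltaChain f δ y x := by
  intro δ hδ
  have huc : UniformContinuous f := CompactSpace.uniformContinuous_of_continuous hf
  rw [Metric.uniformContinuous_iff] at huc
  obtain ⟨η, hη, hmod⟩ := huc (δ/4) (by linarith)
  refine ⟨η, hη, fun x y hxy => ?_⟩
  obtain ⟨m, hm, hmd⟩ := hrec x (min (δ/4) η) (lt_min (by linarith) hη)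
  have hk : ∃ k, 2 ≤ k ∧ dist (f^[k] x) x < δ/2 := by
    rcases Nat.lt_or_ge m 2 with h2 | h2
    · interval_cases m
      refine ⟨2, le_rfl, ?_⟩
      have h1 : dist (f x) x < min (δ/4) η := by simpa using hmd
      have h2 : dist (f (f x)) (f x) < δ/4 :=
        hmod (lt_of_lt_of_le h1 (min_le_right _ _))
      have h3 : f^[2] x = f (f x) := by
        simp [Function.iterate_succ_apply']
      calc dist (f^[2] x) x ≤ dist (f^[2] x) (f x) + dist (f x) x := dist_triangle _ _ _
        _ < δ/4 + δ/4 := by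
            rw [h3]
            exact add_lt_add h2 (lt_of_lt_of_le h1 (min_le_left _ _))
        _ = δ/2 := by ring
    · exact ⟨m, h2, lt_of_lt_of_le hmd (le_trans (min_le_left _ _) (by linarith))⟩
  obtain ⟨k, hk2, hkd⟩ := hk
  set n := k - 1 with hn
  have hnk : n + 1 = k := by omega
  have hfy2 : dist (f y) (f^[2] x) < δ/4 := by
    have : dist y (f x) < η := by rwa [dist_comm] at hxy
    have := hmod this
    simpa [Function.iterate_succ_apply'] using this
  set z : ℕ → X := fun i => if i = 0 then y else if i < n then f^[i+1] x else x with hz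
  have hz0 : z 0 = y := by simp [hz]
  have hzmid : ∀ i, i ≠ 0 → i < n → z i = f^[i+1] x := by
    intro i h1 h2; simp [hz, h1, h2]
  have hzend : ∀ i, i ≠ 0 → n ≤ i → z i = x := by
    intro i h1 h2; simp [hz, h1, Nat.not_lt.mpr h2]
  refine ⟨n, by omega, z, hz0, hzend n (by omega) le_rfl, ?_⟩
  intro i hi
  rcases Nat.eq_zero_or_pos i with rfl | hipos
  · rw [hz0]
    rcases Nat.lt_or_ge 1 n with h1n | h1n
    · rw [hzmid 1 one_ne_zero h1n]
      calc dist (f y) (f^[1+1] x) < δ/4 := hfy2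
        _ < δ := by linarith
    · have hne : n = 1 := by omega
      rw [hzend 1 one_ne_zero h1n]
      have hk2' : k = 2 := by omega
      calc dist (f y) x ≤ dist (f y) (f^[2] x) + dist (f^[2] x) x := dist_triangle _ _ _
        _ < δ/4 + δ/2 := add_lt_add hfy2 (by rwa [hk2'] at hkd)
        _ < δ := by linarith
  · rw [hzmid i (by omega) hi]
    rcases Nat.lt_or_ge (i+1) n with h1n | h1n
    · rw [hzmid (i+1) (by omega) h1n]
      have : f (f^[i+1] x) = f^[i+1+1] x := (Function.iterate_succ_apply' f (i+1) x).symm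
      rw [this]
      simpa using hδ
    · rw [hzend (i+1) (by omega) h1n]
      have hfi : f (f^[i+1] x) = f^[k] x := by
        rw [← Function.iterate_succ_apply' f (i+1) x]
        congr 1
        omega
      rw [hfi]
      linarith
end

section
/- Let (X,f) be a recurrent dynamical system. Then the relation 'b ∈ Ch(a)' (b is chain accessible from a) is an equivalence relation on X (reflexive, symmetric, and transitive), and moreover for every p ∈ X the connected component of p in X is contained in Ch(p). -/
/-- `b` is chain accessible from `a`: for every `δ > 0` there is a `δ`-chain from `a` to `b`. -/
def ChainAccessible {X : Type*} [MetricSpace X] (f : X → X) (a b : X) : Prop :=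
  ∀ δ > (0 : ℝ), ExistsDeltaChain f δ a b

section Aux

variable {X : Type*} [MetricSpace X] (f : X → X)

lemma chain_concat {δ : ℝ} {a b c : X} (h1 : ExistsDeltaChain f δ a b)
    (h2 : ExistsDeltaChain f δ b c) : ExistsDeltaChain f δ a c := by
  obtain ⟨n, hn, x, hx0, hxn, hx⟩ := h1
  obtain ⟨m, hm, y, hy0, hym, hy⟩ := h2
  refine ⟨n + m, by omega, fun i => if i < n then x i else y (i - n), ?_, ?_, ?_⟩
  · simp [hn, hx0]
  · have h1' : ¬ (n + m < n) := by omega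
    have h2' : n + m - n = m := by omega
    simp [h1', h2', hym]
  · intro i hi
    beta_reduce
    by_cases h : i < n
    · rw [if_pos h]
      by_cases h' : i + 1 < n
      · rw [if_pos h']; exact hx i h
      · have hin : i + 1 = n := by omega
        rw [if_neg h']
        have : y (i + 1 - n) = x (i + 1) := by
          rw [hin]; simp [hy0, ← hxn]
        rw [this]; exact hx i h
    · have h' : ¬ (i + 1 < n) := by omega
      rw [if_neg h, if_neg h']
      have : i + 1 - n = (i - n) + 1 := by omega
      rw [this]
      exact hy (i - n) (by omega)

lemma chain_of_close (hrec : ∀ x : X, IsRecurrentPt f x) {δ : ℝ} (hδ : 0 < δ)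
    {a b : X} (hd : dist a b < δ) : ExistsDeltaChain f δ a b := by
  obtain ⟨n, hn, hlt⟩ := hrec a (δ - dist a b) (by linarith)
  refine ⟨n, hn, fun i => if i = n then b else f^[i] a, ?_, ?_, ?_⟩
  · have : (0 : ℕ) ≠ n := by omega
    simp [this]
  · simp
  · intro i hi
    beta_reduce
    have hne : i ≠ n := by omega
    rw [if_neg hne]
    by_cases h : i + 1 = n
    · rw [if_pos h, ← Function.iterate_succ_apply' f i a, show Nat.succ i = n by omega]
      calc dist (f^[n] a) b ≤ dist (f^[n] a) a + dist a b := dist_triangle _ _ _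
        _ < δ := by linarith
    · rw [if_neg h, ← Function.iterate_succ_apply' f i a]
      simpa using hδ

lemma chain_f_back (hrec : ∀ x : X, IsRecurrentPt f x) {δ : ℝ} (hδ : 0 < δ) (x : X) :
    ExistsDeltaChain f δ (f x) x := by
  obtain ⟨n, hn, hlt⟩ := hrec x δ hδ
  rcases Nat.lt_or_ge n 2 with h | h
  · have hn1 : n = 1 := by omega
    subst hn1
    exact chain_of_close f hrec hδ (by simpa using hlt)
  · refine ⟨n - 1, by omega, fun i => if i = n - 1 then x else f^[i + 1] x, ?_, ?_, ?_⟩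
    · have : (0 : ℕ) ≠ n - 1 := by omega
      simp [this]
    · simp
    · intro i hi
      beta_reduce
      have hne : i ≠ n - 1 := by omega
      rw [if_neg hne]
      by_cases h2 : i + 1 = n - 1
      · rw [if_pos h2, ← Function.iterate_succ_apply' f (i + 1) x,
          show Nat.succ (i + 1) = n by omega]
        exact hlt
      · rw [if_neg h2, ← Function.iterate_succ_apply' f (i + 1) x]
        simpa using hδ

lemma chain_refl (hrec : ∀ x : X, IsRecurrentPt f x) {δ : ℝ} (hδ : 0 < δ) (p : X) :
    ExistsDeltaChain f δ p p := by
  refine chain_concat f ⟨1, one_pos, fun i => if i = 0 then p else f p, by simp, by simp, ?_⟩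
    (chain_f_back f hrec hδ p)
  intro i hi
  have : i = 0 := by omega
  subst this
  simpa using hδ

end Aux

/-- In a recurrent system, chain accessibility is an equivalence relation, and the connected
component of every point `p` is contained in the chain accessible set of `p`. -/
theorem recurrent_chainAccessible_equivalence
    {X : Type*} [MetricSpace X] [CompactSpace X]
    (f : X → X) (hf : Continuous f)
    (hrec : ∀ x : X, IsRecurrentPt f x) :
    Equivalence (ChainAccessible f) ∧
      ∀ p : X, connectedComponent p ⊆ {b : X | ChainAccessible f p b} := by
  have hrefl : ∀ a : X, ChainAccessible f a a := fun a δ hδ => chain_refl f hrec hδ a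
  have hsymm : ∀ {a b : X}, ChainAccessible f a b → ChainAccessible f b a := by
    intro a b hab δ hδ
    obtain ⟨n, hn, x, hx0, hxn, hx⟩ := hab δ hδ
    have key : ∀ k, k ≤ n → ExistsDeltaChain f δ (x k) a := by
      intro k
      induction k with
      | zero => intro _; rw [hx0]; exact chain_refl f hrec hδ a
      | succ k ih =>
        intro hk
        have step : ExistsDeltaChain f δ (x (k + 1)) (x k) := by
          refine chain_concat f (chain_of_close f hrec hδ ?_) (chain_f_back f hrec hδ (x k))
          rw [dist_comm]
          exact hx k (by omega)
        exact chain_concat f step (ih (by omega))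
    rw [← hxn]
    exact key n le_rfl
  have htrans : ∀ {a b c : X}, ChainAccessible f a b → ChainAccessible f b c →
      ChainAccessible f a c := fun h1 h2 δ hδ => chain_concat f (h1 δ hδ) (h2 δ hδ)
  refine ⟨⟨hrefl, hsymm, htrans⟩, ?_⟩
  intro p b hb δ hδ
  set S : Set X := {b : X | ExistsDeltaChain f δ p b} with hS
  have sat : ∀ u ∈ S, ∀ v : X, dist u v < δ → v ∈ S := fun u hu v hd =>
    chain_concat f hu (chain_of_close f hrec hδ hd)
  have hopen : IsOpen S := by
    rw [Metric.isOpen_iff]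
    intro u hu
    refine ⟨δ, hδ, fun v hv => ?_⟩
    exact sat u hu v (by rw [dist_comm]; exact Metric.mem_ball.mp hv)
  have hclosed : IsClosed S := by
    rw [← isOpen_compl_iff, Metric.isOpen_iff]
    intro u hu
    refine ⟨δ, hδ, fun v hv hvS => ?_⟩
    exact hu (sat v hvS u (Metric.mem_ball.mp hv))
  have hpS : p ∈ S := chain_refl f hrec hδ p
  exact IsClopen.connectedComponent_subset ⟨hclosed, hopen⟩ hpS hb
end

section
/- Let (X,f) be a recurrent dynamical system with shadowing. Then X is the disjoint union of its minimal subsets: every point of X belongs to exactly one minimal set (a nonempty closed f-invariant set having no proper nonempty closed f-invariant subset), and no connected component of X meets more than one minimal set. -/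
/-- `M` is a minimal set for `f`: nonempty, closed, invariant, with no proper nonempty closed
invariant subset. -/
def IsMinimalSet {X : Type*} [TopologicalSpace X] (f : X → X) (M : Set X) : Prop :=
  M.Nonempty ∧ IsClosed M ∧ f '' M ⊆ M ∧
    ∀ A : Set X, A ⊆ M → A.Nonempty → IsClosed A → f '' A ⊆ A → A = M

set_option linter.unusedSectionVars false

namespace RSUM

open Set

variable {X : Type*} [MetricSpace X] [CompactSpace X] {f : X → X}

lemma iter_mem {M : Set X} (hM : f '' M ⊆ M) {y : X} (hy : y ∈ M) (n : ℕ) : f^[n] y ∈ M := by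
  induction n with
  | zero => simpa
  | succ n ih =>
    rw [Function.iterate_succ_apply']
    exact hM ⟨_, ih, rfl⟩

/-- Recurrence with arbitrarily large return times. -/
lemma ret (hf : Continuous f) (hrec : ∀ x : X, IsRecurrentPt f x) (z : X) :
    ∀ N : ℕ, ∀ ε > (0 : ℝ), ∃ m : ℕ, N ≤ m ∧ 0 < m ∧ dist (f^[m] z) z < ε := by
  intro N
  induction N with
  | zero =>
    intro ε hε
    obtain ⟨n, hn, hd⟩ := hrec z ε hε
    exact ⟨n, Nat.zero_le _, hn, hd⟩
  | succ N ih =>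
    intro ε hε
    obtain ⟨n, hn, hd⟩ := hrec z (ε / 2) (by linarith)
    have huc : UniformContinuous (f^[n]) :=
      CompactSpace.uniformContinuous_of_continuous (hf.iterate n)
    obtain ⟨η, hη, hco⟩ := Metric.uniformContinuous_iff.mp huc (ε / 2) (by linarith)
    obtain ⟨m, hm, hm0, hdm⟩ := ih η hη
    refine ⟨n + m, by omega, by omega, ?_⟩
    calc dist (f^[n + m] z) z ≤ dist (f^[n + m] z) (f^[n] z) + dist (f^[n] z) z :=
          dist_triangle _ _ _
      _ < ε / 2 + ε / 2 := by
          refine add_lt_add ?_ hd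
          rw [Function.iterate_add_apply]
          exact hco hdm
      _ = ε := by ring

/-- Points reachable from `p` by a finite `δ`-chain (possibly of length zero). -/
def ChainReach (f : X → X) (δ : ℝ) (p : X) : Set X :=
  {b | ∃ (k : ℕ) (u : ℕ → X), u 0 = p ∧ u k = b ∧ ∀ i < k, dist (f (u i)) (u (i + 1)) < δ}

lemma concat {δ : ℝ} {p q r : X} (h1 : q ∈ ChainReach f δ p) (h2 : r ∈ ChainReach f δ q) :
    r ∈ ChainReach f δ p := by
  obtain ⟨k, u, hu0, huk, hu⟩ := h1
  obtain ⟨m, v, hv0, hvm, hv⟩ := h2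
  refine ⟨k + m, fun i => if i < k then u i else v (i - k), ?_, ?_, ?_⟩
  · rcases Nat.eq_zero_or_pos k with rfl | hk
    · simp only [Nat.lt_irrefl, if_neg]
      simpa [hv0, ← huk] using hu0
    · simpa [hk] using hu0
  · have : ¬ (k + m < k) := by omega
    simp only [this, if_neg]
    simpa using hvm
  · intro i hi
    show dist (f (if i < k then u i else v (i - k)))
      (if i + 1 < k then u (i + 1) else v (i + 1 - k)) < δ
    rcases lt_or_ge i k with h | h
    · have hwi : (if i < k then u i else v (i - k)) = u i := if_pos h
      rcases lt_or_eq_of_le (Nat.succ_le_of_lt h) with h' | h'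
      · have hwi1 : (if i + 1 < k then u (i + 1) else v (i + 1 - k)) = u (i + 1) := if_pos h'
        rw [hwi, hwi1]; exact hu i h
      · have hwi1 : (if i + 1 < k then u (i + 1) else v (i + 1 - k)) = v 0 := by
          rw [if_neg (by omega)]; congr 1; omega
        rw [hwi, hwi1, hv0, ← huk, ← h']
        exact hu i h
    · have hwi : (if i < k then u i else v (i - k)) = v (i - k) := by
        rcases eq_or_lt_of_le h with rfl | h'
        · rw [if_neg (by omega)]
        · rw [if_neg (by omega)]
      have hwi1 : (if i + 1 < k then u (i + 1) else v (i + 1 - k)) = v (i - k + 1) := by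
        rw [if_neg (by omega)]; congr 1; omega
      rw [hwi, hwi1]
      exact hv (i - k) (by omega)

lemma tail_chain {δ : ℝ} {b' b : X} {n : ℕ} (hn : 0 < n) (hd : dist (f^[n] b') b < δ) :
    b ∈ ChainReach f δ b' := by
  have hδ : (0 : ℝ) < δ := lt_of_le_of_lt dist_nonneg hd
  refine ⟨n, fun i => if i < n then f^[i] b' else b, by simp [hn], by simp, ?_⟩
  intro i hi
  show dist (f (if i < n then f^[i] b' else b)) (if i + 1 < n then f^[i + 1] b' else b) < δ
  have hwi : (if i < n then f^[i] b' else b) = f^[i] b' := if_pos hi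
  rcases lt_or_eq_of_le (Nat.succ_le_of_lt hi) with h' | h'
  · have hwi1 : (if i + 1 < n then f^[i + 1] b' else b) = f^[i + 1] b' := if_pos h'
    rw [hwi, hwi1, ← Function.iterate_succ_apply' f i b', dist_self]
    exact hδ
  · have hwi1 : (if i + 1 < n then f^[i + 1] b' else b) = b := by rw [if_neg (by omega)]
    rw [hwi, hwi1, ← Function.iterate_succ_apply' f i b', h']
    exact hd

lemma near_chain (hrec : ∀ x : X, IsRecurrentPt f x) {δ : ℝ} {b' b : X} (hd : dist b' b < δ) :
    b ∈ ChainReach f δ b' := by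
  obtain ⟨n, hn, hdn⟩ := hrec b' (δ - dist b' b) (by linarith [dist_nonneg (x := b') (y := b)])
  refine tail_chain hn ?_
  calc dist (f^[n] b') b ≤ dist (f^[n] b') b' + dist b' b := dist_triangle _ _ _
    _ < (δ - dist b' b) + dist b' b := by linarith
    _ = δ := by ring

lemma self_chain (hrec : ∀ x : X, IsRecurrentPt f x) {δ : ℝ} (hδ : 0 < δ) (p : X) :
    p ∈ ChainReach f δ p :=
  near_chain hrec (by simpa using hδ)

lemma isClopen_chainReach (hrec : ∀ x : X, IsRecurrentPt f x) {δ : ℝ} (hδ : 0 < δ) (p : X) :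
    IsClopen (ChainReach f δ p) := by
  constructor
  · refine isClosed_of_closure_subset ?_
    intro b hb
    obtain ⟨b', hb', hdb⟩ := Metric.mem_closure_iff.mp hb δ hδ
    exact concat hb' (near_chain hrec (by rwa [dist_comm]))
  · rw [Metric.isOpen_iff]
    intro b hb
    refine ⟨δ, hδ, fun c hc => concat hb (near_chain hrec ?_)⟩
    rw [dist_comm]
    exact hc

lemma minimal_exists (C : Set X) (hCne : C.Nonempty) (hCcl : IsClosed C)
    (hCinv : f '' C ⊆ C) : ∃ M, M ⊆ C ∧ IsMinimalSet f M := by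
  set S : Set (Set X) := {A | A ⊆ C ∧ A.Nonempty ∧ IsClosed A ∧ f '' A ⊆ A} with hS
  have H : ∀ c ⊆ S, IsChain (· ⊆ ·) c → c.Nonempty → ∃ lb ∈ S, ∀ s ∈ c, lb ⊆ s := by
    intro c hcS hchain hcne
    haveI : Nonempty c := hcne.to_subtype
    refine ⟨⋂₀ c, ⟨?_, ?_, ?_, ?_⟩, fun s hs => sInter_subset_of_mem hs⟩
    · obtain ⟨A, hA⟩ := hcne
      exact (sInter_subset_of_mem hA).trans (hcS hA).1
    · refine IsCompact.nonempty_sInter_of_directed_nonempty_isCompact_isClosed ?_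
        (fun U hU => (hcS hU).2.1) (fun U hU => ((hcS hU).2.2.1).isCompact)
        (fun U hU => (hcS hU).2.2.1)
      intro a ha b hb
      rcases eq_or_ne a b with rfl | hne
      · exact ⟨a, ha, subset_rfl, subset_rfl⟩
      · rcases hchain ha hb hne with h | h
        · exact ⟨a, ha, subset_rfl, h⟩
        · exact ⟨b, hb, h, subset_rfl⟩
    · exact isClosed_sInter fun U hU => (hcS hU).2.2.1
    · rintro _ ⟨a, ha, rfl⟩
      rw [mem_sInter]
      intro A hA
      exact (hcS hA).2.2.2 ⟨a, (mem_sInter.mp ha) A hA, rfl⟩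
  obtain ⟨M, hMC, hMmin⟩ := zorn_superset_nonempty S H C ⟨subset_rfl, hCne, hCcl, hCinv⟩
  refine ⟨M, hMC, hMmin.1.2.1, hMmin.1.2.2.1, hMmin.1.2.2.2, ?_⟩
  intro A hAM hAne hAcl hAinv
  exact hAM.antisymm (hMmin.2 ⟨hAM.trans hMmin.1.1, hAne, hAcl, hAinv⟩ hAM)

/-- Core lemma: if `q` lies in a minimal set `M` and is chain-reachable from `p`
for every `δ`, then `p ∈ M`. -/
lemma mem_min_of_chain (hf : Continuous f) (hrec : ∀ x : X, IsRecurrentPt f x)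
    (hsh : HasShadowing f) {p q : X} {M : Set X} (hM : IsMinimalSet f M) (hq : q ∈ M)
    (hch : ∀ δ > (0 : ℝ), q ∈ ChainReach f δ p) : p ∈ M := by
  rw [← hM.2.1.closure_eq, Metric.mem_closure_iff]
  intro ε hε
  obtain ⟨δ, hδ, hsd⟩ := hsh (ε / 3) (by linarith)
  obtain ⟨k, u, hu0, huk, hu⟩ := hch δ hδ
  set w : ℕ → X := fun i => if i ≤ k then u i else f^[i - k] q with hw
  have hwtail : ∀ i, k ≤ i → w i = f^[i - k] q := by
    intro i hi
    rcases eq_or_lt_of_le hi with rfl | h'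
    · simp [hw, huk]
    · simp [hw, if_neg (by omega : ¬ i ≤ k)]
  have hpo : ∀ i, dist (f (w i)) (w (i + 1)) < δ := by
    intro i
    rcases lt_or_ge i k with h | h
    · have hwi : w i = u i := if_pos h.le
      have hwi1 : w (i + 1) = u (i + 1) := if_pos (Nat.succ_le_of_lt h)
      rw [hwi, hwi1]; exact hu i h
    · rw [hwtail i h, hwtail (i + 1) (by omega), ← Function.iterate_succ_apply' f (i - k) q]
      have : i + 1 - k = i - k + 1 := by omega
      rw [this, dist_self]
      exact hδ
  obtain ⟨z, hz⟩ := hsd w hpo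
  have hzp : dist z p < ε / 3 := by
    have := hz 0
    rw [Function.iterate_zero_apply] at this
    have hw0 : w 0 = p := by
      have : (0 : ℕ) ≤ k := Nat.zero_le _
      simp [hw, this, hu0]
    rwa [hw0] at this
  obtain ⟨m, hmk, hm0, hdm⟩ := ret hf hrec z k (ε / 3) (by linarith)
  refine ⟨w m, ?_, ?_⟩
  · rw [hwtail m hmk]
    exact iter_mem hM.2.2.1 hq _
  · calc dist p (w m) ≤ dist p z + dist z (w m) := dist_triangle _ _ _
      _ ≤ dist p z + (dist z (f^[m] z) + dist (f^[m] z) (w m)) := by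
          gcongr
          exact dist_triangle _ _ _
      _ < ε / 3 + (ε / 3 + ε / 3) := by
          refine add_lt_add (by rwa [dist_comm]) (add_lt_add (by rwa [dist_comm]) (hz m))
      _ = ε := by ring

lemma exists_minimal_mem (hf : Continuous f) (hrec : ∀ x : X, IsRecurrentPt f x)
    (hsh : HasShadowing f) (x : X) : ∃ M : Set X, IsMinimalSet f M ∧ x ∈ M := by
  set C : Set X := closure (Set.range fun n => f^[n] x) with hC
  have hCne : C.Nonempty := ⟨x, subset_closure ⟨0, rfl⟩⟩
  have hCinv : f '' C ⊆ C := by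
    refine (image_closure_subset_closure_image hf).trans (closure_mono ?_)
    rintro _ ⟨_, ⟨n, rfl⟩, rfl⟩
    exact ⟨n + 1, Function.iterate_succ_apply' f n x⟩
  obtain ⟨M, hMC, hM⟩ := minimal_exists C hCne isClosed_closure hCinv
  obtain ⟨y0, hy0⟩ := hM.1
  refine ⟨M, hM, mem_min_of_chain hf hrec hsh hM hy0 ?_⟩
  intro δ hδ
  obtain ⟨y', hy', hdy⟩ := Metric.mem_closure_iff.mp (hMC hy0) δ hδ
  obtain ⟨n, rfl⟩ := hy'
  have h1 : f^[n] x ∈ ChainReach f δ x := by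
    rcases Nat.eq_zero_or_pos n with rfl | hn
    · exact self_chain hrec hδ x
    · exact tail_chain hn (by rw [dist_self]; exact hδ)
  exact concat h1 (near_chain hrec (by rw [dist_comm]; exact hdy))

lemma minimal_eq {M₁ M₂ : Set X} (h1 : IsMinimalSet f M₁) (h2 : IsMinimalSet f M₂)
    (hne : (M₁ ∩ M₂).Nonempty) : M₁ = M₂ := by
  have hinv : f '' (M₁ ∩ M₂) ⊆ M₁ ∩ M₂ := by
    rintro _ ⟨a, ⟨ha1, ha2⟩, rfl⟩
    exact ⟨h1.2.2.1 ⟨a, ha1, rfl⟩, h2.2.2.1 ⟨a, ha2, rfl⟩⟩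
  have hcl : IsClosed (M₁ ∩ M₂) := h1.2.1.inter h2.2.1
  have e1 := h1.2.2.2 _ inter_subset_left hne hcl hinv
  have e2 := h2.2.2.2 _ inter_subset_right hne hcl hinv
  rw [← e2]
  exact e1.symm

end RSUM

/-- In a recurrent system with shadowing, every point belongs to exactly one minimal set, and
no connected component of `X` meets more than one minimal set. -/
theorem recurrent_shadowing_union_of_minimals
    {X : Type*} [MetricSpace X] [CompactSpace X]
    (f : X → X) (hf : Continuous f)
    (hrec : ∀ x : X, IsRecurrentPt f x)
    (hsh : HasShadowing f) :
    (∀ x : X, ∃! M : Set X, IsMinimalSet f M ∧ x ∈ M) ∧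
      ∀ x : X, ∀ M₁ M₂ : Set X, IsMinimalSet f M₁ → IsMinimalSet f M₂ →
        (connectedComponent x ∩ M₁).Nonempty → (connectedComponent x ∩ M₂).Nonempty →
          M₁ = M₂ := by
  constructor
  · intro x
    obtain ⟨M, hM, hxM⟩ := RSUM.exists_minimal_mem hf hrec hsh x
    exact ⟨M, ⟨hM, hxM⟩, fun M' hM' => RSUM.minimal_eq hM'.1 hM ⟨x, hM'.2, hxM⟩⟩
  · rintro x M₁ M₂ h1 h2 ⟨p, hpK, hp1⟩ ⟨q, hqK, hq2⟩
    have hp2 : p ∈ M₂ := by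
      refine RSUM.mem_min_of_chain hf hrec hsh h2 hq2 ?_
      intro δ hδ
      have hclopen := RSUM.isClopen_chainReach hrec hδ p
      have hsub : connectedComponent p ⊆ RSUM.ChainReach f δ p :=
        hclopen.connectedComponent_subset (RSUM.self_chain hrec hδ p)
      exact hsub (isPreconnected_connectedComponent.subset_connectedComponent hpK hqK)
    exact RSUM.minimal_eq h1 h2 ⟨p, hp1, hp2⟩
end

section
/- Let X be a connected compact metric space and let (X,f) be a dynamical system with shadowing. Then (X,f) is minimal (X has no proper nonempty closed f-invariant subset) if and only if (X,f) is recurrent. -/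
section Aux

variable {X : Type*} [MetricSpace X]

/-- A recurrent point returns close to itself at arbitrarily large times. -/
lemma IsRecurrentPt.returns [CompactSpace X] {f : X → X} (hf : Continuous f) {x : X}
    (hx : IsRecurrentPt f x) (N : ℕ) :
    ∀ ε > (0 : ℝ), ∃ n : ℕ, N ≤ n ∧ 0 < n ∧ dist (f^[n] x) x < ε := by
  induction N with
  | zero =>
    intro ε hε
    obtain ⟨n, hn, hd⟩ := hx ε hε
    exact ⟨n, Nat.zero_le n, hn, hd⟩
  | succ N ih =>
    intro ε hε
    obtain ⟨n₁, hn₁, hd₁⟩ := hx (ε / 2) (by linarith)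
    have hu : UniformContinuous (f^[n₁]) :=
      CompactSpace.uniformContinuous_of_continuous (hf.iterate n₁)
    obtain ⟨η, hη, hcont⟩ := Metric.uniformContinuous_iff.mp hu (ε / 2) (by linarith)
    obtain ⟨n₂, hn₂N, hn₂pos, hd₂⟩ := ih η hη
    refine ⟨n₁ + n₂, by omega, by omega, ?_⟩
    have h1 : dist (f^[n₁ + n₂] x) (f^[n₁] x) < ε / 2 := by
      rw [Function.iterate_add_apply]
      exact hcont hd₂
    calc dist (f^[n₁ + n₂] x) x
        ≤ dist (f^[n₁ + n₂] x) (f^[n₁] x) + dist (f^[n₁] x) x := dist_triangle _ _ _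
      _ < ε / 2 + ε / 2 := add_lt_add h1 hd₁
      _ = ε := by ring

/-- A finite `δ`-pseudo-chain from `a` to `b` of positive length. -/
def IsChainTo (f : X → X) (δ : ℝ) (a b : X) : Prop :=
  ∃ n : ℕ, 0 < n ∧ ∃ c : ℕ → X, c 0 = a ∧ c n = b ∧ ∀ i < n, dist (f (c i)) (c (i + 1)) < δ

lemma IsChainTo.snoc {f : X → X} {δ : ℝ} {a b b' : X} (h : IsChainTo f δ a b)
    (hb : dist (f b) b' < δ) : IsChainTo f δ a b' := by
  obtain ⟨n, hn, c, h0, hnb, hl⟩ := h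
  refine ⟨n + 1, by omega, fun i => if i = n + 1 then b' else c i, ?_, ?_, ?_⟩
  · have h0' : (0 : ℕ) ≠ n + 1 := by omega
    simp [h0', h0]
  · simp
  · intro i hi
    rcases Nat.lt_or_ge i n with h' | h'
    · have e1 : i ≠ n + 1 := by omega
      have e2 : i + 1 ≠ n + 1 := by omega
      simp only [if_neg e1, if_neg e2]
      exact hl i h'
    · have hi' : i = n := by omega
      subst hi'
      have e1 : i ≠ i + 1 := by omega
      simp only [if_neg e1, if_pos rfl]
      rw [hnb]
      exact hb

/-- The set of points chain-reachable from `a` is everything, if all points are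
recurrent and the space is connected and compact. -/
lemma chain_reach_all [CompactSpace X] [ConnectedSpace X] {f : X → X} (hf : Continuous f)
    (hrec : ∀ x : X, IsRecurrentPt f x) {δ : ℝ} (hδ : 0 < δ) (a : X) :
    ∀ b : X, IsChainTo f δ a b := by
  set R : Set X := {b | IsChainTo f δ a b} with hR
  have hopen : IsOpen R := by
    rw [Metric.isOpen_iff]
    rintro b ⟨n, hn, c, h0, hnb, hl⟩
    have hn1 : n - 1 + 1 = n := by omega
    have hlast : dist (f (c (n - 1))) b < δ := by
      have := hl (n - 1) (by omega)
      rwa [hn1, hnb] at this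
    refine ⟨δ - dist (f (c (n - 1))) b, by linarith, ?_⟩
    intro b' hb'
    rw [Metric.mem_ball] at hb'
    refine ⟨n, hn, fun i => if i = n then b' else c i, ?_, ?_, ?_⟩
    · have h0' : (0 : ℕ) ≠ n := by omega
      simp [h0', h0]
    · simp
    · intro i hi
      have e1 : i ≠ n := by omega
      rcases Nat.lt_or_ge (i + 1) n with h' | h'
      · have e2 : i + 1 ≠ n := by omega
        simp only [if_neg e1, if_neg e2]
        exact hl i hi
      · have e2 : i + 1 = n := by omega
        have e3 : i = n - 1 := by omega
        simp only [if_neg e1, if_pos e2]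
        subst e3
        have hb'' : dist b b' < δ - dist (f (c (n - 1))) b := by rwa [dist_comm] at hb'
        calc dist (f (c (n - 1))) b' ≤ dist (f (c (n - 1))) b + dist b b' := dist_triangle _ _ _
          _ < δ := by linarith
  have hclosed : IsClosed R := by
    rw [← closure_subset_iff_isClosed]
    intro y hy
    obtain ⟨η, hη, hcont⟩ := Metric.continuous_iff.mp hf y δ hδ
    obtain ⟨y', hy', hdy'⟩ := Metric.mem_closure_iff.mp hy η hη
    have hchain1 : IsChainTo f δ a (f y) := by
      refine hy'.snoc ?_
      have : dist y' y < η := by rwa [dist_comm] at hdy'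
      exact hcont y' this
    have hchaink : ∀ k : ℕ, IsChainTo f δ a (f^[k + 1] y) := by
      intro k
      induction k with
      | zero => simpa using hchain1
      | succ k ih =>
        refine ih.snoc ?_
        rw [← Function.iterate_succ_apply' f (k + 1) y]
        simp [hδ]
    obtain ⟨m, hm2, hmpos, hdm⟩ := (hrec y).returns hf 2 δ hδ
    have hm1 : m - 2 + 1 = m - 1 := by omega
    have hchain := hchaink (m - 2)
    rw [hm1] at hchain
    refine hchain.snoc ?_
    have : f (f^[m - 1] y) = f^[m] y := by
      rw [← Function.iterate_succ_apply' f (m - 1) y]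
      congr 1
      omega
    rw [this]
    exact hdm
  have hne : R.Nonempty := by
    refine ⟨f a, 1, one_pos, fun i => if i = 0 then a else f a, rfl, rfl, ?_⟩
    intro i hi
    have : i = 0 := by omega
    subst this
    simp [hδ]
  have : R = Set.univ := IsClopen.eq_univ ⟨hclosed, hopen⟩ hne
  intro b
  have : b ∈ R := by rw [this]; exact Set.mem_univ b
  exact this

lemma iterate_mem_invariant {f : X → X} {A : Set X} (hAinv : f '' A ⊆ A) {y : X}
    (hy : y ∈ A) (k : ℕ) : f^[k] y ∈ A := by
  induction k with
  | zero => simpa using hy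
  | succ k ih =>
    rw [Function.iterate_succ_apply']
    exact hAinv ⟨f^[k] y, ih, rfl⟩

end Aux

/-- For a connected compact metric space `X` and a system `(X, f)` with shadowing,
`(X, f)` is minimal if and only if it is recurrent. -/
theorem connected_shadowing_minimal_iff_recurrent
    {X : Type*} [MetricSpace X] [CompactSpace X] [ConnectedSpace X]
    (f : X → X) (hf : Continuous f) (hsh : HasShadowing f) :
    (∀ A : Set X, A.Nonempty → IsClosed A → f '' A ⊆ A → A = Set.univ) ↔
      ∀ x : X, IsRecurrentPt f x := by
  constructor
  · -- minimal → recurrent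
    intro hmin x ε hε
    set S : Set X := Set.range (fun n : ℕ => f^[n + 1] x) with hS
    have hSsub : f '' S ⊆ S := by
      rintro _ ⟨_, ⟨n, rfl⟩, rfl⟩
      refine ⟨n + 1, ?_⟩
      show f^[n + 1 + 1] x = f (f^[n + 1] x)
      rw [Function.iterate_succ_apply']
    have hinv : f '' closure S ⊆ closure S :=
      (image_closure_subset_closure_image hf).trans (closure_mono hSsub)
    have hne : (closure S).Nonempty := ⟨f x, subset_closure ⟨0, by simp⟩⟩
    have huniv : closure S = Set.univ := hmin _ hne isClosed_closure hinv
    have hx : x ∈ closure S := huniv ▸ Set.mem_univ x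
    obtain ⟨b, hbS, hdb⟩ := Metric.mem_closure_iff.mp hx ε hε
    obtain ⟨n, rfl⟩ := hbS
    exact ⟨n + 1, by omega, by rwa [dist_comm]⟩
  · -- recurrent → minimal
    intro hrec A hAne hAcl hAinv
    obtain ⟨y, hy⟩ := hAne
    rw [Set.eq_univ_iff_forall]
    intro a
    rw [← hAcl.closure_eq]
    rw [Metric.mem_closure_iff]
    intro ε hε
    obtain ⟨δ, hδ, hshadow⟩ := hsh (ε / 4) (by linarith)
    -- a chain from a to y
    obtain ⟨n, hn, c, h0, hnc, hl⟩ := chain_reach_all hf hrec hδ a y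
    -- the pseudo-orbit: follow the chain, then the true orbit of y
    set x : ℕ → X := fun i => if i < n then c i else f^[i - n] y with hxdef
    have hxn : ∀ k : ℕ, x (n + k) = f^[k] y := by
      intro k
      have h1 : ¬ (n + k < n) := by omega
      have h2 : n + k - n = k := by omega
      simp only [hxdef, if_neg h1, h2]
    have hpseudo : ∀ i : ℕ, dist (f (x i)) (x (i + 1)) < δ := by
      intro i
      rcases Nat.lt_or_ge i n with h' | h'
      · rcases Nat.lt_or_ge (i + 1) n with h'' | h''
        · simp only [hxdef, if_pos h', if_pos h'']
          exact hl i h'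
        · have e : i + 1 = n := by omega
          have e2 : i + 1 - n = 0 := by omega
          simp only [hxdef, if_pos h', if_neg (by omega : ¬ i + 1 < n), e2]
          simp only [Function.iterate_zero_apply]
          have h3 := hl i h'
          rw [e, hnc] at h3
          exact h3
      · have h1 : ¬ (i < n) := by omega
        have h2 : ¬ (i + 1 < n) := by omega
        have h3 : i + 1 - n = (i - n) + 1 := by omega
        simp only [hxdef, if_neg h1, if_neg h2, h3]
        rw [Function.iterate_succ_apply']
        simp [hδ]
    obtain ⟨z, hz⟩ := hshadow x hpseudo
    have hz0 : dist z a < ε / 4 := by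
      simpa [hxdef, hn, h0] using hz 0
    obtain ⟨m, hmn, hmpos, hdm⟩ := (hrec z).returns hf n (ε / 4) (by linarith)
    have hzm : dist (f^[m] z) (f^[m - n] y) < ε / 4 := by
      have := hz m
      have e : m = n + (m - n) := by omega
      rwa [e, hxn (m - n), ← e] at this
    refine ⟨f^[m - n] y, iterate_mem_invariant hAinv hy (m - n), ?_⟩
    calc dist a (f^[m - n] y)
        ≤ dist a z + dist z (f^[m] z) + dist (f^[m] z) (f^[m - n] y) :=
          dist_triangle4 a z (f^[m] z) (f^[m - n] y)
      _ < ε / 4 + ε / 4 + ε / 4 := by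
          rw [dist_comm a z, dist_comm z (f^[m] z)]
          exact add_lt_add (add_lt_add hz0 hdm) hzm
      _ < ε := by linarith
end

section
/- Let (X,f) be a uniformly rigid dynamical system. Then (X,f) has shadowing if and only if X is totally disconnected. -/
/-- The system `(X, f)` is uniformly rigid: for every `ε > 0` there is `n > 0` with
`d(f^n(x), x) < ε` for all `x`. -/
def UniformlyRigid {X : Type*} [MetricSpace X] (f : X → X) : Prop :=
  ∀ ε > (0 : ℝ), ∃ n : ℕ, 0 < n ∧ ∀ x : X, dist (f^[n] x) x < ε

open Function Set Metric

section Aux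

variable {X : Type*} [MetricSpace X]

/-- Rigid times can be taken arbitrarily large. -/
lemma urigid_exists_large (f : X → X) (hrig : UniformlyRigid f) :
    ∀ (M : ℕ) (η : ℝ), 0 < η → ∃ t : ℕ, M ≤ t ∧ 0 < t ∧ ∀ x : X, dist (f^[t] x) x < η := by
  intro M
  induction M with
  | zero =>
    intro η hη
    obtain ⟨n, hn0, hn⟩ := hrig η hη
    exact ⟨n, Nat.zero_le _, hn0, hn⟩
  | succ M ih =>
    intro η hη
    obtain ⟨t, hMt, ht0, ht⟩ := ih (η / 2) (by linarith)
    obtain ⟨s, hs0, hs⟩ := hrig (η / 2) (by linarith)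
    refine ⟨t + s, by omega, by omega, fun x => ?_⟩
    have h1 : f^[t + s] x = f^[t] (f^[s] x) := Function.iterate_add_apply f t s x
    calc dist (f^[t + s] x) x ≤ dist (f^[t + s] x) (f^[s] x) + dist (f^[s] x) x :=
          dist_triangle _ _ _
      _ < η / 2 + η / 2 := by
          rw [h1]
          exact add_lt_add (ht _) (hs x)
      _ = η := by ring

/-- Displacement of multiples of a rigid time. -/
lemma urigid_multiple (f : X → X) {t : ℕ} {η : ℝ}
    (ht : ∀ x : X, dist (f^[t] x) x < η) :
    ∀ (k : ℕ) (x : X), dist (f^[k * t] x) x ≤ k * η := by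
  intro k
  induction k with
  | zero => intro x; simp
  | succ k ih =>
    intro x
    have h1 : f^[(k + 1) * t] x = f^[k * t] (f^[t] x) := by
      rw [add_mul, one_mul, Function.iterate_add_apply]
    calc dist (f^[(k + 1) * t] x) x
        ≤ dist (f^[(k + 1) * t] x) (f^[t] x) + dist (f^[t] x) x := dist_triangle _ _ _
      _ ≤ k * η + η := by
          rw [h1]
          exact add_le_add (ih _) (ht x).le
      _ = (k + 1 : ℕ) * η := by push_cast; ring

/-- In a preconnected set, any two points are joined by `δ`-chains of arbitrary
(sufficiently large) length. -/
lemma preconnected_chain {S : Set X} (hS : IsPreconnected S) {a b : X}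
    (ha : a ∈ S) (hb : b ∈ S) {δ : ℝ} (hδ : 0 < δ) :
    ∃ m : ℕ, ∃ c : ℕ → X, c 0 = a ∧ (∀ l, m ≤ l → c l = b) ∧
      ∀ l, dist (c (l + 1)) (c l) < δ := by
  set U : Set X := {y | ∃ m : ℕ, ∃ c : ℕ → X, c 0 = a ∧ c m = y ∧
      ∀ l, l < m → dist (c (l + 1)) (c l) < δ} with hUdef
  have haU : a ∈ U := ⟨0, fun _ => a, rfl, rfl, fun l hl => absurd hl (Nat.not_lt_zero l)⟩
  have hext : ∀ y ∈ U, ∀ v : X, dist v y < δ → v ∈ U := by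
    rintro y ⟨m, c, hc0, hcm, hstep⟩ v hv
    refine ⟨m + 1, fun l => if l ≤ m then c l else v, by simp [hc0], by simp, ?_⟩
    intro l hl
    rcases Nat.lt_or_ge l m with h | h
    · have h1 : l + 1 ≤ m := h
      have h2 : l ≤ m := h.le
      simp only [if_pos h1, if_pos h2]
      exact hstep l h
    · have hlm : l = m := by omega
      subst hlm
      have h1 : ¬ (l + 1 ≤ l) := by omega
      simp only [if_pos (le_refl l), if_neg h1]
      rwa [hcm]
  have hopenU : IsOpen U := by
    rw [Metric.isOpen_iff]
    intro y hy
    exact ⟨δ, hδ, fun v hv => hext y hy v (mem_ball.1 hv)⟩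
  have hopenUc : IsOpen Uᶜ := by
    rw [Metric.isOpen_iff]
    intro y hy
    refine ⟨δ, hδ, fun v hv hvU => hy ?_⟩
    exact hext v hvU y (by rw [dist_comm]; exact mem_ball.1 hv)
  have hbU : b ∈ U := by
    by_contra hbU
    obtain ⟨p, -, hp1, hp2⟩ := hS U Uᶜ hopenU hopenUc
      (fun s _ => by by_cases h : s ∈ U; exacts [Or.inl h, Or.inr h])
      ⟨a, ha, haU⟩ ⟨b, hb, hbU⟩
    exact hp2 hp1
  obtain ⟨m, c, hc0, hcm, hstep⟩ := hbU
  refine ⟨m, fun l => if l < m then c l else b, ?_, ?_, ?_⟩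
  · by_cases h : 0 < m
    · simp [h, hc0]
    · have hm0 : m = 0 := by omega
      subst hm0
      simp only [if_neg (lt_irrefl 0)]
      rw [← hcm, hc0]
  · intro l hl
    simp [Nat.not_lt.2 hl]
  · intro l
    rcases Nat.lt_or_ge (l + 1) m with h | h
    · have h2 : l < m := by omega
      simp only [if_pos h, if_pos h2]
      exact hstep l h2
    · rcases Nat.lt_or_ge l m with h2 | h2
      · have he : l + 1 = m := by omega
        have h3 : ¬ (l + 1 < m) := by omega
        simp only [if_neg h3, if_pos h2]
        rw [← hcm, ← he]
        exact hstep l h2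
      · have h3 : ¬ (l + 1 < m) := by omega
        have h4 : ¬ (l < m) := by omega
        simp only [if_neg h3, if_neg h4, dist_self]
        exact hδ

end Aux

lemma shadowing_implies_td {X : Type*} [MetricSpace X] [CompactSpace X]
    (f : X → X) (hf : Continuous f) (hrig : UniformlyRigid f)
    (hsh : HasShadowing f) : TotallyDisconnectedSpace X := by
  refine ⟨fun S _ hS => fun a ha b hb => ?_⟩
  have key : ∀ ε : ℝ, 0 < ε → dist a b < 3 * ε := by
    intro ε hε
    obtain ⟨δ, hδ, hshε⟩ := hsh ε hε
    obtain ⟨n, hn0, hn⟩ := hrig (δ / 2) (by linarith)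
    obtain ⟨m, c, hc0, hcb, hchain⟩ := preconnected_chain hS ha hb (show (0:ℝ) < δ / 2 by linarith)
    have hηpos : (0 : ℝ) < ε / (2 * n) := by positivity
    obtain ⟨t, hmt, ht0, ht⟩ := urigid_exists_large f hrig m (ε / (2 * n)) hηpos
    -- the pseudo-orbit
    set x : ℕ → X := fun i => f^[i % n] (c (i / n)) with hxdef
    have hpo : ∀ i : ℕ, dist (f (x i)) (x (i + 1)) < δ := by
      intro i
      have hrm : i % n < n := Nat.mod_lt _ hn0
      have hi : n * (i / n) + i % n = i := Nat.div_add_mod i n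
      by_cases hcase : i % n + 1 < n
      · have h1 : (i + 1) % n = i % n + 1 := by
          conv_lhs => rw [← hi]
          rw [add_assoc, Nat.mul_add_mod, Nat.mod_eq_of_lt hcase]
        have h2 : (i + 1) / n = i / n := by
          conv_lhs => rw [← hi]
          rw [add_assoc, Nat.mul_add_div hn0, Nat.div_eq_of_lt hcase, Nat.add_zero]
        show dist (f (f^[i % n] (c (i / n)))) (f^[(i+1) % n] (c ((i+1) / n))) < δ
        rw [h1, h2, Function.iterate_succ_apply' f (i % n), dist_self]
        exact hδ
      · have he : i % n + 1 = n := by omega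
        have hi1 : i + 1 = n * (i / n) + n := by
          conv_lhs => rw [← hi]
          rw [add_assoc, he]
        have h1 : (i + 1) % n = 0 := by
          rw [hi1, Nat.mul_add_mod, Nat.mod_self]
        have h2 : (i + 1) / n = i / n + 1 := by
          rw [hi1, Nat.mul_add_div hn0, Nat.div_self hn0]
        show dist (f (f^[i % n] (c (i / n)))) (f^[(i+1) % n] (c ((i+1) / n))) < δ
        rw [h1, h2, ← Function.iterate_succ_apply' f (i % n), Nat.succ_eq_add_one, he]
        simp only [Function.iterate_zero_apply]
        calc dist (f^[n] (c (i / n))) (c (i / n + 1))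
            ≤ dist (f^[n] (c (i / n))) (c (i / n)) + dist (c (i / n)) (c (i / n + 1)) :=
              dist_triangle _ _ _
          _ < δ / 2 + δ / 2 := by
              refine add_lt_add (hn _) ?_
              rw [dist_comm]; exact hchain _
          _ = δ := by ring
    obtain ⟨z, hz⟩ := hshε x hpo
    have hx0 : x 0 = a := by
      simp only [hxdef, Nat.zero_mod, Nat.zero_div, Function.iterate_zero_apply, hc0]
    have hxt : x (n * t) = b := by
      have h1 : (n * t) % n = 0 := Nat.mul_mod_right _ _
      have h2 : (n * t) / n = t := Nat.mul_div_cancel_left _ hn0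
      simp only [hxdef, h1, h2, Function.iterate_zero_apply]
      exact hcb t hmt
    have hz0 : dist z a < ε := by
      have := hz 0
      rwa [Function.iterate_zero_apply, hx0] at this
    have hzt : dist (f^[n * t] z) b < ε := by
      have := hz (n * t)
      rwa [hxt] at this
    have hmid : dist (f^[n * t] z) z < ε := by
      have h1 := urigid_multiple f ht n z
      have h2 : (n : ℝ) * (ε / (2 * n)) = ε / 2 := by
        field_simp
      calc dist (f^[n * t] z) z ≤ n * (ε / (2 * n)) := h1
        _ = ε / 2 := h2
        _ < ε := by linarith
    calc dist a b ≤ dist a z + dist z (f^[n * t] z) + dist (f^[n * t] z) b :=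
          dist_triangle4 _ _ _ _
      _ < ε + ε + ε := by
          refine add_lt_add (add_lt_add ?_ ?_) hzt
          · rw [dist_comm]; exact hz0
          · rw [dist_comm]; exact hmid
      _ = 3 * ε := by ring
  by_contra hne
  have hd : 0 < dist a b := dist_pos.2 hne
  have := key (dist a b / 3) (by linarith)
  linarith

lemma td_implies_shadowing {X : Type*} [MetricSpace X] [CompactSpace X]
    (f : X → X) (hf : Continuous f) (hrig : UniformlyRigid f)
    (hTD : TotallyDisconnectedSpace X) : HasShadowing f := by
  intro ε hε
  -- small clopen neighborhoods
  have hclopen : ∀ p : X, ∃ V : Set X, IsClopen V ∧ p ∈ V ∧ V ⊆ ball p (ε / 3) :=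
    fun p => compact_exists_isClopen_in_isOpen isOpen_ball (mem_ball_self (by linarith))
  choose C hC hCmem hCsub using hclopen
  obtain ⟨t, ht⟩ := isCompact_univ.elim_finite_subcover C (fun p => (hC p).isOpen)
    (fun p _ => mem_iUnion.2 ⟨p, hCmem p⟩)
  -- the "same atom" relation
  set R : X → X → Prop := fun u v => ∀ y ∈ t, (u ∈ C y ↔ v ∈ C y) with hRdef
  have hRrefl : ∀ u, R u u := fun u y _ => Iff.rfl
  have hRsymm : ∀ u v, R u v → R v u := fun u v h y hy => (h y hy).symm
  have hRtrans : ∀ u v w, R u v → R v w → R u w :=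
    fun u v w h1 h2 y hy => (h1 y hy).trans (h2 y hy)
  have hdiam : ∀ u v, R u v → dist u v < ε := by
    intro u v huv
    obtain ⟨y₀, hy₀t, hu⟩ := mem_iUnion₂.1 (ht (mem_univ u))
    have hv : v ∈ C y₀ := (huv y₀ hy₀t).1 hu
    have h1 : dist u y₀ < ε / 3 := mem_ball.1 (hCsub y₀ hu)
    have h2 : dist v y₀ < ε / 3 := mem_ball.1 (hCsub y₀ hv)
    calc dist u v ≤ dist u y₀ + dist y₀ v := dist_triangle _ _ _
      _ < ε / 3 + ε / 3 := by rw [dist_comm y₀ v]; exact add_lt_add h1 h2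
      _ < ε := by linarith
  -- a uniform gap for the atoms
  have hgap : ∀ s : Finset X, ∃ γ : ℝ, 0 < γ ∧
      ∀ y ∈ s, ∀ u v : X, dist u v < γ → (u ∈ C y ↔ v ∈ C y) := by
    intro s
    classical
    induction s using Finset.induction_on with
    | empty => exact ⟨1, one_pos, by simp⟩
    | @insert y s hys ih =>
      obtain ⟨γ₁, hγ₁, h₁⟩ := ih
      obtain ⟨γ₂, hγ₂, h₂⟩ := lebesgue_number_lemma_of_metric (s := (Set.univ : Set X))
        (c := fun b : Bool => if b then C y else (C y)ᶜ) isCompact_univ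
        (fun b => by cases b <;> simp [(hC y).isOpen, (hC y).isClosed.isOpen_compl])
        (fun p _ => by
          by_cases hp : p ∈ C y
          · exact mem_iUnion.2 ⟨true, by simpa using hp⟩
          · exact mem_iUnion.2 ⟨false, by simpa using hp⟩)
      refine ⟨min γ₂ γ₁, lt_min hγ₂ hγ₁, ?_⟩
      intro y' hy' u v huv
      rcases Finset.mem_insert.1 hy' with rfl | hy'
      · obtain ⟨i, hi⟩ := h₂ u (mem_univ u)
        have hu : u ∈ (if i then C y' else (C y')ᶜ) := hi (mem_ball_self hγ₂)
        have hv : v ∈ (if i then C y' else (C y')ᶜ) := by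
          refine hi (mem_ball.2 ?_)
          rw [dist_comm]
          exact lt_of_lt_of_le huv (min_le_left _ _)
        cases i
        · simp only [if_neg Bool.false_ne_true, mem_compl_iff] at hu hv
          exact iff_of_false hu hv
        · simp only [if_pos rfl] at hu hv
          exact iff_of_true hu hv
      · exact h₁ y' hy' u v (lt_of_lt_of_le huv (min_le_right _ _))
  obtain ⟨γ, hγpos, hγ⟩ := hgap t
  have hRγ : ∀ u v : X, dist u v < γ → R u v := fun u v h y hy => hγ y hy u v h
  -- a rigid time at scale γ
  obtain ⟨n, hn0, hn⟩ := hrig γ hγpos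
  have hper : ∀ u : X, R (f^[n] u) u := fun u => hRγ _ _ (hn u)
  -- the refined relation E
  set E : X → X → Prop := fun u v => ∀ j, j < n → R (f^[j] u) (f^[j] v) with hEdef
  have hErefl : ∀ u, E u u := fun u j _ => hRrefl _
  have hEtrans : ∀ u v w, E u v → E v w → E u w :=
    fun u v w h1 h2 j hj => hRtrans _ _ _ (h1 j hj) (h2 j hj)
  have hEstep : ∀ u v, E u v → E (f u) (f v) := by
    intro u v hE j hj
    rw [← Function.iterate_succ_apply f j u, ← Function.iterate_succ_apply f j v]
    rcases Nat.lt_or_ge (j + 1) n with h | h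
    · exact hE (j + 1) h
    · have hjn : j + 1 = n := by omega
      rw [Nat.succ_eq_add_one, hjn]
      refine hRtrans _ _ _ (hper u) (hRtrans _ _ _ (hE 0 hn0) (hRsymm _ _ (hper v)))
  -- uniform continuity for n steps
  have hδex : ∀ k : ℕ, ∃ δ : ℝ, 0 < δ ∧
      ∀ u v : X, dist u v < δ → ∀ j ≤ k, dist (f^[j] u) (f^[j] v) < γ := by
    intro k
    induction k with
    | zero =>
      refine ⟨γ, hγpos, fun u v h j hj => ?_⟩
      have : j = 0 := Nat.le_zero.1 hj
      subst this
      simpa using h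
    | succ k ih =>
      obtain ⟨δk, hδk, hk⟩ := ih
      obtain ⟨δ', hδ', hf'⟩ := Metric.uniformContinuous_iff.1
        (CompactSpace.uniformContinuous_of_continuous hf) δk hδk
      refine ⟨min δ' γ, lt_min hδ' hγpos, fun u v h j hj => ?_⟩
      cases j with
      | zero => simpa using lt_of_lt_of_le h (min_le_right _ _)
      | succ j =>
        rw [Function.iterate_succ_apply, Function.iterate_succ_apply]
        exact hk (f u) (f v) (hf' (lt_of_lt_of_le h (min_le_left _ _))) j (by omega)
  obtain ⟨δ, hδpos, hδprop⟩ := hδex n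
  refine ⟨δ, hδpos, fun x hx => ?_⟩
  have hEδ : ∀ u v : X, dist u v < δ → E u v :=
    fun u v h j hj => hRγ _ _ (hδprop u v h j hj.le)
  have claim : ∀ i : ℕ, E (f^[i] (x 0)) (x i) := by
    intro i
    induction i with
    | zero => simpa using hErefl (x 0)
    | succ i ih =>
      have h1 : E (f (f^[i] (x 0))) (f (x i)) := hEstep _ _ ih
      rw [← Function.iterate_succ_apply' f i (x 0)] at h1
      exact hEtrans _ _ _ h1 (hEδ _ _ (hx i))
  exact ⟨x 0, fun i => by
    have := (claim i) 0 hn0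
    simp only [Function.iterate_zero_apply] at this
    exact hdiam _ _ this⟩

/-- A uniformly rigid system `(X, f)` has shadowing if and only if `X` is totally
disconnected. -/
theorem uniformlyRigid_shadowing_iff_totallyDisconnected
    {X : Type*} [MetricSpace X] [CompactSpace X]
    (f : X → X) (hf : Continuous f) (hrig : UniformlyRigid f) :
    HasShadowing f ↔ TotallyDisconnectedSpace X :=
  ⟨fun hsh => shadowing_implies_td f hf hrig hsh,
   fun hTD => td_implies_shadowing f hf hrig hTD⟩
end

section
/- For a compact metric space X, the following are equivalent: (1) every continuous map f : X → X has shadowing; (2) every continuous surjection f : X → X has shadowing; (3) X is finite. -/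
open Metric Set Function Filter Topology

theorem hasShadowing_of_finite {X : Type*} [MetricSpace X] [Finite X] (f : X → X) :
    HasShadowing f := by
  intro ε hε
  obtain ⟨δ, hδ, hdiag⟩ :=
    mem_uniformity_dist.mp (DiscreteUniformity.relId_mem_uniformity (X := X))
  refine ⟨δ, hδ, fun x hx => ⟨x 0, fun i => ?_⟩⟩
  have horbit : ∀ i, f^[i] (x 0) = x i := by
    intro i
    induction i with
    | zero => rfl
    | succ i ih => rw [iterate_succ_apply', ih]; exact hdiag (hx i)
  rwa [horbit, dist_self]

section Chain

variable {X : Type*} [MetricSpace X]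

def chainReachable (δ : ℝ) (x : X) : Set X :=
  {y | ∃ c : ℕ → X, ∃ n, c 0 = x ∧ c n = y ∧ ∀ i, dist (c i) (c (i + 1)) < δ}

theorem chainReachable_of_dist_lt {δ : ℝ} (hδ : 0 < δ) {x y w : X}
    (hy : y ∈ chainReachable δ x) (hyw : dist y w < δ) : w ∈ chainReachable δ x := by
  obtain ⟨c, n, hc0, hcn, hc⟩ := hy
  refine ⟨fun i => if i ≤ n then c i else w, n + 1, by simpa using hc0, by simp, fun i => ?_⟩
  rcases lt_trichotomy i n with hi | rfl | hi
  · simpa [hi.le, Nat.succ_le_of_lt hi] using hc i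
  · simpa [hcn] using hyw
  · simpa [hi.not_ge, (Nat.lt_succ_of_lt hi).not_ge] using hδ

theorem isClopen_chainReachable {δ : ℝ} (hδ : 0 < δ) (x : X) :
    IsClopen (chainReachable δ x) := by
  refine ⟨isOpen_compl_iff.mp <| isOpen_iff.mpr fun y hy => ⟨δ, hδ, fun w hw hwx => ?_⟩,
    isOpen_iff.mpr fun y hy => ⟨δ, hδ, fun w hw => ?_⟩⟩
  · exact hy (chainReachable_of_dist_lt hδ hwx (mem_ball.mp hw))
  · exact chainReachable_of_dist_lt hδ hy (mem_ball'.mp hw)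

theorem totallySeparatedSpace_of_hasShadowing_id (h : HasShadowing (id : X → X)) :
    TotallySeparatedSpace X := by
  refine totallySeparatedSpace_iff_exists_isClopen.mpr fun x y hxy => ?_
  obtain ⟨δ, hδ, hsh⟩ := h (dist x y / 2) (half_pos (dist_pos.mpr hxy))
  refine ⟨chainReachable δ x, isClopen_chainReachable hδ x,
    ⟨fun _ => x, 0, rfl, rfl, by simpa⟩, fun ⟨c, n, hc0, hcn, hc⟩ => ?_⟩
  obtain ⟨z, hz⟩ := hsh c (by simpa using hc)
  simp only [iterate_id, id_eq] at hz
  linarith [dist_triangle_left x y z, hc0 ▸ hz 0, hcn ▸ hz n]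

end Chain

theorem exists_pairwise_disjoint_isClopen_tendsto_smallSets {X : Type*} [TopologicalSpace X]
    [T2Space X] [CompactSpace X] [TotallyDisconnectedSpace X] [FirstCountableTopology X]
    {p : X} {S : Set X} (hp : AccPt p (𝓟 S)) :
    ∃ W : ℕ → Set X, (∀ n, IsClopen (W n)) ∧ (∀ n, (W n ∩ S).Nonempty) ∧
      Pairwise (Disjoint on W) ∧ Tendsto W cofinite (𝓝 p).smallSets := by
  obtain ⟨t, ht⟩ := (𝓝 p).exists_antitone_basis
  have hstep : ∀ (n : ℕ) (V : {V : Set X // IsClopen V ∧ p ∈ V}),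
      ∃ V' : {V : Set X // IsClopen V ∧ p ∈ V}, V'.1 ⊆ V.1 ∩ t n ∧ ((V.1 \ V'.1) ∩ S).Nonempty := by
    rintro n ⟨V, hV, hpV⟩
    obtain ⟨q, ⟨hqV, hqS⟩, hqp⟩ := accPt_iff_nhds.mp hp V (hV.isOpen.mem_nhds hpV)
    have hnhds : V ∩ t n ∩ {q}ᶜ ∈ 𝓝 p := inter_mem (inter_mem (hV.isOpen.mem_nhds hpV) (ht.mem n))
      (isOpen_compl_singleton.mem_nhds hqp.symm)
    obtain ⟨V', ⟨hpV', hV'⟩, hV'sub⟩ := (nhds_basis_clopen p).mem_iff.mp hnhds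
    exact ⟨⟨V', hV', hpV'⟩, fun x hx => (hV'sub hx).1, q,
      ⟨hqV, fun hqV' => (hV'sub hqV').2 rfl⟩, hqS⟩
  -- `W n = V n \ V (n + 1)` for nested clopen neighbourhoods `V n` of `p`, chosen so that each
  -- difference contains a point of `S`
  choose next hnext_sub hnext_S using hstep
  let V : ℕ → {V : Set X // IsClopen V ∧ p ∈ V} :=
    fun n => Nat.rec ⟨univ, isClopen_univ, mem_univ p⟩ next n
  have hV_succ (n : ℕ) : V (n + 1) = next n (V n) := rfl
  have hV_anti : Antitone fun n => (V n).1 :=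
    antitone_nat_of_succ_le fun n => by rw [hV_succ]; exact fun x hx => (hnext_sub n _ hx).1
  refine ⟨fun n => (V n).1 \ (V (n + 1)).1, fun n => (V n).2.1.diff (V (n + 1)).2.1,
    fun n => hnext_S n (V n), (pairwise_disjoint_on _).mpr fun m n hmn => ?_, ?_⟩
  · exact disjoint_left.mpr fun x hxm hxn => hxm.2 (hV_anti hmn hxn.1)
  · rw [Nat.cofinite_eq_atTop]
    refine (tendsto_add_atTop_iff_nat 1).mp (ht.tendsto_smallSets.smallSets_mono ?_)
    exact Eventually.of_forall fun n x hx => (hnext_sub n (V n) hx.1).2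

theorem Set.Nonempty.nontrivial_of_isOpen {X : Type*} [TopologicalSpace X] {U W : Set X}
    (hWne : W.Nonempty) (hW : IsOpen W) (hWU : W ⊆ U) (hperf : ∀ x ∈ U, ¬IsOpen {x}) :
    W.Nontrivial := by
  obtain ⟨x, hx⟩ := hWne
  by_contra h
  rw [not_nontrivial_iff] at h
  exact hperf x (hWU hx) (h.eq_singleton_of_mem hx ▸ hW)

section Cantor

variable {X : Type*} (K : Set X → Set X)

/- `K W` splits `W` into `splitPiece K W true = W ∩ K W` and `splitPiece K W false = W \ K W`.
`cantorPiece K U β n` is the piece of `U` reached along the bits `β 0, …, β (n - 1)`, and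
`addressPiece K U x n` is the piece of level `n` containing `x ∈ U`, so that `cantorCode K U x`
is the branch of `x`. -/
noncomputable def splitPiece (W : Set X) (b : Bool) : Set X :=
  W ∩ (K W).boolIndicator ⁻¹' {b}

noncomputable def cantorPiece (U : Set X) (β : ℕ → Bool) : ℕ → Set X
  | 0 => U
  | n + 1 => splitPiece K (cantorPiece U β n) (β n)

noncomputable def addressPiece (U : Set X) (x : X) : ℕ → Set X
  | 0 => U
  | n + 1 => splitPiece K (addressPiece U x n) ((K (addressPiece U x n)).boolIndicator x)

noncomputable def cantorCode (U : Set X) (x : X) (n : ℕ) : Bool :=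
  (K (addressPiece K U x n)).boolIndicator x

variable {K}

theorem splitPiece_nonempty {W : Set X} (hW : (W ∩ K W).Nonempty ∧ (W \ K W).Nonempty)
    (b : Bool) : (splitPiece K W b).Nonempty := by
  cases b
  · simpa [splitPiece, preimage_boolIndicator_false, ← sdiff_eq] using hW.2
  · simpa [splitPiece, preimage_boolIndicator_true] using hW.1

theorem addressPiece_eq_cantorPiece {U : Set X} {β : ℕ → Bool} {x : X}
    (hx : ∀ n, x ∈ cantorPiece K U β n) (n : ℕ) : addressPiece K U x n = cantorPiece K U β n := by
  induction n with
  | zero => rfl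
  | succ n ih => rw [addressPiece, cantorPiece, ih, (hx (n + 1)).2]

theorem cantorCode_eq {U : Set X} {β : ℕ → Bool} {x : X} (hx : ∀ n, x ∈ cantorPiece K U β n) :
    cantorCode K U x = β := by
  funext n
  rw [cantorCode, addressPiece_eq_cantorPiece hx]
  exact (hx (n + 1)).2

theorem cantorPiece_succ_subset (U : Set X) (β : ℕ → Bool) (n : ℕ) :
    cantorPiece K U β (n + 1) ⊆ cantorPiece K U β n :=
  inter_subset_left

variable [TopologicalSpace X] (hK : ∀ W, IsClopen (K W))
include hK

theorem isClopen_splitPiece {W : Set X} (hW : IsClopen W) (b : Bool) :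
    IsClopen (splitPiece K W b) :=
  hW.inter <| (isClopen_discrete {b}).preimage <|
    (continuous_boolIndicator_iff_isClopen _).mpr (hK W)

theorem IsLocallyConstant.boolIndicator_comp {g : X → Set X} (hg : IsLocallyConstant g) :
    IsLocallyConstant fun x => (K (g x)).boolIndicator x := by
  refine (IsLocallyConstant.iff_eventually_eq _).mpr fun x => ?_
  have hind : IsLocallyConstant (K (g x)).boolIndicator :=
    (IsLocallyConstant.iff_continuous _).mpr ((continuous_boolIndicator_iff_isClopen _).mpr (hK _))
  filter_upwards [hg.eventually_eq x, hind.eventually_eq x] with y hy hy'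
  rw [hy, hy']

theorem isLocallyConstant_addressPiece (U : Set X) (n : ℕ) :
    IsLocallyConstant fun x => addressPiece K U x n := by
  induction n with
  | zero => exact IsLocallyConstant.const U
  | succ n ih => exact ih.comp₂ (ih.boolIndicator_comp hK) (splitPiece K)

theorem continuous_cantorCode (U : Set X) : Continuous (cantorCode K U) :=
  continuous_pi fun n => ((isLocallyConstant_addressPiece hK U n).boolIndicator_comp hK).continuous

theorem isClopen_cantorPiece {U : Set X} (hU : IsClopen U) (β : ℕ → Bool) (n : ℕ) :
    IsClopen (cantorPiece K U β n) := by
  induction n with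
  | zero => exact hU
  | succ n ih => exact isClopen_splitPiece hK ih (β n)

theorem cantorPiece_nonempty
    (hsplit : ∀ W : Set X, W.Nontrivial → (W ∩ K W).Nonempty ∧ (W \ K W).Nonempty)
    {U : Set X} (hU : IsClopen U) (hUne : U.Nonempty) (hperf : ∀ x ∈ U, ¬IsOpen {x})
    (β : ℕ → Bool) (n : ℕ) : (cantorPiece K U β n).Nonempty := by
  induction n with
  | zero => exact hUne
  | succ n ih =>
    have hsub : cantorPiece K U β n ⊆ U :=
      (antitone_nat_of_succ_le (cantorPiece_succ_subset U β)) (Nat.zero_le n)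
    exact splitPiece_nonempty
      (hsplit _ (ih.nontrivial_of_isOpen (isClopen_cantorPiece hK hU β n).isOpen hsub hperf)) _

end Cantor

theorem exists_continuous_surjOn_cantor {X : Type*} [TopologicalSpace X] [CompactSpace X]
    [TotallySeparatedSpace X] {U : Set X} (hU : IsClopen U) (hUne : U.Nonempty)
    (hperf : ∀ x ∈ U, ¬IsOpen {x}) :
    ∃ φ : X → ℕ → Bool, Continuous φ ∧ SurjOn φ U univ := by
  have hsplit (W : Set X) :
      ∃ K, IsClopen K ∧ (W.Nontrivial → (W ∩ K).Nonempty ∧ (W \ K).Nonempty) := by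
    by_cases hW : W.Nontrivial
    · obtain ⟨y, hy, y', hy', hne⟩ := hW
      obtain ⟨K, hK, hyK, hy'K⟩ := exists_isClopen_of_totally_separated hne
      exact ⟨K, hK, fun _ => ⟨⟨y, hy, hyK⟩, y', hy', hy'K⟩⟩
    · exact ⟨∅, isClopen_empty, fun h => (hW h).elim⟩
  choose K hK hKsplit using hsplit
  refine ⟨cantorCode K U, continuous_cantorCode hK U, fun β _ => ?_⟩
  have hclosed n := (isClopen_cantorPiece hK hU β n).isClosed
  obtain ⟨x, hx⟩ := IsCompact.nonempty_iInter_of_sequence_nonempty_isCompact_isClosed _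
    (cantorPiece_succ_subset U β) (cantorPiece_nonempty hK hKsplit hU hUne hperf β)
    (hclosed 0).isCompact hclosed
  rw [mem_iInter] at hx
  exact ⟨x, hx 0, cantorCode_eq hx⟩

theorem exists_continuous_mapsTo_surjOn {X : Type*} [MetricSpace X] [CompactSpace X]
    [TotallySeparatedSpace X] {U V : Set X} (hU : IsClopen U) (hUne : U.Nonempty)
    (hperf : ∀ x ∈ U, ¬IsOpen {x}) (hV : IsClosed V) (hVne : V.Nonempty) :
    ∃ s : X → X, Continuous s ∧ MapsTo s U V ∧ SurjOn s U V := by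
  obtain ⟨φ, hφ, hφU⟩ := exists_continuous_surjOn_cantor hU hUne hperf
  have := hVne.to_subtype
  have := isCompact_iff_compactSpace.mp hV.isCompact
  obtain ⟨g, hg, hgs⟩ := exists_nat_bool_continuous_surjective_of_compact V
  refine ⟨fun x => g (φ x), continuous_subtype_val.comp (hg.comp hφ), fun x _ => (g (φ x)).2,
    fun v hv => ?_⟩
  obtain ⟨β, hβ⟩ := hgs ⟨v, hv⟩
  obtain ⟨x, hx, rfl⟩ := hφU (mem_univ β)
  exact ⟨x, hx, by simp [hβ]⟩

section OrbitConcat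

variable {X : Type*}

def orbitConcat (f : X → X) (x y : X) (N : ℕ) (i : ℕ) : X :=
  if i ≤ N then f^[i] x else f^[i - (N + 1)] y

theorem orbitConcat_zero (f : X → X) (x y : X) (N : ℕ) : orbitConcat f x y N 0 = x := by
  simp [orbitConcat]

theorem orbitConcat_add (f : X → X) (x y : X) (N j : ℕ) :
    orbitConcat f x y N (N + 1 + j) = f^[j] y := by
  rw [orbitConcat, if_neg (by omega), Nat.add_sub_cancel_left]

theorem dist_orbitConcat_lt [MetricSpace X] {f : X → X} {x y : X} {N : ℕ} {δ : ℝ} (hδ : 0 < δ)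
    (hjump : dist (f^[N + 1] x) y < δ) (i : ℕ) :
    dist (f (orbitConcat f x y N i)) (orbitConcat f x y N (i + 1)) < δ := by
  rcases lt_trichotomy i N with hi | rfl | hi
  · simpa [orbitConcat, hi.le, Nat.succ_le_of_lt hi, ← iterate_succ_apply' f] using hδ
  · simpa [orbitConcat, ← iterate_succ_apply' f] using hjump
  · obtain ⟨j, rfl⟩ := Nat.exists_eq_add_of_lt hi
    rw [show N + j + 1 + 1 = N + 1 + (j + 1) by omega, show N + j + 1 = N + 1 + j by omega,
      orbitConcat_add, orbitConcat_add, ← iterate_succ_apply' f, dist_self]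
    exact hδ

end OrbitConcat

theorem continuousAt_of_eventually_dist_self_lt {X : Type*} [MetricSpace X] {f : X → X} {x : X}
    (hx : f x = x) (h : ∀ ε > 0, ∀ᶠ y in 𝓝 x, dist (f y) y < ε) : ContinuousAt f x := by
  rw [ContinuousAt, hx, Metric.tendsto_nhds]
  intro ε hε
  filter_upwards [h (ε / 2) (half_pos hε), ball_mem_nhds x (half_pos hε)] with y hy hy'
  linarith [dist_triangle (f y) y x, mem_ball.mp hy']

section BlockShift

variable {X : Type*} {D : ℤ → Set X} {s : ℤ → X → X}

open Classical in
noncomputable def blockShift (D : ℤ → Set X) (s : ℤ → X → X) (x : X) : X :=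
  if h : ∃ k, x ∈ D k then s h.choose x else x

theorem blockShift_eq_of_mem (hdisj : Pairwise (Disjoint on D)) {k : ℤ} {x : X} (hx : x ∈ D k) :
    blockShift D s x = s k x := by
  have h : ∃ k, x ∈ D k := ⟨k, hx⟩
  have hk : h.choose = k := by
    by_contra hne
    exact disjoint_left.mp (hdisj hne) h.choose_spec hx
  rw [blockShift, dif_pos h, hk]

theorem blockShift_eq_self {x : X} (hx : ∀ k, x ∉ D k) : blockShift D s x = x :=
  dif_neg (not_exists.mpr hx)

variable (hdisj : Pairwise (Disjoint on D))
include hdisj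

theorem blockShift_iterate_mem (hmaps : ∀ k, MapsTo (s k) (D k) (D (k + 1))) {k : ℤ} {x : X}
    (hx : x ∈ D k) (j : ℕ) : (blockShift D s)^[j] x ∈ D (k + j) := by
  induction j with
  | zero => simpa using hx
  | succ j ih =>
    rw [iterate_succ_apply', blockShift_eq_of_mem hdisj ih, Nat.cast_succ, ← add_assoc]
    exact hmaps _ ih

theorem surjective_blockShift (hsurj : ∀ k, SurjOn (s k) (D k) (D (k + 1))) :
    Surjective (blockShift D s) := by
  intro y
  by_cases hy : ∃ k, y ∈ D k
  · obtain ⟨k, hk⟩ := hy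
    obtain ⟨x, hx, rfl⟩ := hsurj (k - 1) (by rwa [sub_add_cancel])
    exact ⟨x, blockShift_eq_of_mem hdisj hx⟩
  · exact ⟨y, blockShift_eq_self (not_exists.mp hy)⟩

variable [MetricSpace X] {p : X} (hD : ∀ k, IsClopen (D k))
  (hlim : Tendsto D cofinite (𝓝 p).smallSets)
include hD hlim

theorem continuous_blockShift (hs : ∀ k, Continuous (s k))
    (hmaps : ∀ k, MapsTo (s k) (D k) (D (k + 1))) : Continuous (blockShift D s) := by
  refine continuous_iff_continuousAt.mpr fun x => ?_
  by_cases hx : ∃ k, x ∈ D k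
  · obtain ⟨k, hk⟩ := hx
    exact (hs k).continuousAt.congr (eventually_of_mem ((hD k).isOpen.mem_nhds hk)
      fun y hy => (blockShift_eq_of_mem hdisj hy).symm)
  rw [not_exists] at hx
  refine continuousAt_of_eventually_dist_self_lt (blockShift_eq_self hx) fun ε hε => ?_
  have hsmall := tendsto_smallSets_iff.mp hlim _ (ball_mem_nhds p (half_pos hε))
  -- a point of a block and its image both lie in `ball p (ε / 2)`, except for finitely many blocks
  have hF := eventually_cofinite.mp
    (hsmall.and ((add_left_injective 1).tendsto_cofinite.eventually hsmall))
  have hnear : (⋃ k ∈ {k | ¬(D k ⊆ ball p (ε / 2) ∧ D (k + 1) ⊆ ball p (ε / 2))}, D k)ᶜ ∈ 𝓝 x :=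
    (hF.isClosed_biUnion fun k _ => (hD k).isClosed).isOpen_compl.mem_nhds
      (by simpa using fun k _ => hx k)
  filter_upwards [hnear] with y hy
  by_cases hyD : ∃ k, y ∈ D k
  · obtain ⟨k, hk⟩ := hyD
    obtain ⟨hk₁, hk₂⟩ : D k ⊆ ball p (ε / 2) ∧ D (k + 1) ⊆ ball p (ε / 2) := by
      by_contra hkF
      exact hy (mem_biUnion hkF hk)
    rw [blockShift_eq_of_mem hdisj hk]
    linarith [dist_triangle_right (s k y) y p, mem_ball.mp (hk₂ (hmaps k hk)),
      mem_ball.mp (hk₁ hk)]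
  · rwa [blockShift_eq_self (not_exists.mp hyD), dist_self]

theorem notMem_of_tendsto_smallSets (hDne : ∀ k, (D k).Nonempty) (k : ℤ) : p ∉ D k := by
  intro hp
  obtain ⟨j, hjk, hj⟩ := ((eventually_cofinite_ne k).and
    (tendsto_smallSets_iff.mp hlim _ ((hD k).isOpen.mem_nhds hp))).exists
  obtain ⟨x, hx⟩ := hDne j
  exact disjoint_left.mp (hdisj hjk) hx (hj hx)

theorem not_hasShadowing_blockShift (hDne : ∀ k, (D k).Nonempty)
    (hmaps : ∀ k, MapsTo (s k) (D k) (D (k + 1))) : ¬HasShadowing (blockShift D s) := by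
  intro hsh
  obtain ⟨b, hb⟩ := hDne 0
  obtain ⟨r, hr, hrb⟩ := isOpen_iff.mp (hD 0).isOpen b hb
  obtain ⟨r', hr', hr'p⟩ := isOpen_iff.mp (hD 0).isClosed.isOpen_compl p
    (notMem_of_tendsto_smallSets hdisj hD hlim hDne 0)
  obtain ⟨δ, hδ, hshδ⟩ := hsh (min r (r' / 2)) (by positivity)
  have hsmall := tendsto_smallSets_iff.mp hlim _
    (ball_mem_nhds p (show 0 < min (δ / 2) (r' / 2) by positivity))
  obtain ⟨N, hN⟩ := eventually_atTop.mp <| Nat.cofinite_eq_atTop ▸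
    (Nat.cast_injective.tendsto_cofinite.eventually hsmall).and
      ((neg_injective.comp Nat.cast_injective).tendsto_cofinite.eventually hsmall)
  obtain ⟨a, ha⟩ := hDne (-N)
  -- follow the orbit of `b` out to `D N`, jump near `p` to `D (-N)`, and come back to `D 0`
  have hjump : dist ((blockShift D s)^[N + 1] b) a < δ := by
    have hout := (hN (N + 1) (by omega)).1
      (zero_add ((N + 1 : ℕ) : ℤ) ▸ blockShift_iterate_mem hdisj hmaps hb (N + 1))
    have hin := (hN N le_rfl).2 ha
    rw [mem_ball] at hout hin
    linarith [dist_triangle_right ((blockShift D s)^[N + 1] b) a p, min_le_left (δ / 2) (r' / 2)]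
  obtain ⟨z, hz⟩ := hshδ _ (dist_orbitConcat_lt hδ hjump)
  have hz0 : z ∈ D 0 :=
    hrb ((by simpa [orbitConcat_zero] using hz 0 : dist z b < _).trans_le (min_le_left _ _))
  have hzfar := (hN (N + 1 + N) (by omega)).1
    (zero_add ((N + 1 + N : ℕ) : ℤ) ▸ blockShift_iterate_mem hdisj hmaps hz0 (N + 1 + N))
  have hback : orbitConcat (blockShift D s) b a N (N + 1 + N) ∈ D 0 := by
    simpa [orbitConcat_add] using blockShift_iterate_mem hdisj hmaps ha N
  refine hr'p ?_ hback
  have := hz (N + 1 + N)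
  rw [mem_ball] at hzfar ⊢
  linarith [dist_triangle_left (orbitConcat (blockShift D s) b a N (N + 1 + N)) p
    ((blockShift D s)^[N + 1 + N] z), min_le_right r (r' / 2), min_le_right (δ / 2) (r' / 2)]

theorem exists_not_hasShadowing_of_blocks (hDne : ∀ k, (D k).Nonempty)
    (hs : ∀ k, Continuous (s k)) (hmaps : ∀ k, MapsTo (s k) (D k) (D (k + 1)))
    (hsurj : ∀ k, SurjOn (s k) (D k) (D (k + 1))) :
    ∃ f : X → X, Continuous f ∧ Surjective f ∧ ¬HasShadowing f :=
  ⟨blockShift D s, continuous_blockShift hdisj hD hlim hs hmaps,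
    surjective_blockShift hdisj hsurj, not_hasShadowing_blockShift hdisj hD hlim hDne hmaps⟩

end BlockShift

theorem exists_not_hasShadowing_of_infinite_isolated {X : Type*} [MetricSpace X] [CompactSpace X]
    [TotallySeparatedSpace X] (hI : {x : X | IsOpen {x}}.Infinite) :
    ∃ f : X → X, Continuous f ∧ Surjective f ∧ ¬HasShadowing f := by
  obtain ⟨p, hp⟩ := hI.exists_accPt_principal
  obtain ⟨W, -, hWI, hWdisj, hWlim⟩ := exists_pairwise_disjoint_isClopen_tendsto_smallSets hp
  choose q hqW hqI using hWI
  let e := Equiv.intEquivNat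
  have hdisj : Pairwise (Disjoint on fun k => ({q (e k)} : Set X)) := fun j k hjk =>
    disjoint_singleton.mpr fun h =>
      disjoint_left.mp (hWdisj (e.injective.ne hjk)) (hqW _) (h ▸ hqW (e k))
  have hlim : Tendsto (fun k => ({q (e k)} : Set X)) cofinite (𝓝 p).smallSets :=
    (hWlim.comp e.injective.tendsto_cofinite).smallSets_mono
      (Eventually.of_forall fun k => singleton_subset_iff.mpr (hqW (e k)))
  exact exists_not_hasShadowing_of_blocks hdisj (fun k => ⟨isClosed_singleton, hqI (e k)⟩) hlim
    (fun k => singleton_nonempty _) (fun k => continuous_const) (fun k x _ => rfl)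
    (fun k y hy => ⟨q (e k), rfl, hy.symm⟩)

theorem exists_not_hasShadowing_of_finite_isolated {X : Type*} [MetricSpace X] [CompactSpace X]
    [TotallySeparatedSpace X] [Infinite X] (hI : {x : X | IsOpen {x}}.Finite) :
    ∃ f : X → X, Continuous f ∧ Surjective f ∧ ¬HasShadowing f := by
  set I := {x : X | IsOpen {x}}
  have hIopen : IsOpen I :=
    isOpen_iff_forall_mem_open.mpr fun x hx => ⟨{x}, singleton_subset_iff.mpr hx, hx, rfl⟩
  have hY : IsClopen Iᶜ := ⟨hIopen.isClosed_compl, hI.isClosed.isOpen_compl⟩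
  have hperf : ∀ x ∈ Iᶜ, ¬IsOpen {x} := fun x hx => hx
  obtain ⟨p, hpY⟩ := hI.infinite_compl.nonempty
  have hp : AccPt p (𝓟 Iᶜ) := accPt_iff_nhds.mpr fun U hU => by
    obtain ⟨O, hOU, hO, hpO⟩ := _root_.mem_nhds_iff.mp hU
    have hOY : (O ∩ Iᶜ).Nonempty := ⟨p, hpO, hpY⟩
    obtain ⟨y, hy, hyp⟩ :=
      (hOY.nontrivial_of_isOpen (hO.inter hY.isOpen) inter_subset_right hperf).exists_ne p
    exact ⟨y, ⟨hOU hy.1, hy.2⟩, hyp⟩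
  obtain ⟨W, hW, hWY, hWdisj, hWlim⟩ := exists_pairwise_disjoint_isClopen_tendsto_smallSets hp
  let e := Equiv.intEquivNat
  have hD (k : ℤ) : IsClopen (W (e k) ∩ Iᶜ) := (hW _).inter hY
  choose s hs hmaps hsurj using fun k => exists_continuous_mapsTo_surjOn (hD k) (hWY (e k))
    (fun x hx => hx.2) (hD (k + 1)).isClosed (hWY (e (k + 1)))
  exact exists_not_hasShadowing_of_blocks
    ((hWdisj.comp_of_injective e.injective).mono fun _ _ =>
      .mono inter_subset_left inter_subset_left)
    hD ((hWlim.comp e.injective.tendsto_cofinite).smallSets_mono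
      (Eventually.of_forall fun _ => inter_subset_left))
    (fun k => hWY (e k)) hs hmaps hsurj

/-- For a compact metric space `X`, the following are equivalent: every continuous self-map
has shadowing; every continuous surjection has shadowing; `X` is finite. -/
theorem every_map_shadowing_iff_finite
    {X : Type*} [MetricSpace X] [CompactSpace X] :
    List.TFAE
      [∀ f : X → X, Continuous f → HasShadowing f,
       ∀ f : X → X, Continuous f → Function.Surjective f → HasShadowing f,
       Finite X] := by
  tfae_have 1 → 2 := fun h f hf _ => h f hf
  tfae_have 3 → 1 := fun _ f _ => hasShadowing_of_finite f
  tfae_have 2 → 3 := by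
    intro h
    by_contra hX
    have := not_finite_iff_infinite.mp hX
    have := totallySeparatedSpace_of_hasShadowing_id (h id continuous_id surjective_id)
    obtain ⟨f, hf, hsurj, hns⟩ := (Set.finite_or_infinite {x : X | IsOpen {x}}).elim
      exists_not_hasShadowing_of_finite_isolated exists_not_hasShadowing_of_infinite_isolated
    exact hns (h f hf hsurj)
  tfae_finish
end

section
/- A totally disconnected compact metric space X is rigid if and only if X is finite. -/
/-- A compact metric space `X` is rigid if every continuous surjection of `X` is
uniformly rigid. -/
def RigidSpace (X : Type*) [MetricSpace X] : Prop :=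
  ∀ f : X → X, Continuous f → Function.Surjective f → UniformlyRigid f

open Function Set Filter Topology

theorem UniformlyRigid.injective {X : Type*} [MetricSpace X] {f : X → X}
    (hf : UniformlyRigid f) : Injective f := by
  intro x y hxy
  by_contra hne
  obtain ⟨n, hn, hclose⟩ := hf (dist x y / 2) (half_pos (dist_pos.2 hne))
  have hiter : f^[n] x = f^[n] y := by
    obtain ⟨m, rfl⟩ := Nat.exists_eq_add_of_lt hn
    rw [Nat.zero_add, iterate_succ_apply, iterate_succ_apply, hxy]
  have : dist x y < dist x y :=
    calc dist x y ≤ dist x (f^[n] y) + dist (f^[n] y) y := dist_triangle _ _ _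
      _ = dist (f^[n] x) x + dist (f^[n] y) y := by rw [dist_comm, hiter]
      _ < dist x y := by linarith [hclose x, hclose y]
  exact lt_irrefl _ this

theorem uniformlyRigid_of_finite {X : Type*} [MetricSpace X] [Finite X] {f : X → X}
    (hf : Surjective f) : UniformlyRigid f := by
  let e : Equiv.Perm X := Equiv.ofBijective f ⟨Finite.injective_iff_surjective.2 hf, hf⟩
  have hid : f^[orderOf e] = id := by
    rw [show f = ⇑e from rfl, ← Equiv.Perm.coe_pow, pow_orderOf_eq_one]
    rfl
  exact fun ε hε => ⟨orderOf e, orderOf_pos e, fun x => by simpa [hid] using hε⟩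

namespace CantorCoding

variable {Y : Type*} (χ : Set Y → Y → Bool)

/- `χ V` cuts a cell `V` into the halves where it is `false` and `true`; `cell χ σ n` is reached
from `univ` by choosing the halves `σ 0, …, σ (n - 1)`, and `pathCell χ x n` is the cell of depth
`n` containing `x`. -/
def cell (σ : ℕ → Bool) : ℕ → Set Y
  | 0 => univ
  | n + 1 => cell σ n ∩ {y | χ (cell σ n) y = σ n}

def pathCell (x : Y) : ℕ → Set Y
  | 0 => univ
  | n + 1 => pathCell x n ∩ {y | χ (pathCell x n) y = χ (pathCell x n) x}

def address (x : Y) (n : ℕ) : Bool := χ (pathCell χ x n) x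

theorem pathCell_eq_cell (x : Y) : ∀ n, pathCell χ x n = cell χ (address χ x) n
  | 0 => rfl
  | n + 1 => by rw [pathCell, cell, ← pathCell_eq_cell x n]; rfl

theorem cell_congr {σ τ : ℕ → Bool} : ∀ n, (∀ i < n, σ i = τ i) → cell χ σ n = cell χ τ n
  | 0, _ => rfl
  | n + 1, h => by
    rw [cell, cell, cell_congr n fun i hi => h i (by omega), h n n.lt_succ_self]

theorem mem_cell_iff {x : Y} {σ : ℕ → Bool} :
    ∀ n, x ∈ cell χ σ n ↔ ∀ i < n, address χ x i = σ i
  | 0 => by simp [cell]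
  | n + 1 => by
    rw [cell, mem_inter_iff, mem_cell_iff n, mem_ofPred_eq, Nat.forall_lt_succ_right]
    refine and_congr_right fun h => ?_
    rw [address, pathCell_eq_cell, cell_congr χ n h]

variable [TopologicalSpace Y] {χ}

theorem isClopen_cell (hχ : ∀ V, Continuous (χ V)) (σ : ℕ → Bool) :
    ∀ n, IsClopen (cell χ σ n)
  | 0 => isClopen_univ
  | n + 1 => (isClopen_cell hχ σ n).inter ((isClopen_discrete {σ n}).preimage (hχ _))

theorem continuous_address (hχ : ∀ V, Continuous (χ V)) : Continuous (address χ) := by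
  refine continuous_pi fun n => IsLocallyConstant.continuous ?_
  refine (IsLocallyConstant.iff_exists_open _).2 fun x => ?_
  refine ⟨cell χ (address χ x) (n + 1), (isClopen_cell hχ _ _).isOpen,
    (mem_cell_iff χ _).2 fun _ _ => rfl, fun y hy => ?_⟩
  exact (mem_cell_iff χ _).1 hy n n.lt_succ_self

theorem cell_nonempty [Nonempty Y] (hχ : ∀ V, Continuous (χ V))
    (hsplit : ∀ V, IsOpen V → V.Nonempty → ∀ b, ∃ y ∈ V, χ V y = b) (σ : ℕ → Bool) :
    ∀ n, (cell χ σ n).Nonempty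
  | 0 => univ_nonempty
  | n + 1 => hsplit _ (isClopen_cell hχ σ n).isOpen (cell_nonempty hχ hsplit σ n) (σ n)

theorem surjective_address [CompactSpace Y] [Nonempty Y] (hχ : ∀ V, Continuous (χ V))
    (hsplit : ∀ V, IsOpen V → V.Nonempty → ∀ b, ∃ y ∈ V, χ V y = b) :
    Surjective (address χ) := by
  intro σ
  obtain ⟨x, hx⟩ := IsCompact.nonempty_iInter_of_sequence_nonempty_isCompact_isClosed
    (cell χ σ) (fun n => inter_subset_left) (cell_nonempty hχ hsplit σ)
    isCompact_univ (fun n => (isClopen_cell hχ σ n).isClosed)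
  exact ⟨x, funext fun n => (mem_cell_iff χ (n + 1)).1 (mem_iInter.1 hx (n + 1)) n n.lt_succ_self⟩

end CantorCoding

theorem IsOpen.nontrivial_of_perfectSpace {Y : Type*} [TopologicalSpace Y] [PerfectSpace Y]
    {V : Set Y} (hV : IsOpen V) (hne : V.Nonempty) : V.Nontrivial := by
  obtain ⟨x, hx⟩ := hne
  obtain ⟨y, hy, hyx⟩ := (preperfect_iff_nhds.1 hV.preperfect) x hx V (hV.mem_nhds hx)
  exact ⟨y, hy.1, x, hx, hyx⟩

theorem exists_continuous_surjective_nat_bool {Y : Type*} [TopologicalSpace Y] [CompactSpace Y]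
    [TotallySeparatedSpace Y] [PerfectSpace Y] [Nonempty Y] :
    ∃ q : Y → ℕ → Bool, Continuous q ∧ Surjective q := by
  have hsep : ∀ V : Set Y, ∃ U : Set Y, IsClopen U ∧
      (IsOpen V → V.Nonempty → ∀ b, ∃ y ∈ V, U.boolIndicator y = b) := by
    intro V
    by_cases hV : IsOpen V ∧ V.Nonempty
    · obtain ⟨a, ha, c, hc, hac⟩ := hV.1.nontrivial_of_perfectSpace hV.2
      obtain ⟨U, hU, haU, hcU⟩ := exists_isClopen_of_totally_separated hac
      refine ⟨U, hU, fun _ _ b => ?_⟩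
      cases b
      · exact ⟨c, hc, by simpa [Set.boolIndicator] using hcU⟩
      · exact ⟨a, ha, by simpa [Set.boolIndicator] using haU⟩
    · exact ⟨∅, isClopen_empty, fun h h' => (hV ⟨h, h'⟩).elim⟩
  choose U hU hsplit using hsep
  have hχ : ∀ V, Continuous (U V).boolIndicator :=
    fun V => (continuous_boolIndicator_iff_isClopen _).2 (hU V)
  exact ⟨_, CantorCoding.continuous_address hχ, CantorCoding.surjective_address hχ hsplit⟩

theorem exists_continuous_surjective_not_injective_of_perfectSpace {Y : Type*} [MetricSpace Y]
    [CompactSpace Y] [TotallyDisconnectedSpace Y] [PerfectSpace Y] [Nonempty Y] :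
    ∃ g : Y → Y, Continuous g ∧ Surjective g ∧ ¬Injective g := by
  obtain ⟨q, hq, hqs⟩ := exists_continuous_surjective_nat_bool (Y := Y)
  obtain ⟨s, hs, hss⟩ := exists_nat_bool_continuous_surjective_of_compact Y
  let tail : (ℕ → Bool) → ℕ → Bool := fun σ => σ ∘ Nat.succ
  have htail : Surjective tail := Nat.succ_injective.surjective_comp_right
  have htail_not_inj : ¬Injective tail := fun h =>
    Bool.false_ne_true (congrFun (@h (fun _ => false) (update (fun _ => false) 0 true) rfl) 0)
  refine ⟨s ∘ tail ∘ q, hs.comp ((continuous_pi fun n => continuous_apply _).comp hq),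
    hss.comp (htail.comp hqs), fun h => htail_not_inj ?_⟩
  exact h.of_comp.of_comp_right hqs

theorem IsClopen.exists_continuous_surjective_not_injective {X : Type*} [TopologicalSpace X]
    {C : Set X} (hC : IsClopen C) {g : C → C} (hg : Continuous g) (hgs : Surjective g)
    (hgi : ¬Injective g) : ∃ f : X → X, Continuous f ∧ Surjective f ∧ ¬Injective f := by
  classical
  let f : X → X := fun x => if h : x ∈ C then g ⟨x, h⟩ else x
  have hf_mem (c : C) : f c = g c := dif_pos c.2
  have hf_notMem {x : X} (hx : x ∉ C) : f x = x := dif_neg hx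
  have hfC : ContinuousOn f C := by
    rw [continuousOn_iff_continuous_domRestrict]
    exact (continuous_subtype_val.comp hg).congr fun c => (hf_mem c).symm
  have hfCc : ContinuousOn f Cᶜ := continuousOn_id.congr fun x hx => hf_notMem hx
  refine ⟨f, continuous_iff_continuousAt.2 fun x => ?_, fun y => ?_, fun hinj => hgi ?_⟩
  · by_cases hx : x ∈ C
    · exact hfC.continuousAt (hC.isOpen.mem_nhds hx)
    · exact hfCc.continuousAt (hC.isClosed.isOpen_compl.mem_nhds hx)
  · by_cases hy : y ∈ C
    · obtain ⟨c, hc⟩ := hgs ⟨y, hy⟩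
      exact ⟨c, by rw [hf_mem, hc]⟩
    · exact ⟨y, hf_notMem hy⟩
  · intro c c' hcc'
    exact Subtype.val_injective (hinj (by rw [hf_mem, hf_mem, hcc']))

theorem exists_continuous_surjective_not_injective_of_finite_isolated {X : Type*} [MetricSpace X]
    [CompactSpace X] [TotallyDisconnectedSpace X] [Infinite X]
    (hI : {x : X | IsOpen {x}}.Finite) :
    ∃ f : X → X, Continuous f ∧ Surjective f ∧ ¬Injective f := by
  set C := {x : X | IsOpen {x}}ᶜ
  have hIopen : IsOpen {x : X | IsOpen {x}} :=
    isOpen_iff_forall_mem_open.2 fun x hx => ⟨{x}, singleton_subset_iff.2 hx, hx, mem_singleton x⟩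
  have hC : IsClopen C := ⟨hIopen.isClosed_compl, hI.isClosed.isOpen_compl⟩
  have : Nonempty C := hI.infinite_compl.nonempty.to_subtype
  have : CompactSpace C := isCompact_iff_compactSpace.1 hC.isClosed.isCompact
  have : PerfectSpace C := by
    refine perfectSpace_iff_forall_not_isolated.2 fun x => ⟨fun hx => x.2 ?_⟩
    simpa using hC.isOpen.isOpenMap_subtype_val _ ((isOpen_singleton_iff_punctured_nhds x).2 hx)
  obtain ⟨g, hg, hgs, hgi⟩ := exists_continuous_surjective_not_injective_of_perfectSpace (Y := C)
  exact hC.exists_continuous_surjective_not_injective hg hgs hgi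

section ShiftToLimit

variable {X : Type*} {a : ℕ → X} {p : X}

noncomputable def shiftToLimit (a : ℕ → X) (p : X) : X → X :=
  extend a (fun | 0 => p | k + 1 => a k) id

theorem shiftToLimit_apply_zero (ha : Injective a) : shiftToLimit a p (a 0) = p :=
  ha.extend_apply _ _ 0

theorem shiftToLimit_apply_succ (ha : Injective a) (k : ℕ) :
    shiftToLimit a p (a (k + 1)) = a k :=
  ha.extend_apply _ _ (k + 1)

theorem shiftToLimit_apply_of_notMem {x : X} (hx : x ∉ range a) : shiftToLimit a p x = x :=
  extend_apply' _ _ _ hx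

theorem surjective_shiftToLimit (ha : Injective a) : Surjective (shiftToLimit a p) := by
  intro y
  by_cases hy : y ∈ range a
  · obtain ⟨n, rfl⟩ := hy
    exact ⟨a (n + 1), shiftToLimit_apply_succ ha n⟩
  · exact ⟨y, shiftToLimit_apply_of_notMem hy⟩

variable [TopologicalSpace X]

theorem Function.Injective.limit_notMem_range (ha : Injective a) (hiso : ∀ n, IsOpen {a n})
    (hp : Tendsto a atTop (𝓝 p)) : p ∉ range a := by
  rintro ⟨n, rfl⟩
  obtain ⟨N, hN⟩ := eventually_atTop.1 (hp ((hiso n).mem_nhds rfl))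
  have := ha (hN (max N (n + 1)) (le_max_left _ _))
  omega

theorem not_injective_shiftToLimit (ha : Injective a) (hiso : ∀ n, IsOpen {a n})
    (hp : Tendsto a atTop (𝓝 p)) : ¬Injective (shiftToLimit a p) := fun hinj =>
  have hpa := ha.limit_notMem_range hiso hp
  hpa ⟨0, hinj ((shiftToLimit_apply_zero ha).trans (shiftToLimit_apply_of_notMem hpa).symm)⟩

theorem continuousAt_shiftToLimit_limit [T1Space X] (ha : Injective a) (hiso : ∀ n, IsOpen {a n})
    (hp : Tendsto a atTop (𝓝 p)) : ContinuousAt (shiftToLimit a p) p := by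
  have hpa := ha.limit_notMem_range hiso hp
  rw [ContinuousAt, shiftToLimit_apply_of_notMem hpa]
  intro U hU
  rw [mem_map]
  obtain ⟨N, hN⟩ := eventually_atTop.1 (hp hU)
  have hfar : (a '' Iic N)ᶜ ∈ 𝓝 p :=
    ((finite_Iic N).image a).isClosed.isOpen_compl.mem_nhds fun ⟨n, _, hn⟩ => hpa ⟨n, hn⟩
  filter_upwards [hU, hfar] with y hyU hyN
  by_cases hy : y ∈ range a
  · obtain ⟨n | k, rfl⟩ := hy
    · exact (hyN ⟨0, N.zero_le, rfl⟩).elim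
    · rw [mem_preimage, shiftToLimit_apply_succ ha]
      exact hN k (not_lt.1 fun hk => hyN ⟨k + 1, hk, rfl⟩)
  · rwa [mem_preimage, shiftToLimit_apply_of_notMem hy]

theorem continuous_shiftToLimit [T2Space X] (ha : Injective a) (hiso : ∀ n, IsOpen {a n})
    (hp : Tendsto a atTop (𝓝 p)) : Continuous (shiftToLimit a p) := by
  refine continuous_iff_continuousAt.2 fun x => ?_
  by_cases hxa : x ∈ range a
  · obtain ⟨n, rfl⟩ := hxa
    rw [ContinuousAt, (isOpen_singleton_iff_nhds_eq_pure _).1 (hiso n)]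
    exact tendsto_pure_nhds _ _
  by_cases hxp : x = p
  · rw [hxp]
    exact continuousAt_shiftToLimit_limit ha hiso hp
  have hK : IsClosed (insert p (range a)) := hp.isCompact_insert_range.isClosed
  have hx : x ∈ (insert p (range a))ᶜ := by simp [hxp, hxa]
  refine continuousAt_id.congr (eventually_of_mem (hK.isOpen_compl.mem_nhds hx) fun y hy => ?_)
  simp only [mem_compl_iff, mem_insert_iff, not_or] at hy
  exact (shiftToLimit_apply_of_notMem hy.2).symm

end ShiftToLimit

theorem exists_injective_tendsto_of_infinite_isolated {X : Type*} [TopologicalSpace X]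
    [CompactSpace X] [FirstCountableTopology X] (hI : {x : X | IsOpen {x}}.Infinite) :
    ∃ (a : ℕ → X) (p : X), Injective a ∧ (∀ n, IsOpen {a n}) ∧ Tendsto a atTop (𝓝 p) := by
  let e := Set.Infinite.natEmbedding _ hI
  obtain ⟨p, φ, hφ, hp⟩ := CompactSpace.tendsto_subseq fun n => (e n : X)
  exact ⟨_, p, (Subtype.val_injective.comp e.injective).comp hφ.injective,
    fun n => (e (φ n)).2, hp⟩

theorem exists_continuous_surjective_not_injective {X : Type*} [MetricSpace X] [CompactSpace X]
    [TotallyDisconnectedSpace X] [Infinite X] :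
    ∃ f : X → X, Continuous f ∧ Surjective f ∧ ¬Injective f := by
  rcases Set.finite_or_infinite {x : X | IsOpen {x}} with hI | hI
  · exact exists_continuous_surjective_not_injective_of_finite_isolated hI
  · obtain ⟨a, p, ha, hiso, hp⟩ := exists_injective_tendsto_of_infinite_isolated hI
    exact ⟨shiftToLimit a p, continuous_shiftToLimit ha hiso hp, surjective_shiftToLimit ha,
      not_injective_shiftToLimit ha hiso hp⟩

/-- A totally disconnected compact metric space is rigid if and only if it is finite. -/
theorem totallyDisconnected_rigid_iff_finite
    {X : Type*} [MetricSpace X] [CompactSpace X] [TotallyDisconnectedSpace X] :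
    RigidSpace X ↔ Finite X := by
  refine ⟨fun hR => ?_, fun _ f _ hf => uniformlyRigid_of_finite hf⟩
  by_contra hfin
  have : Infinite X := not_finite_iff_infinite.1 hfin
  obtain ⟨f, hfc, hfs, hfi⟩ := exists_continuous_surjective_not_injective (X := X)
  exact hfi (hR f hfc hfs).injective
end

section
/- Let X be a compact metric space and let S(X) be the set of continuous surjections X → X, equipped with the supremum metric ρ(f,g) = sup_{x∈X} d(f(x), g(x)). If S(X) is compact, then X is rigid, i.e., for every continuous surjection f : X → X there is a strictly increasing sequence of positive integers ⟨n_i⟩ such that the iterates f^{n_i} converge uniformly to the identity map id_X. -/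
open Filter

/-- Composition as a semigroup structure on `C(X, X)`. -/
instance compSemigroup {X : Type*} [TopologicalSpace X] : Semigroup C(X, X) where
  mul g h := g.comp h
  mul_assoc _ _ _ := rfl

lemma comp_mul_def {X : Type*} [TopologicalSpace X] (g h : C(X, X)) : g * h = g.comp h := rfl

/-- If the space `S(X)` of continuous surjections of a compact metric space `X` (with the
supremum metric, i.e. as a subspace of `C(X, X)` with the uniform convergence topology) is
compact, then `X` is rigid: every continuous surjection has a subsequence of its iterates
converging uniformly to the identity. -/
theorem compact_surjections_implies_rigid
    {X : Type*} [MetricSpace X] [CompactSpace X]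
    (hS : IsCompact {g : C(X, X) | Function.Surjective g}) :
    ∀ f : X → X, Continuous f → Function.Surjective f →
      ∃ n : ℕ → ℕ, StrictMono n ∧ (∀ i, 0 < n i) ∧
        TendstoUniformly (fun i (x : X) => f^[n i] x) id atTop := by
  intro f hc hsurj
  -- the iterates as continuous maps
  set F : ℕ → C(X, X) := fun n => ⟨f^[n], hc.iterate n⟩ with hF
  have hFmul : ∀ m n, F m * F n = F (m + n) := by
    intro m n
    ext x
    simp [comp_mul_def, hF, Function.iterate_add_apply]
  -- the closure of the positive iterates
  set A : Set C(X, X) := F '' {n | 1 ≤ n} with hA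
  set s : Set C(X, X) := closure A with hs
  have hAS : A ⊆ {g : C(X, X) | Function.Surjective g} := by
    rintro _ ⟨n, -, rfl⟩
    exact hsurj.iterate n
  have hsS : s ⊆ {g : C(X, X) | Function.Surjective g} := by
    rw [hs, ← hS.isClosed.closure_eq]
    exact closure_mono hAS
  have hscomp : IsCompact s := hS.of_isClosed_subset isClosed_closure hsS
  -- s is a subsemigroup
  have hmull : ∀ r : C(X, X), Continuous (· * r) :=
    fun r => ContinuousMap.continuous_precomp r
  have hAmul : ∀ x ∈ A, ∀ y ∈ A, x * y ∈ A := by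
    rintro _ ⟨m, hm, rfl⟩ _ ⟨n, hn, rfl⟩
    exact ⟨m + n, le_trans hm (Nat.le_add_right _ _), (hFmul m n).symm⟩
  have hsmul : ∀ x ∈ s, ∀ y ∈ s, x * y ∈ s := by
    intro x hx y hy
    have h1 : ∀ a ∈ A, a * y ∈ s := by
      intro a ha
      have hca : Continuous (a * ·) := ContinuousMap.continuous_postcomp a
      exact map_mem_closure hca hy (fun z hz => hAmul a ha z hz)
    have h2 : x * y ∈ closure s :=
      map_mem_closure (f := (· * y)) (hmull y) hx (fun a ha => h1 a ha)
    rwa [hs, closure_closure, ← hs] at h2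
  -- Ellis: s contains an idempotent
  obtain ⟨u, hus, huu⟩ := exists_idempotent_in_compact_subsemigroup hmull s
    ⟨F 1, subset_closure ⟨1, Set.mem_setOf_eq ▸ le_refl 1, rfl⟩⟩ hscomp hsmul
  -- an idempotent surjection is the identity
  have hu_id : u = ContinuousMap.id X := by
    have husurj : Function.Surjective u := hsS hus
    ext x
    obtain ⟨y, rfl⟩ := husurj x
    have : u (u y) = u y := by
      have := congrArg (fun g : C(X, X) => g y) huu
      simpa [comp_mul_def] using this
    simpa using this
  rw [hu_id] at hus
  -- hence arbitrarily large n with F n close to id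
  have key : ∀ ε > (0 : ℝ), ∀ M : ℕ, ∃ n, M < n ∧ dist (F n) (ContinuousMap.id X) < ε := by
    intro ε hε M
    by_cases hper : ∃ N, 1 ≤ N ∧ F N = ContinuousMap.id X
    · obtain ⟨N, hN1, hNid⟩ := hper
      refine ⟨N * (M + 1), ?_, ?_⟩
      · calc M < M + 1 := Nat.lt_succ_self M
          _ ≤ N * (M + 1) := Nat.le_mul_of_pos_left _ hN1
      · have : F (N * (M + 1)) = ContinuousMap.id X := by
          ext x
          rw [hF]
          simp only [ContinuousMap.coe_mk, ContinuousMap.id_apply]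
          rw [Function.iterate_mul]
          have : f^[N] = id := congrArg (fun g : C(X, X) => ⇑g) hNid
          rw [this, Function.iterate_id, id]
        rw [this]
        simpa using hε
    · push_neg at hper
      -- all F n for 1 ≤ n ≤ M are at positive distance from id
      set T : Finset ℕ := (Finset.range (M + 1)).filter (1 ≤ ·) with hT
      have hpos : ∀ n ∈ T, 0 < dist (F n) (ContinuousMap.id X) := by
        intro n hn
        rw [hT, Finset.mem_filter] at hn
        exact dist_pos.mpr (hper n hn.2)
      set δ : ℝ := min ε (if h : T.Nonempty then T.inf' h (fun n => dist (F n) (ContinuousMap.id X)) else ε) with hδ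
      have hδpos : 0 < δ := by
        rw [hδ]
        refine lt_min hε ?_
        split
        · rename_i h
          exact (Finset.lt_inf'_iff h).mpr fun n hn => hpos n hn
        · exact hε
      -- get some element of A within δ of id
      obtain ⟨g, hgA, hgd⟩ := Metric.mem_closure_iff.mp hus δ hδpos
      obtain ⟨n, hn1, rfl⟩ := hgA
      rw [dist_comm] at hgd
      refine ⟨n, ?_, lt_of_lt_of_le hgd (by rw [hδ]; exact min_le_left _ _)⟩
      by_contra hle
      push_neg at hle
      have hnT : n ∈ T := by
        rw [hT, Finset.mem_filter, Finset.mem_range]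
        exact ⟨Nat.lt_succ_of_le hle, hn1⟩
      have : δ ≤ dist (F n) (ContinuousMap.id X) := by
        rw [hδ]
        refine le_trans (min_le_right _ _) ?_
        rw [dif_pos ⟨n, hnT⟩]
        exact Finset.inf'_le _ hnT
      exact absurd hgd (not_lt.mpr this)
  -- construct the sequence
  choose pick hpick1 hpick2 using fun (i : ℕ) (M : ℕ) =>
    key (1 / (i + 1) : ℝ) (by positivity) M
  set n : ℕ → ℕ := fun i => Nat.rec (pick 0 0) (fun i ih => pick (i + 1) ih) i with hn
  have hn0 : n 0 = pick 0 0 := rfl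
  have hnsucc : ∀ i, n (i + 1) = pick (i + 1) (n i) := fun i => rfl
  have hmono : StrictMono n := by
    apply strictMono_nat_of_lt_succ
    intro i
    rw [hnsucc]
    exact hpick1 (i + 1) (n i)
  have hposn : ∀ i, 0 < n i := by
    intro i
    induction i with
    | zero => rw [hn0]; exact hpick1 0 0
    | succ i ih => rw [hnsucc]; exact Nat.lt_of_le_of_lt (Nat.zero_le _) (hpick1 (i + 1) (n i))
  have hdist : ∀ i, dist (F (n i)) (ContinuousMap.id X) < 1 / (i + 1) := by
    intro i
    cases i with
    | zero => rw [hn0]; exact hpick2 0 0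
    | succ i => rw [hnsucc]; exact hpick2 (i + 1) (n i)
  refine ⟨n, hmono, hposn, ?_⟩
  rw [Metric.tendstoUniformly_iff]
  intro ε hε
  obtain ⟨N, hN⟩ := exists_nat_one_div_lt hε
  filter_upwards [eventually_ge_atTop N] with i hi x
  have h1 : dist (F (n i) x) (ContinuousMap.id X x) ≤ dist (F (n i)) (ContinuousMap.id X) :=
    ContinuousMap.dist_apply_le_dist x
  have h2 : (1 : ℝ) / (i + 1) ≤ 1 / (N + 1) := by
    apply one_div_le_one_div_of_le (by positivity)
    exact_mod_cast Nat.succ_le_succ hi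
  calc dist (id x) (f^[n i] x) = dist (F (n i) x) (ContinuousMap.id X x) := by
        rw [dist_comm]; rfl
    _ ≤ dist (F (n i)) (ContinuousMap.id X) := h1
    _ < 1 / (i + 1) := hdist i
    _ ≤ 1 / (N + 1) := h2
    _ < ε := hN
end

section
/- Let (X,f) be a uniformly retract-rigid dynamical system. If (X,f) has shadowing, then the set ⋂_{n∈ℕ} f^n(X) is totally disconnected. -/
open Filter

/-- The system `(X, f)` is uniformly retract-rigid: some subsequence of the iterates of `f`
converges uniformly to a retraction (a continuous idempotent map). -/
def UniformlyRetractRigid {X : Type*} [MetricSpace X] (f : X → X) : Prop :=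
  ∃ r : X → X, Continuous r ∧ r ∘ r = r ∧
    ∃ n : ℕ → ℕ, StrictMono n ∧ (∀ i, 0 < n i) ∧
      TendstoUniformly (fun i (x : X) => f^[n i] x) r atTop

/-- A strictly monotone sequence of positive naturals satisfies `m < n m`. -/
lemma strictMono_pos_lt {n : ℕ → ℕ} (hmono : StrictMono n) (hpos : ∀ i, 0 < n i) :
    ∀ m, m < n m := by
  intro m
  induction m with
  | zero => exact hpos 0
  | succ m ih => have := hmono (show m < m + 1 by omega); omega

/-- In a preconnected set, any two points can be joined by a `δ`-chain (extended to be
eventually constant). -/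
lemma chain_in_preconnected {X : Type*} [MetricSpace X] {C : Set X} (hC : IsPreconnected C)
    {δ : ℝ} (hδ : 0 < δ) {a b : X} (ha : a ∈ C) (hb : b ∈ C) :
    ∃ (k : ℕ) (z : ℕ → X), z 0 = a ∧ (∀ l, z l ∈ C) ∧
      (∀ l, dist (z l) (z (l + 1)) < δ) ∧ (∀ l, k ≤ l → z l = b) := by
  classical
  set Chained : X → Prop := fun q => ∃ (k : ℕ) (z : ℕ → X), z 0 = a ∧ z k = q ∧
      (∀ l, l ≤ k → z l ∈ C) ∧ (∀ l, l < k → dist (z l) (z (l + 1)) < δ) with hCh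
  have hext : ∀ p q, Chained p → q ∈ C → dist p q < δ → Chained q := by
    rintro p q ⟨k, z, h0, hk, hmem, hd⟩ hqC hpq
    refine ⟨k + 1, fun l => if l ≤ k then z l else q, by simp [h0], by simp, ?_, ?_⟩
    · intro l hl
      by_cases h : l ≤ k
      · simpa [h] using hmem l h
      · simpa [h] using hqC
    · intro l hl
      by_cases h : l < k
      · have h1 : l ≤ k := le_of_lt h
        have h2 : l + 1 ≤ k := h
        simpa [h1, h2] using hd l h
      · have hlk : l = k := by omega
        subst hlk
        have h1 : l ≤ l := le_rfl
        have h2 : ¬ (l + 1 ≤ l) := by omega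
        simpa [h1, h2, hk] using hpq
  have hcha : Chained a :=
    ⟨0, fun _ => a, rfl, rfl, fun l _ => ha, fun l hl => absurd hl (Nat.not_lt_zero l)⟩
  have hSb : Chained b := by
    by_contra hnb
    set U : Set X := ⋃ x ∈ {p | p ∈ C ∧ Chained p}, Metric.ball x δ with hU
    set V : Set X := ⋃ x ∈ {p | p ∈ C ∧ ¬ Chained p}, Metric.ball x δ with hV
    have hUo : IsOpen U := isOpen_biUnion fun _ _ => Metric.isOpen_ball
    have hVo : IsOpen V := isOpen_biUnion fun _ _ => Metric.isOpen_ball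
    have hsub : C ⊆ U ∪ V := by
      intro p hp
      by_cases h : Chained p
      · exact Or.inl (Set.mem_biUnion ⟨hp, h⟩ (Metric.mem_ball_self hδ))
      · exact Or.inr (Set.mem_biUnion ⟨hp, h⟩ (Metric.mem_ball_self hδ))
    have hCa : (C ∩ U).Nonempty :=
      ⟨a, ha, Set.mem_biUnion ⟨ha, hcha⟩ (Metric.mem_ball_self hδ)⟩
    have hCb : (C ∩ V).Nonempty :=
      ⟨b, hb, Set.mem_biUnion ⟨hb, hnb⟩ (Metric.mem_ball_self hδ)⟩
    obtain ⟨y, hyC, hyU, hyV⟩ := hC U V hUo hVo hsub hCa hCb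
    obtain ⟨x, hx, hyx⟩ := Set.mem_iUnion₂.1 hyU
    obtain ⟨x', hx', hyx'⟩ := Set.mem_iUnion₂.1 hyV
    have hy : Chained y := by
      apply hext x y hx.2 hyC
      rw [dist_comm]
      exact Metric.mem_ball.1 hyx
    have hx'c : Chained x' := hext y x' hy hx'.1 (Metric.mem_ball.1 hyx')
    exact hx'.2 hx'c
  obtain ⟨k, z, h0, hk, hmem, hd⟩ := hSb
  refine ⟨k, fun l => z (min l k), by simp [h0], fun l => hmem _ (min_le_right l k), ?_, ?_⟩
  · intro l
    show dist (z (min l k)) (z (min (l + 1) k)) < δ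
    rcases lt_or_ge l k with h | h
    · rw [min_eq_left (le_of_lt h), min_eq_left h]
      exact hd l h
    · rw [min_eq_right h, min_eq_right (le_trans h (Nat.le_succ l))]
      simpa using hδ
  · intro l hl
    show z (min l k) = b
    rw [min_eq_right hl]
    exact hk

/-- If a uniformly retract-rigid system `(X, f)` has shadowing, then `⋂ₙ fⁿ(X)` is totally
disconnected. -/
theorem retractRigid_shadowing_totallyDisconnected
    {X : Type*} [MetricSpace X] [CompactSpace X]
    (f : X → X) (hf : Continuous f)
    (hrr : UniformlyRetractRigid f) (hsh : HasShadowing f) :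
    IsTotallyDisconnected (⋂ n : ℕ, f^[n] '' Set.univ) := by
  classical
  obtain ⟨r, hrc, hrr2, n, hmono, hpos, hu⟩ := hrr
  -- r commutes with f
  have hcomm1 : ∀ x, r (f x) = f (r x) := by
    intro x
    have h1 : Tendsto (fun i => f^[n i] x) atTop (nhds (r x)) := hu.tendsto_at x
    have h2 : Tendsto (fun i => f^[n i] (f x)) atTop (nhds (r (f x))) := hu.tendsto_at (f x)
    have h3 : Tendsto (fun i => f (f^[n i] x)) atTop (nhds (f (r x))) :=
      (hf.tendsto (r x)).comp h1
    have h23 : (fun i => f^[n i] (f x)) = fun i => f (f^[n i] x) := by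
      funext i
      rw [← Function.iterate_succ_apply, Function.iterate_succ_apply']
    exact tendsto_nhds_unique (h23 ▸ h2) h3
  have hcomm : ∀ (m : ℕ) (x : X), r (f^[m] x) = f^[m] (r x) := by
    intro m
    induction m with
    | zero => intro x; simp
    | succ m ih =>
      intro x
      rw [Function.iterate_succ_apply, ih (f x), hcomm1 x, ← Function.iterate_succ_apply]
  -- every point of the eventual image is fixed by r
  have hfix : ∀ y ∈ ⋂ m : ℕ, f^[m] '' Set.univ, r y = y := by
    intro y hy
    have hpre : ∀ i : ℕ, ∃ p, f^[n i] p = y := by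
      intro i
      obtain ⟨p, -, hp⟩ := Set.mem_iInter.1 hy (n i)
      exact ⟨p, hp⟩
    choose p hp using hpre
    have hp2 : Tendsto (fun i => r (p i)) atTop (nhds y) := by
      rw [Metric.tendsto_atTop]
      intro ε hε
      obtain ⟨N, hN⟩ := Filter.eventually_atTop.1 ((Metric.tendstoUniformly_iff.1 hu) ε hε)
      refine ⟨N, fun i hi => ?_⟩
      have := hN i hi (p i)
      rwa [hp i] at this
    have h4 : Tendsto (fun i => r (r (p i))) atTop (nhds (r y)) := (hrc.tendsto y).comp hp2
    have h5 : (fun i => r (r (p i))) = fun i => r (p i) := by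
      funext i
      exact congrFun hrr2 (p i)
    exact tendsto_nhds_unique (h5 ▸ h4) hp2
  intro t hts hpc a ha b hb
  have key : ∀ ε > (0 : ℝ), dist a b ≤ 4 * ε := by
    intro ε hε
    obtain ⟨δ₀, hδ₀, hshad⟩ := hsh ε hε
    set δ : ℝ := min δ₀ ε with hδdef
    have hδ : 0 < δ := lt_min hδ₀ hε
    set η : ℝ := δ / 5 with hηdef
    have hη : 0 < η := by positivity
    obtain ⟨i₀, hi₀⟩ := Filter.eventually_atTop.1 ((Metric.tendstoUniformly_iff.1 hu) η hη)
    obtain ⟨k, z, hz0, hzC, hzd, hzb⟩ :=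
      chain_in_preconnected hpc (by positivity : (0:ℝ) < δ / 2) ha hb
    have hzfix : ∀ l, r (z l) = z l := fun l => hfix (z l) (hts (hzC l))
    set N : ℕ → ℕ := fun l => n (i₀ + l) with hN
    have hNmono : StrictMono N := fun p q h => hmono (by omega)
    have hNgt : ∀ l, l < N l := fun l =>
      lt_of_le_of_lt (Nat.le_add_left l i₀) (strictMono_pos_lt hmono hpos (i₀ + l))
    set G : ℕ → ℕ := fun s => Nat.findGreatest (fun l => N l ≤ s) s with hG
    have hGspec : ∀ s, N 0 ≤ s → N (G s) ≤ s := by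
      intro s hs
      simp only [hG]
      exact Nat.findGreatest_spec (P := fun l => N l ≤ s) (Nat.zero_le s) hs
    have hGmax : ∀ s m, N m ≤ s → m ≤ G s := by
      intro s m hm
      by_contra hc
      push_neg at hc
      exact (Nat.findGreatest_is_greatest hc (le_trans (le_of_lt (hNgt m)) hm)) hm
    have hGlt : ∀ s, s < N (G s + 1) := by
      intro s
      by_contra hc
      push_neg at hc
      have := hGmax s (G s + 1) hc
      omega
    have hGval : ∀ l, G (N l) = l := by
      intro l
      refine le_antisymm ?_ (hGmax _ _ le_rfl)
      by_contra hc
      push_neg at hc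
      have h2 := hGspec (N l) (hNmono.monotone (Nat.zero_le l))
      have h3 := hNmono hc
      omega
    -- dwell estimate
    have hdw : ∀ y, r y = y → ∀ j, i₀ ≤ j → dist (f^[n (j+1) - n j] y) y < 2 * η := by
      intro y hy j hj
      have hru : r (f^[n (j+1) - n j] y) = f^[n (j+1) - n j] y := by
        rw [hcomm, hy]
      have h1 : f^[n j] (f^[n (j+1) - n j] y) = f^[n (j+1)] y := by
        rw [← Function.iterate_add_apply]
        congr 1
        have := hmono (show j < j + 1 by omega)
        omega
      have hb1 : dist (f^[n (j+1) - n j] y) (f^[n j] (f^[n (j+1) - n j] y)) < η := by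
        have h := hi₀ j hj (f^[n (j+1) - n j] y)
        rwa [hru] at h
      have hb2 : dist (f^[n j] (f^[n (j+1) - n j] y)) y < η := by
        have h := hi₀ (j+1) (by omega) y
        rw [hy] at h
        rw [h1, dist_comm]
        exact h
      calc dist (f^[n (j+1) - n j] y) y
          ≤ dist (f^[n (j+1) - n j] y) (f^[n j] (f^[n (j+1) - n j] y))
            + dist (f^[n j] (f^[n (j+1) - n j] y)) y := dist_triangle _ _ _
        _ < η + η := add_lt_add hb1 hb2
        _ = 2 * η := by ring
    -- the pseudo-orbit
    set ps : ℕ → X := fun s => if s < N 0 then f^[s] a else f^[s - N (G s)] (z (G s)) with hps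
    have hps_at : ∀ l, ps (N l) = z l := by
      intro l
      have h1 : ¬ N l < N 0 := not_lt.2 (hNmono.monotone (Nat.zero_le l))
      simp only [hps, if_neg h1, hGval l, Nat.sub_self, Function.iterate_zero_apply]
    have hpo : ∀ s, dist (f (ps s)) (ps (s + 1)) < δ := by
      intro s
      by_cases h1 : s + 1 < N 0
      · have h2 : s < N 0 := by omega
        simp only [hps, if_pos h1, if_pos h2, ← Function.iterate_succ_apply' f s a, dist_self]
        exact hδ
      · push_neg at h1
        by_cases h2 : N (G (s + 1)) = s + 1
        · -- a jump happens at time s+1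
          have hxs1 : ps (s + 1) = z (G (s + 1)) := by
            have := hps_at (G (s + 1))
            rwa [h2] at this
          by_cases h3 : s < N 0
          · have hg0 : G (s + 1) = 0 := by
              have hle : N (G (s + 1)) ≤ N 0 := by omega
              have := hNmono.le_iff_le.1 hle
              omega
            have hfx : f (ps s) = f^[n i₀] a := by
              simp only [hps, if_pos h3]
              rw [(Function.iterate_succ_apply' f s a).symm.trans rfl]
              congr 1
              have h4 : s + 1 = N 0 := by omega
              rw [Nat.succ_eq_add_one, h4, hN]
              simp
            rw [hfx, hxs1, hg0, hz0]
            have hra : r a = a := hfix a (hts ha)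
            have h6 := hi₀ i₀ le_rfl a
            rw [hra] at h6
            rw [dist_comm]
            have hηδ : η ≤ δ := by rw [hηdef]; linarith
            calc dist a (f^[n i₀] a) < η := h6
              _ ≤ δ := hηδ
          · push_neg at h3
            have hl1 : N (G s) ≤ s := hGspec s h3
            have hl2 : s < N (G s + 1) := hGlt s
            have hgl : G (s + 1) = G s + 1 := by
              have h5 : G s < G (s + 1) := by
                have h7 : N (G s) < N (G (s + 1)) := by omega
                exact hNmono.lt_iff_lt.1 h7
              have h6 : G (s + 1) ≤ G s + 1 := by
                by_contra hc
                push_neg at hc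
                have h8 : N (G s + 1) < N (G (s + 1)) := hNmono (by omega)
                omega
              omega
            have hfx : f (ps s) = f^[N (G s + 1) - N (G s)] (z (G s)) := by
              simp only [hps, if_neg (not_lt.2 h3)]
              rw [(Function.iterate_succ_apply' f (s - N (G s)) (z (G s))).symm.trans rfl]
              congr 1
              have h9 : N (G s + 1) = s + 1 := by rw [← hgl]; exact h2
              omega
            rw [hfx, hxs1, hgl]
            have hD : N (G s + 1) - N (G s) = n ((i₀ + G s) + 1) - n (i₀ + G s) := rfl
            have hstep : dist (f^[N (G s + 1) - N (G s)] (z (G s))) (z (G s)) < 2 * η := by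
              rw [hD]
              exact hdw (z (G s)) (hzfix _) (i₀ + G s) (Nat.le_add_right _ _)
            calc dist (f^[N (G s + 1) - N (G s)] (z (G s))) (z (G s + 1))
                ≤ dist (f^[N (G s + 1) - N (G s)] (z (G s))) (z (G s))
                  + dist (z (G s)) (z (G s + 1)) := dist_triangle _ _ _
              _ < 2 * η + δ / 2 := add_lt_add hstep (hzd (G s))
              _ ≤ δ := by rw [hηdef]; linarith
        · -- no jump at time s+1
          have h4 : N (G (s + 1)) ≤ s := by
            have := hGspec (s + 1) h1
            omega
          have h6 : N 0 ≤ s := le_trans (hNmono.monotone (Nat.zero_le _)) h4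
          have h5 : G s = G (s + 1) := by
            apply le_antisymm
            · exact hGmax (s + 1) (G s) (le_trans (hGspec s h6) (Nat.le_succ s))
            · exact hGmax s (G (s + 1)) h4
          simp only [hps, if_neg (not_lt.2 h6), if_neg (not_lt.2 h1)]
          rw [← h5]
          have h7 : N (G s) ≤ s := hGspec s h6
          have h8 : s + 1 - N (G s) = (s - N (G s)) + 1 := by omega
          rw [h8, Function.iterate_succ_apply']
          simpa using hδ
    -- shadow the pseudo-orbit
    obtain ⟨w, hw⟩ := hshad ps (fun s => lt_of_lt_of_le (hpo s) (min_le_left _ _))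
    have w1 : dist (f^[N 0] w) a < ε := by
      have := hw (N 0)
      rwa [hps_at 0, hz0] at this
    have w2 : dist (f^[N k] w) b < ε := by
      have := hw (N k)
      rwa [hps_at k, hzb k le_rfl] at this
    have r1 : dist (r w) (f^[N 0] w) < η := by
      have := hi₀ i₀ le_rfl w
      simpa [hN] using this
    have r2 : dist (r w) (f^[N k] w) < η := by
      have := hi₀ (i₀ + k) (by omega) w
      simpa [hN] using this
    have hηε : η ≤ ε := by
      have h : δ ≤ ε := min_le_right _ _
      rw [hηdef]; linarith
    have t1 := dist_triangle a (r w) b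
    have t2 := dist_triangle a (f^[N 0] w) (r w)
    have t3 := dist_triangle (r w) (f^[N k] w) b
    have w1' : dist a (f^[N 0] w) < ε := by rwa [dist_comm] at w1
    have r1' : dist (f^[N 0] w) (r w) < η := by rwa [dist_comm] at r1
    linarith
  by_contra hab
  have hd : 0 < dist a b := dist_pos.2 hab
  have := key (dist a b / 8) (by positivity)
  linarith
end

section
/- Let X be a retract-rigid compact metric space and let r : X → X be a retraction (continuous with r ∘ r = r) with image R = r(X). Then the compact metric space R is rigid: for every continuous surjection g : R → R, the system (R,g) is uniformly rigid. -/
open Filter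

/-- A compact metric space `X` is retract-rigid if every continuous self-map is uniformly
retract-rigid. -/
def RetractRigidSpace (X : Type*) [MetricSpace X] : Prop :=
  ∀ f : X → X, Continuous f → UniformlyRetractRigid f

/-- If `X` is retract-rigid and `r : X → X` is a retraction with image `R`, then `R` is a
rigid space: every continuous surjection `g : R → R` is uniformly rigid, i.e. some
subsequence of the iterates of `g` converges uniformly to the identity of `R`. -/
theorem retractRigid_retract_is_rigid
    {X : Type*} [MetricSpace X] [CompactSpace X]
    (hX : RetractRigidSpace X)
    (r : X → X) (hr : Continuous r) (hrr : r ∘ r = r) :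
    ∀ g : Set.range r → Set.range r, Continuous g → Function.Surjective g →
      ∃ n : ℕ → ℕ, StrictMono n ∧ (∀ i, 0 < n i) ∧
        TendstoUniformly (fun i (x : Set.range r) => g^[n i] x) id atTop := by
  intro g hg hgs
  have hRc : IsCompact (Set.range r) := isCompact_range hr
  haveI : CompactSpace (Set.range r) := isCompact_iff_compactSpace.mp hRc
  have hRcl : IsClosed (Set.range r) := hRc.isClosed
  have hfix : ∀ y : Set.range r, r (y : X) = y := by
    rintro ⟨_, x, rfl⟩
    exact congrFun hrr x
  set r' : X → Set.range r := fun x => ⟨r x, ⟨x, rfl⟩⟩ with hr'def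
  have hr'c : Continuous r' := hr.subtype_mk _
  set f : X → X := fun x => (g (r' x) : X) with hf
  have hfc : Continuous f := continuous_subtype_val.comp ((hg.comp hr'c : Continuous (g ∘ r')))
  have hr'R : ∀ y : Set.range r, r' (y : X) = y := fun y => Subtype.ext (hfix y)
  have key : ∀ (k : ℕ) (y : Set.range r), f^[k] (y : X) = (g^[k] y : X) := by
    intro k
    induction k with
    | zero => intro y; rfl
    | succ k ih =>
      intro y
      rw [Function.iterate_succ_apply, Function.iterate_succ_apply]
      have hfy : f (y : X) = ((g y : Set.range r) : X) := by
        show (g (r' (y : X)) : X) = _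
        rw [hr'R]
      rw [hfy, ih]
  obtain ⟨s, hs, hss, n, hmono, hpos, hconv⟩ := hX f hfc
  have hsR : ∀ y : Set.range r, s (y : X) ∈ Set.range r := by
    intro y
    have ht : Tendsto (fun i => f^[n i] (y : X)) atTop (nhds (s y)) := hconv.tendsto_at y
    refine hRcl.mem_of_tendsto ht (Filter.Eventually.of_forall fun i => ?_)
    rw [key]
    exact (g^[n i] y).2
  set t : Set.range r → Set.range r := fun y => ⟨s (y : X), hsR y⟩ with htdef
  have htc : Continuous t := (hs.comp continuous_subtype_val).subtype_mk _
  have hconvR : TendstoUniformly (fun i (y : Set.range r) => g^[n i] y) t atTop := by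
    rw [Metric.tendstoUniformly_iff] at hconv ⊢
    intro ε hε
    filter_upwards [hconv ε hε] with i hi y
    have h := hi (y : X)
    rw [key] at h
    simpa [Subtype.dist_eq, t] using h
  have htt : ∀ y, t (t y) = t y := by
    intro y
    apply Subtype.ext
    exact congrFun hss (y : X)
  have hts : Function.Surjective t := by
    intro y
    have hcl : IsClosed (Set.range t) := (isCompact_range htc).isClosed
    have hy : y ∈ closure (Set.range t) := by
      rw [Metric.mem_closure_iff]
      intro ε hε
      rw [Metric.tendstoUniformly_iff] at hconvR
      obtain ⟨i, hi⟩ := (hconvR ε hε).exists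
      obtain ⟨x, hx⟩ := (hgs.iterate (n i)) y
      refine ⟨t x, ⟨x, rfl⟩, ?_⟩
      rw [← hx, dist_comm]
      exact hi x
    rwa [hcl.closure_eq] at hy
  have hid : t = id := by
    funext y
    obtain ⟨x, rfl⟩ := hts y
    exact htt x
  exact ⟨n, hmono, hpos, hid ▸ hconvR⟩
end

section
/- If X is a retract-rigid compact metric space, then X has only finitely many connected components. -/
open Filter

/-- A retract-rigid compact metric space has only finitely many connected components. -/
theorem retractRigid_finitely_many_components
    {X : Type*} [MetricSpace X] [CompactSpace X]
    (hX : RetractRigidSpace X) :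
    Finite (ConnectedComponents X) := by
  classical
  by_contra hfin
  -- Step B: there is a point whose connected component is not open.
  have hBopen : ¬ ∀ q : X, IsOpen (connectedComponent q) := by
    intro hall
    apply hfin
    obtain ⟨t, ht⟩ := IsCompact.elim_finite_subcover (isCompact_univ (X := X))
      (fun q : X => connectedComponent q) (fun q => hall q)
      (fun x _ => Set.mem_iUnion.2 ⟨x, mem_connectedComponent⟩)
    refine Finite.of_surjective
      (fun q : t => (ConnectedComponents.mk q : ConnectedComponents X)) ?_
    intro c
    obtain ⟨x, rfl⟩ := ConnectedComponents.surjective_coe c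
    obtain ⟨q, hq, hx⟩ := Set.mem_iUnion₂.1 (ht (Set.mem_univ x))
    exact ⟨⟨q, hq⟩, (ConnectedComponents.coe_eq_coe'.2 hx).symm⟩
  push_neg at hBopen
  obtain ⟨p₀, hp₀⟩ := hBopen
  rw [isOpen_iff_mem_nhds] at hp₀
  push_neg at hp₀
  obtain ⟨p, hp_mem, hp_nhds⟩ := hp₀
  have hcomp : connectedComponent p = connectedComponent p₀ := (connectedComponent_eq hp_mem).symm
  -- density of points outside the component of p
  have hdense : ∀ ε : ℝ, 0 < ε → ∃ y, dist y p < ε ∧ y ∉ connectedComponent p := by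
    intro ε hε
    by_contra h
    push_neg at h
    refine hp_nhds (Filter.mem_of_superset (Metric.ball_mem_nhds p hε) ?_)
    intro y hy
    rw [← hcomp]
    exact h y (Metric.mem_ball.1 hy)
  -- clopen separation
  have sep : ∀ y : X, ∃ U : Set X, IsClopen U ∧ p ∉ U ∧ (y ∉ connectedComponent p → y ∈ U) := by
    intro y
    by_cases hy : y ∈ connectedComponent p
    · exact ⟨∅, isClopen_empty, Set.notMem_empty p, fun h => absurd hy h⟩
    · rw [connectedComponent_eq_iInter_isClopen, Set.mem_iInter] at hy
      push_neg at hy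
      obtain ⟨⟨Z, hZ, hpZ⟩, hyZ⟩ := hy
      exact ⟨Zᶜ, hZ.compl, fun h => h hpZ, fun _ => hyZ⟩
  choose V hV1 hV2 hV3 using sep
  -- picking step
  have exstep : ∀ W : Set X, IsClosed W → p ∉ W → ∀ k : ℕ,
      ∃ y, dist y p < 1/(k+1) ∧ y ∉ connectedComponent p ∧ y ∉ W := by
    intro W hW hpW k
    obtain ⟨δ, hδ, hball⟩ := Metric.isOpen_iff.1 hW.isOpen_compl p hpW
    obtain ⟨y, hy1, hy2⟩ := hdense (min (1/(k+1)) δ) (lt_min (by positivity) hδ)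
    refine ⟨y, lt_of_lt_of_le hy1 (min_le_left _ _), hy2, fun hyW => ?_⟩
    exact hball (Metric.mem_ball.2 (lt_of_lt_of_le hy1 (min_le_right _ _))) hyW
  choose pick hpick1 hpick2 hpick3 using exstep
  -- recursive construction of points and growing clopen set
  let step : ℕ → X × {W : Set X // IsClopen W ∧ p ∉ W} → X × {W : Set X // IsClopen W ∧ p ∉ W} :=
    fun k st =>
      let y := pick st.2.1 st.2.2.1.isClosed st.2.2.2 (k+1)
      ⟨y, ⟨st.2.1 ∪ V y, (st.2.2.1.union (hV1 y)),
        fun h => h.elim st.2.2.2 (hV2 y)⟩⟩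
  let s : ℕ → X × {W : Set X // IsClopen W ∧ p ∉ W} := fun n => Nat.rec
    (⟨pick ∅ isClosed_empty (Set.notMem_empty p) 0,
      ⟨V (pick ∅ isClosed_empty (Set.notMem_empty p) 0),
        hV1 _, hV2 _⟩⟩) (fun k ih => step k ih) n
  let x : ℕ → X := fun n => (s n).1
  let W : ℕ → Set X := fun n => ((s n).2 : Set X)
  have hs0 : x 0 = pick ∅ isClosed_empty (Set.notMem_empty p) 0 := rfl
  have hW0 : W 0 = V (x 0) := rfl
  have hxs : ∀ k, x (k+1) = pick (W k) ((s k).2.2.1.isClosed) ((s k).2.2.2) (k+1) := fun k => rfl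
  have hWs : ∀ k, W (k+1) = W k ∪ V (x (k+1)) := fun k => rfl
  have hWclopen : ∀ k, IsClopen (W k) := fun k => (s k).2.2.1
  have hpW : ∀ k, p ∉ W k := fun k => (s k).2.2.2
  have hxcomp : ∀ k, x k ∉ connectedComponent p := by
    intro k
    cases k with
    | zero => exact (hpick2 _ _ _ _)
    | succ k => exact (hpick2 _ _ _ _)
  have hdist : ∀ k : ℕ, dist (x k) p < 1/(k+1) := by
    intro k
    cases k with
    | zero => exact hpick1 _ _ _ 0
    | succ k => exact hpick1 _ _ _ (k+1)
  have hxW : ∀ k, x (k+1) ∉ W k := fun k => hpick3 _ _ _ _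
  have hVsubW : ∀ k, V (x k) ⊆ W k := by
    intro k
    cases k with
    | zero => exact le_of_eq hW0.symm
    | succ k => rw [hWs k]; exact Set.subset_union_right
  have hWmono : ∀ m k, m ≤ k → W m ⊆ W k := by
    intro m k hmk
    induction k with
    | zero => simp_all
    | succ k ih =>
      by_cases h : m = k + 1
      · exact le_of_eq (by rw [h])
      · exact (ih (by omega)).trans (by rw [hWs k]; exact Set.subset_union_left)
  -- the disjoint clopen sets
  let U : ℕ → Set X := fun n => Nat.casesOn n (V (x 0)) (fun k => V (x (k+1)) \ W k)
  have hU0 : U 0 = V (x 0) := rfl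
  have hUs : ∀ k, U (k+1) = V (x (k+1)) \ W k := fun k => rfl
  have hUclopen : ∀ k, IsClopen (U k) := by
    intro k
    cases k with
    | zero => exact hV1 _
    | succ k => exact (hV1 _).diff (hWclopen k)
  have hxU : ∀ k, x k ∈ U k := by
    intro k
    cases k with
    | zero => exact hV3 _ (hxcomp 0)
    | succ k => exact ⟨hV3 _ (hxcomp (k+1)), hxW k⟩
  have hpU : ∀ k, p ∉ U k := by
    intro k
    cases k with
    | zero => exact hV2 _
    | succ k => exact fun h => hV2 _ h.1
  have hUsubV : ∀ k, U k ⊆ V (x k) := by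
    intro k
    cases k with
    | zero => exact le_of_eq rfl
    | succ k => exact Set.diff_subset
  have hUdisj : ∀ m k, m < k → ∀ q, q ∈ U m → q ∈ U k → False := by
    intro m k hmk q hqm hqk
    obtain ⟨j, rfl⟩ : ∃ j, k = j + 1 := ⟨k - 1, by omega⟩
    exact hqk.2 (hWmono m j (by omega) (hVsubW m (hUsubV m hqm)))
  have hUuniq : ∀ q m k, q ∈ U m → q ∈ U k → m = k := by
    intro q m k hm hk
    rcases lt_trichotomy m k with h | h | h
    · exact absurd (hUdisj m k h q hm hk) (fun h => h)
    · exact h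
    · exact absurd (hUdisj k m h q hk hm) (fun h => h)
  -- the map f
  let f : X → X := fun q => if h : ∃ k, q ∈ U (k+1) then x h.choose else p
  have hfU : ∀ k q, q ∈ U (k+1) → f q = x k := by
    intro k q hq
    have h : ∃ j, q ∈ U (j+1) := ⟨k, hq⟩
    have hc : h.choose = k := by
      have := hUuniq q (h.choose + 1) (k + 1) h.choose_spec hq
      omega
    show (if h : ∃ k, q ∈ U (k+1) then x h.choose else p) = x k
    rw [dif_pos h, hc]
  have hfp : ∀ q, (∀ k, q ∉ U (k+1)) → f q = p := by
    intro q hq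
    show (if h : ∃ k, q ∈ U (k+1) then x h.choose else p) = p
    rw [dif_neg]
    rintro ⟨k, hk⟩
    exact hq k hk
  -- continuity of f
  have hcont : Continuous f := by
    rw [Metric.continuous_iff]
    intro q ε hε
    by_cases hq : ∃ k, q ∈ U (k+1)
    · obtain ⟨k, hk⟩ := hq
      obtain ⟨δ, hδ, hball⟩ := Metric.isOpen_iff.1 (hUclopen (k+1)).isOpen q hk
      refine ⟨δ, hδ, fun z hz => ?_⟩
      rw [hfU k z (hball (Metric.mem_ball.2 hz)), hfU k q hk]
      simpa using hε
    · push_neg at hq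
      have hfq : f q = p := hfp q hq
      obtain ⟨N, hN⟩ := exists_nat_one_div_lt hε
      have hclosed : IsClosed (⋃ m ∈ Finset.range (N+1), U (m+1)) :=
        Set.Finite.isClosed_biUnion (Finset.finite_toSet _) (fun m _ => (hUclopen (m+1)).isClosed)
      have hqC : q ∉ ⋃ m ∈ Finset.range (N+1), U (m+1) := by
        simp only [Set.mem_iUnion]
        rintro ⟨m, _, hm⟩
        exact hq m hm
      obtain ⟨δ, hδ, hball⟩ := Metric.isOpen_iff.1 hclosed.isOpen_compl q hqC
      refine ⟨δ, hδ, fun z hz => ?_⟩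
      rw [hfq]
      by_cases hzU : ∃ k, z ∈ U (k+1)
      · obtain ⟨k, hk⟩ := hzU
        rw [hfU k z hk]
        have hNk : N ≤ k := by
          by_contra hc
          push_neg at hc
          exact hball (Metric.mem_ball.2 hz)
            (Set.mem_biUnion (Finset.mem_range.2 (by omega)) hk)
        calc dist (x k) p < 1/(k+1) := hdist k
          _ ≤ 1/(N+1) := by
              apply one_div_le_one_div_of_le (by positivity)
              exact_mod_cast Nat.succ_le_succ hNk
          _ < ε := hN
      · push_neg at hzU
        rw [hfp z hzU]
        simpa using hε
  -- dynamics of f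
  have hfx0 : f (x 0) = p := by
    refine hfp _ (fun k hk => ?_)
    exact hUdisj 0 (k+1) (Nat.succ_pos k) (x 0) (hxU 0) hk
  have hfxs : ∀ k, f (x (k+1)) = x k := fun k => hfU k _ (hxU (k+1))
  have hfpfix : f p = p := hfp _ (fun k => hpU (k+1))
  have hiter_p : ∀ k, f^[k] p = p := fun k => Function.iterate_fixed hfpfix k
  have hiter_x : ∀ k, f^[k] (x k) = x 0 := by
    intro k
    induction k with
    | zero => rfl
    | succ k ih => rw [Function.iterate_succ_apply, hfxs k, ih]
  have hiter_big : ∀ m k, m < k → f^[k] (x m) = p := by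
    intro m k hmk
    obtain ⟨j, rfl⟩ : ∃ j, k = j + (m+1) := ⟨k - (m+1), by omega⟩
    rw [Function.iterate_add_apply, Function.iterate_succ_apply', hiter_x m, hfx0, hiter_p]
  -- apply retract-rigidity
  obtain ⟨r, hr_cont, hr_idem, n, hmono, hpos, hunif⟩ := hX f hcont
  have hrx : ∀ m, r (x m) = p := by
    intro m
    have h1 : Tendsto (fun i => f^[n i] (x m)) atTop (nhds (r (x m))) := hunif.tendsto_at (x m)
    have h2 : Tendsto (fun i => f^[n i] (x m)) atTop (nhds p) := by
      refine (tendsto_const_nhds : Tendsto (fun _ : ℕ => p) atTop (nhds p)).congr' ?_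
      filter_upwards [Filter.eventually_ge_atTop (m+1)] with i hi
      exact (hiter_big m (n i) (lt_of_lt_of_le (Nat.lt_succ_of_le (le_refl m))
        (le_trans hi (hmono.le_apply)))).symm
    exact tendsto_nhds_unique h1 h2
  have hne : 0 < dist (x 0) p :=
    dist_pos.2 (fun h => hxcomp 0 (h ▸ mem_connectedComponent))
  obtain ⟨i, hi⟩ := (Metric.tendstoUniformly_iff.1 hunif (dist (x 0) p) hne).exists
  have hcontr := hi (x (n i))
  rw [hrx, hiter_x, dist_comm] at hcontr
  exact lt_irrefl _ hcontr
end

section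
/- Let X be a retract-rigid compact metric space and let f : X → X be a continuous map such that the set ⋂_{n∈ℕ} f^n(X) is infinite. Then the system (X,f) does not have shadowing. -/
open Filter

open Topology

set_option linter.unusedSectionVars false
set_option maxHeartbeats 1000000


section ChainAux
variable {X : Type*} [MetricSpace X]

/-- Points reachable from `q` by finite chains with steps `< d` consisting of `r`-fixed points,
encoded as eventually-constant sequences. -/
def RChain (r : X → X) (d : ℝ) (q : X) : Set X :=
  {b | ∃ (m : ℕ) (y : ℕ → X), y 0 = q ∧ (∀ t, r (y t) = y t) ∧
    (∀ t, dist (y t) (y (t + 1)) < d) ∧ ∀ t, m ≤ t → y t = b}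

lemma rchain_self {r : X → X} {d : ℝ} {q : X} (hd : 0 < d) (hq : r q = q) :
    q ∈ RChain r d q :=
  ⟨0, fun _ => q, rfl, fun _ => hq, fun _ => by simpa using hd, fun _ _ => rfl⟩

lemma rchain_fixed {r : X → X} {d : ℝ} {q b : X} (hb : b ∈ RChain r d q) : r b = b := by
  obtain ⟨m, y, -, hF, -, hst⟩ := hb
  rw [← hst m le_rfl]; exact hF m

lemma rchain_extend {r : X → X} {d : ℝ} {q b c : X} (hb : b ∈ RChain r d q)
    (hc : r c = c) (hbc : dist b c < d) : c ∈ RChain r d q := by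
  obtain ⟨m, y, h0, hF, hs, hst⟩ := hb
  refine ⟨m + 1, fun t => if t ≤ m then y t else c, by simp [h0], ?_, ?_, ?_⟩
  · intro t
    by_cases h : t ≤ m
    · simp [h, hF t]
    · simp [h, hc]
  · intro t
    by_cases h1 : t + 1 ≤ m
    · have h2 : t ≤ m := by omega
      simp only [if_pos h1, if_pos h2]
      exact hs t
    · by_cases h2 : t ≤ m
      · have ht : t = m := by omega
        subst ht
        simp only [if_pos h2, if_neg h1]
        rw [hst t le_rfl]
        exact hbc
      · simp only [if_neg h1, if_neg h2, dist_self]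
        exact lt_of_le_of_lt dist_nonneg hbc
  · intro t ht
    have : ¬ t ≤ m := by omega
    simp [this]

lemma rchain_isClosed {r : X → X} {d : ℝ} {q : X} (hr : Continuous r) (hd : 0 < d) :
    IsClosed (RChain r d q) := by
  rw [← isOpen_compl_iff, Metric.isOpen_iff]
  intro x hx
  by_cases hfix : r x = x
  · refine ⟨d, hd, fun u hu hmem => hx ?_⟩
    exact rchain_extend hmem hfix (Metric.mem_ball.1 hu)
  · have hFc : IsClosed {v : X | r v = v} := isClosed_eq hr continuous_id
    obtain ⟨ρ, hρ, hball⟩ := Metric.isOpen_iff.1 hFc.isOpen_compl x hfix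
    exact ⟨ρ, hρ, fun u hu hmem => (hball hu) (rchain_fixed hmem)⟩

lemma rchain_preimage_isOpen {r : X → X} {d : ℝ} {q : X} (hr : Continuous r)
    (hrr : ∀ x, r (r x) = r x) (hd : 0 < d) : IsOpen (r ⁻¹' RChain r d q) := by
  rw [Metric.isOpen_iff]
  intro x hx
  obtain ⟨ρ, hρ, hcont⟩ := Metric.continuousAt_iff.1 hr.continuousAt d hd
  refine ⟨ρ, hρ, fun u hu => ?_⟩
  exact rchain_extend hx (hrr u) (by rw [dist_comm]; exact hcont (Metric.mem_ball.1 hu))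

end ChainAux

section Rigid
variable {X : Type*} [MetricSpace X] [CompactSpace X]


/-- If `f^[n i] → r` uniformly and `r` is idempotent and continuous then for `N ≥ 1`,
`f^[N * n j] x → r x` pointwise. -/
lemma iterate_mul_tendsto {f r : X → X} (hr : Continuous r)
    (hrr : ∀ x, r (r x) = r x) {n : ℕ → ℕ}
    (hconv : TendstoUniformly (fun i (x : X) => f^[n i] x) r atTop)
    {N : ℕ} (hN : 0 < N) (x : X) :
    Tendsto (fun j => f^[N * n j] x) atTop (𝓝 (r x)) := by
  suffices h : ∀ (M : ℕ) (x : X),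
      Tendsto (fun j => f^[(M + 1) * n j] x) atTop (𝓝 (r x)) by
    obtain ⟨M, rfl⟩ : ∃ M, N = M + 1 := ⟨N - 1, by omega⟩
    exact h M x
  intro M
  induction M with
  | zero => intro x; simpa using hconv.tendsto_at x
  | succ M ih =>
    intro x
    have hu : Tendsto (fun j => f^[(M + 1) * n j] x) atTop (𝓝 (r x)) := ih x
    have heq : ∀ j, f^[(M + 2) * n j] x = f^[n j] (f^[(M + 1) * n j] x) := by
      intro j
      rw [← Function.iterate_add_apply]
      congr 1
      ring
    rw [Metric.tendsto_nhds]
    intro ε hε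
    have E1 : ∀ᶠ j in atTop, ∀ y, dist (r y) (f^[n j] y) < ε / 2 :=
      Metric.tendstoUniformly_iff.1 hconv (ε / 2) (by linarith)
    have E2' : Tendsto (fun j => r (f^[(M + 1) * n j] x)) atTop (𝓝 (r x)) := by
      have := (hr.tendsto (r x)).comp hu
      rwa [hrr] at this
    have E2 : ∀ᶠ j in atTop, dist (r (f^[(M + 1) * n j] x)) (r x) < ε / 2 :=
      Metric.tendsto_nhds.1 E2' (ε / 2) (by linarith)
    filter_upwards [E1, E2] with j h1 h2
    rw [heq j]
    calc dist (f^[n j] (f^[(M + 1) * n j] x)) (r x)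
        ≤ dist (f^[n j] (f^[(M + 1) * n j] x)) (r (f^[(M + 1) * n j] x))
            + dist (r (f^[(M + 1) * n j] x)) (r x) := dist_triangle _ _ _
      _ < ε / 2 + ε / 2 := by
          have := h1 (f^[(M + 1) * n j] x)
          rw [dist_comm] at this
          exact add_lt_add this h2
      _ = ε := by ring

/-- Key lemma: with shadowing, any two `r`-fixed points joined by a `δ`-chain of
`r`-fixed points are `ε`-close. -/
lemma chain_close {f r : X → X} (hr : Continuous r)
    (hrr : ∀ x, r (r x) = r x) {n : ℕ → ℕ} (hmono : StrictMono n) (hpos : ∀ i, 0 < n i)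
    (hconv : TendstoUniformly (fun i (x : X) => f^[n i] x) r atTop)
    (hshad : HasShadowing f) :
    ∀ ε > (0 : ℝ), ∃ δ > (0 : ℝ), ∀ (a b : X) (m : ℕ) (y : ℕ → X),
      y 0 = a → (∀ t, r (y t) = y t) → (∀ t, dist (y t) (y (t + 1)) < δ) →
      (∀ t, m ≤ t → y t = b) → dist a b < ε := by
  intro ε hε
  have hruc : UniformContinuous r := CompactSpace.uniformContinuous_of_continuous hr
  obtain ⟨ε₁, hε₁, hε₁prop⟩ := Metric.uniformContinuous_iff.1 hruc (ε / 2) (by linarith)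
  set ε₂ := min ε₁ (ε / 2) with hε₂def
  have hε₂ : 0 < ε₂ := lt_min hε₁ (by linarith)
  obtain ⟨δ, hδ, hsh⟩ := hshad ε₂ hε₂
  refine ⟨δ / 2, by linarith, ?_⟩
  intro a b m y hy0 hyF hystep hyb
  -- choose N = n i with f^[N] ≈ r within δ/2
  obtain ⟨i, hi⟩ := (Metric.tendstoUniformly_iff.1 hconv (δ / 2) (by linarith)).exists
  set N := n i with hNdef
  have hN0 : 0 < N := hpos i
  -- the pseudo-orbit
  set x : ℕ → X := fun j => f^[j % N] (y (j / N)) with hxdef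
  have hpseudo : ∀ j, dist (f (x j)) (x (j + 1)) < δ := by
    intro j
    have hdm : N * (j / N) + j % N = j := Nat.div_add_mod j N
    have hc : j % N < N := Nat.mod_lt _ hN0
    by_cases hcc : j % N + 1 < N
    · have h1 : j + 1 = N * (j / N) + (j % N + 1) := by omega
      have hmod : (j + 1) % N = j % N + 1 := by
        rw [h1, Nat.mul_add_mod, Nat.mod_eq_of_lt hcc]
      have hdiv : (j + 1) / N = j / N := by
        rw [h1, Nat.mul_add_div hN0, Nat.div_eq_of_lt hcc, Nat.add_zero]
      have : f (x j) = x (j + 1) := by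
        simp only [hxdef, hmod, hdiv]
        exact (Function.iterate_succ_apply' f (j % N) _).symm
      rw [this, dist_self]
      exact hδ
    · have hceq : j % N + 1 = N := by omega
      have h1 : j + 1 = N * (j / N + 1) := by
        have : N * (j / N + 1) = N * (j / N) + N := by ring
        omega
      have hmod : (j + 1) % N = 0 := by rw [h1]; exact Nat.mul_mod_right _ _
      have hdiv : (j + 1) / N = j / N + 1 := by
        rw [h1]; exact Nat.mul_div_cancel_left _ hN0
      have hfx : f (x j) = f^[N] (y (j / N)) := by
        have h := Function.iterate_succ_apply' f (j % N) (y (j / N))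
        rw [Nat.succ_eq_add_one, hceq] at h
        simp only [hxdef]
        exact h.symm
      have hx1 : x (j + 1) = y (j / N + 1) := by
        simp only [hxdef, hmod, hdiv, Function.iterate_zero_apply]
      rw [hfx, hx1]
      calc dist (f^[N] (y (j / N))) (y (j / N + 1))
          ≤ dist (f^[N] (y (j / N))) (y (j / N)) + dist (y (j / N)) (y (j / N + 1)) :=
            dist_triangle _ _ _
        _ < δ / 2 + δ / 2 := by
            refine add_lt_add ?_ (hystep _)
            have := hi (y (j / N))
            rw [hyF (j / N)] at this
            rw [dist_comm]
            exact this
        _ = δ := by ring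
  obtain ⟨z, hz⟩ := hsh x hpseudo
  -- z is close to a
  have hx0 : x 0 = a := by
    simp only [hxdef, Nat.zero_mod, Nat.zero_div, Function.iterate_zero_apply, hy0]
  have hza : dist z a < ε₂ := by
    have := hz 0
    rwa [Function.iterate_zero_apply, hx0] at this
  have hra : r a = a := by rw [← hy0]; exact hyF 0
  have hrza : dist (r z) a < ε / 2 := by
    have : dist (r z) (r a) < ε / 2 := hε₁prop (lt_of_lt_of_le hza (min_le_left _ _))
    rwa [hra] at this
  -- r z is close to b
  have hL : Tendsto (fun j => f^[N * n j] z) atTop (𝓝 (r z)) :=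
    iterate_mul_tendsto hr hrr hconv hN0 z
  have hrzb : dist (r z) b ≤ ε₂ := by
    have hLd : Tendsto (fun j => dist (f^[N * n j] z) b) atTop (𝓝 (dist (r z) b)) :=
      hL.dist tendsto_const_nhds
    refine le_of_tendsto hLd ?_
    filter_upwards [eventually_ge_atTop m] with j hj
    have hnb : x (N * n j) = b := by
      have h1 : (N * n j) % N = 0 := Nat.mul_mod_right _ _
      have h2 : (N * n j) / N = n j := Nat.mul_div_cancel_left _ hN0
      simp only [hxdef, h1, h2, Function.iterate_zero_apply]
      exact hyb _ (le_trans hj hmono.le_apply)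
    have := hz (N * n j)
    rw [hnb] at this
    exact le_of_lt this
  calc dist a b ≤ dist a (r z) + dist (r z) b := dist_triangle _ _ _
    _ < ε / 2 + ε / 2 := by
        refine add_lt_add_of_lt_of_le ?_ (le_trans hrzb (min_le_right _ _))
        rw [dist_comm]
        exact hrza
    _ = ε := by ring

end Rigid

section Acc
variable {X : Type*} [MetricSpace X] [CompactSpace X]

/-- The core is contained in the fixed point set of the limit retraction. -/
lemma core_subset_fix {f r : X → X} (hr : Continuous r) (hrr : ∀ x, r (r x) = r x)
    {n : ℕ → ℕ} (hconv : TendstoUniformly (fun i (x : X) => f^[n i] x) r atTop) :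
    (⋂ m : ℕ, f^[m] '' Set.univ) ⊆ {x : X | r x = x} := by
  intro x hx
  have hx' : ∀ i : ℕ, ∃ y, f^[n i] y = x := by
    intro i
    obtain ⟨y, -, hy⟩ := Set.mem_iInter.1 hx (n i)
    exact ⟨y, hy⟩
  choose y hy using hx'
  obtain ⟨v, -, φ, hφ, hv⟩ := IsCompact.tendsto_subseq (isCompact_univ) (x := y)
    (fun i => Set.mem_univ _)
  have h1 : Tendsto (fun k => r (y (φ k))) atTop (𝓝 (r v)) := (hr.tendsto v).comp hv
  have h2 : Tendsto (fun k => dist (r (y (φ k))) x) atTop (𝓝 0) := by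
    rw [Metric.tendsto_atTop]
    intro ε hε
    obtain ⟨I, hI⟩ := eventually_atTop.1 (Metric.tendstoUniformly_iff.1 hconv ε hε)
    refine ⟨I, fun k hk => ?_⟩
    have hd : dist (r (y (φ k))) (f^[n (φ k)] (y (φ k))) < ε :=
      hI (φ k) (le_trans hk hφ.le_apply) (y (φ k))
    rw [hy (φ k)] at hd
    simpa [Real.dist_eq, abs_of_nonneg dist_nonneg] using hd
  have h3 : Tendsto (fun k => r (y (φ k))) atTop (𝓝 x) := tendsto_iff_dist_tendsto_zero.2 h2
  have hxv : x = r v := tendsto_nhds_unique h3 h1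
  show r x = x
  rw [hxv, hrr]

/-- An infinite fixed point set has an accumulation point. -/
lemma exists_acc_point {r : X → X} (hr : Continuous r)
    (hFinf : {x : X | r x = x}.Infinite) :
    ∃ p, r p = p ∧ ∀ β > (0 : ℝ), ∃ c, r c = c ∧ c ≠ p ∧ dist c p < β := by
  set F := {x : X | r x = x} with hFdef
  have hFclosed : IsClosed F := isClosed_eq hr continuous_id
  let emb := Set.Infinite.natEmbedding F hFinf
  set c : ℕ → X := fun i => (emb i : X) with hcdef
  have hcF : ∀ i, c i ∈ F := fun i => (emb i).2
  have hcinj : Function.Injective c := fun i j h =>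
    emb.injective (Subtype.ext h)
  obtain ⟨p, -, φ, hφ, hp⟩ := IsCompact.tendsto_subseq (isCompact_univ) (x := c)
    (fun i => Set.mem_univ _)
  have hpF : p ∈ F := hFclosed.mem_of_tendsto hp
    (Eventually.of_forall fun k => hcF (φ k))
  refine ⟨p, hpF, fun β hβ => ?_⟩
  obtain ⟨K, hK⟩ := eventually_atTop.1 (Metric.tendsto_nhds.1 hp β hβ)
  by_cases hcp : c (φ K) = p
  · refine ⟨c (φ (K + 1)), hcF _, ?_, hK (K + 1) (by omega)⟩
    intro h
    exact (by omega : ¬ (K : ℕ) = K + 1)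
      (hφ.injective (hcinj (h.trans hcp.symm)).symm)
  · exact ⟨c (φ K), hcF _, hcp, hK K le_rfl⟩

/-- Recursive construction of a sequence of fixed points rapidly converging to `p`. -/
lemma exists_good_seq {r : X → X} {p : X}
    (hacc : ∀ β > (0 : ℝ), ∃ c, r c = c ∧ c ≠ p ∧ dist c p < β) :
    ∃ q : ℕ → X, (∀ k, r (q k) = q k) ∧ (∀ k, q k ≠ p) ∧
      (∀ k, dist (q (k + 1)) p < min (dist (q k) p / 4) (1 / ((k : ℝ) + 1))) := by
  choose pickc hp1 hp2 hp3 using fun β (hβ : (0:ℝ) < β) => hacc β hβ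
  have hstep : ∀ (u : {x : X // r x = x ∧ x ≠ p}) (k : ℕ),
      0 < min (dist u.1 p / 4) (1 / ((k : ℝ) + 1)) := by
    intro u k
    exact lt_min (div_pos (dist_pos.2 u.2.2) (by norm_num)) (by positivity)
  let step : {x : X // r x = x ∧ x ≠ p} → ℕ → {x : X // r x = x ∧ x ≠ p} := fun u k =>
    ⟨pickc _ (hstep u k), hp1 _ (hstep u k), hp2 _ (hstep u k)⟩
  let Q : ℕ → {x : X // r x = x ∧ x ≠ p} := fun k => Nat.rec
    ⟨pickc 1 one_pos, hp1 1 one_pos, hp2 1 one_pos⟩ (fun k ih => step ih k) k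
  refine ⟨fun k => (Q k).1, fun k => (Q k).2.1, fun k => (Q k).2.2, fun k => ?_⟩
  exact hp3 _ (hstep (Q k) k)

end Acc

/-- If `X` is retract-rigid and `f : X → X` is a continuous map with `⋂ₙ fⁿ(X)` infinite,
then `(X, f)` does not have shadowing. -/
theorem retractRigid_infinite_core_no_shadowing
    {X : Type*} [MetricSpace X] [CompactSpace X]
    (hX : RetractRigidSpace X)
    (f : X → X) (hf : Continuous f)
    (hinf : (⋂ n : ℕ, f^[n] '' Set.univ).Infinite) :
    ¬ HasShadowing f := by
  intro hshad
  obtain ⟨r, hr, hrrc, n, hmono, hpos, hconv⟩ := hX f hf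
  have hrr : ∀ x, r (r x) = r x := fun x => congrFun hrrc x
  have hFinf : {x : X | r x = x}.Infinite := hinf.mono (core_subset_fix hr hrr hconv)
  obtain ⟨p, hpF, hacc⟩ := exists_acc_point hr hFinf
  obtain ⟨q, hqF, hqne, hqrec⟩ := exists_good_seq hacc
  set e : ℕ → ℝ := fun k => dist (q k) p / 2 with hedef
  have hdqp : ∀ k, dist (q k) p = 2 * e k := fun k => by simp only [hedef]; ring
  have hepos : ∀ k, 0 < e k := fun k => by
    have := dist_pos.2 (hqne k)
    simp only [hedef]; linarith
  have heq4 : ∀ k, e (k + 1) < e k / 4 := fun k => by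
    have h := lt_of_lt_of_le (hqrec k) (min_le_left _ _)
    simp only [hedef]; linarith
  have heanti : Antitone e := antitone_nat_of_succ_le
    (fun k => le_of_lt (lt_of_lt_of_le (heq4 k) (by linarith [hepos k])))
  -- the key consequence of shadowing
  have key := chain_close hr hrr hmono hpos hconv hshad
  choose dlt hdpos hdprop using key
  set U : ℕ → Set X := fun k => RChain r (dlt (e k) (hepos k)) (q k) with hUdef
  have hqU : ∀ k, q k ∈ U k := fun k => rchain_self (hdpos _ _) (hqF k)
  have hUball : ∀ k, ∀ b ∈ U k, dist (q k) b < e k := by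
    intro k b hb
    obtain ⟨m, y, h0, hFx, hs, hst⟩ := hb
    exact hdprop (e k) (hepos k) (q k) b m y h0 hFx hs hst
  have hUclosed : ∀ k, IsClosed (U k) := fun k => rchain_isClosed hr (hdpos _ _)
  have hUopen : ∀ k, IsOpen (r ⁻¹' U k) := fun k => rchain_preimage_isOpen hr hrr (hdpos _ _)
  have hpU : ∀ k, p ∉ U k := by
    intro k h
    have h1 := hUball k p h
    have h2 := hdqp k
    linarith [hepos k]
  have hUlow : ∀ k, ∀ u ∈ U k, e k < dist u p := by
    intro k u hu
    have h1 := hUball k u hu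
    have h3 := dist_triangle (q k) u p
    linarith [hdqp k]
  have hUhigh : ∀ k, ∀ u ∈ U k, dist u p < 3 * e k := by
    intro k u hu
    have h1 := hUball k u hu
    have h3 := dist_triangle u (q k) p
    rw [dist_comm u (q k)] at h3
    linarith [hdqp k]
  have hdisj : ∀ k m, k < m → ∀ u, u ∈ U k → u ∈ U m → False := by
    intro k m hkm u hk hm
    have h1 := hUlow k u hk
    have h2 := hUhigh m u hm
    have h3 : e m ≤ e (k + 1) := heanti hkm
    have h4 := heq4 k
    have h5 := hepos m
    linarith
  have hdisj' : ∀ k m, k ≠ m → ∀ u, u ∈ U k → u ∈ U m → False := by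
    intro k m hkm u hk hm
    rcases Nat.lt_or_ge k m with h | h
    · exact hdisj k m h u hk hm
    · exact hdisj m k (by omega) u hm hk
  -- the collapse-shift map g
  obtain ⟨g, hg1, hg0⟩ : ∃ g : X → X, (∀ x k, r x ∈ U (k + 1) → g x = q k) ∧
      (∀ x, (∀ k, r x ∉ U (k + 1)) → g x = p) := by
    classical
    refine ⟨fun x => if h : ∃ k, r x ∈ U (k + 1) then q h.choose else p, ?_, ?_⟩
    · intro x k hk
      have hex : ∃ k, r x ∈ U (k + 1) := ⟨k, hk⟩
      simp only [dif_pos hex]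
      have hc := hex.choose_spec
      rcases Nat.lt_trichotomy hex.choose k with h | h | h
      · exact absurd hk (fun hk' => hdisj (hex.choose + 1) (k + 1) (by omega) _ hc hk')
      · rw [h]
      · exact absurd hk (fun hk' => hdisj (k + 1) (hex.choose + 1) (by omega) _ hk' hc)
    · intro x hx
      exact dif_neg (by rintro ⟨k, hk⟩; exact hx k hk)
  have hgq : ∀ k, g (q (k + 1)) = q k := by
    intro k
    exact hg1 _ k (by rw [hqF]; exact hqU (k + 1))
  have hgq0 : g (q 0) = p := by
    refine hg0 _ (fun k hk => ?_)
    rw [hqF] at hk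
    exact hdisj 0 (k + 1) (by omega) _ (hqU 0) hk
  have hgp : g p = p := by
    refine hg0 _ (fun k hk => ?_)
    rw [hpF] at hk
    exact hpU (k + 1) hk
  have hgiter : ∀ k, g^[k] (q k) = q 0 := by
    intro k
    induction k with
    | zero => rfl
    | succ k ih =>
      rw [Function.iterate_succ_apply, hgq k, ih]
  have hgdesc : ∀ k, ∀ x : X, r x ∈ U k → g^[k + 1] x = p := by
    intro k
    induction k with
    | zero =>
      intro x hx
      show g x = p
      exact hg0 x (fun m hm => hdisj 0 (m + 1) (by omega) _ hx hm)
    | succ k ih =>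
      intro x hx
      have h1 : g x = q k := hg1 x k hx
      rw [Function.iterate_succ_apply, h1]
      exact ih (q k) (by rw [hqF]; exact hqU k)
  have hgev : ∀ x : X, ∃ K, ∀ k, K ≤ k → g^[k] x = p := by
    intro x
    by_cases h : ∃ m, r x ∈ U m
    · obtain ⟨m, hm⟩ := h
      refine ⟨m + 1, fun k hk => ?_⟩
      obtain ⟨l, rfl⟩ : ∃ l, k = l + (m + 1) := ⟨k - (m + 1), by omega⟩
      rw [Function.iterate_add_apply, hgdesc m x hm, Function.iterate_fixed hgp]
    · push_neg at h
      refine ⟨1, fun k hk => ?_⟩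
      obtain ⟨l, rfl⟩ : ∃ l, k = l + 1 := ⟨k - 1, by omega⟩
      rw [Function.iterate_add_apply]
      have : g x = p := hg0 x (fun m hm => h (m + 1) hm)
      simp only [Function.iterate_one, this]
      exact Function.iterate_fixed hgp l
  -- smallness of q k for large k
  have hqsmall : ∀ ε > (0 : ℝ), ∃ M : ℕ, ∀ k, M ≤ k → dist (q k) p < ε := by
    intro ε hε
    obtain ⟨n₀, hn₀⟩ := exists_nat_one_div_lt hε
    refine ⟨n₀ + 1, fun k hk => ?_⟩
    obtain ⟨l, rfl⟩ : ∃ l, k = l + 1 := ⟨k - 1, by omega⟩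
    have h1 : dist (q (l + 1)) p < 1 / ((l : ℝ) + 1) :=
      lt_of_lt_of_le (hqrec l) (min_le_right _ _)
    have h2 : (1 : ℝ) / ((l : ℝ) + 1) ≤ 1 / ((n₀ : ℝ) + 1) := by
      apply one_div_le_one_div_of_le (by positivity)
      have : (n₀ : ℝ) ≤ (l : ℝ) := by exact_mod_cast (by omega : n₀ ≤ l)
      linarith
    linarith
  -- continuity of g
  have hgcont : Continuous g := by
    rw [continuous_iff_continuousAt]
    intro x
    by_cases h1 : ∃ k, r x ∈ U (k + 1)
    · obtain ⟨k, hk⟩ := h1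
      have hev : ∀ᶠ x' in 𝓝 x, g x' = q k :=
        eventually_of_mem ((hUopen (k + 1)).mem_nhds hk) (fun x' hx' => hg1 x' k hx')
      exact continuousAt_const.congr (hev.mono (fun x' hx' => hx'.symm))
    · by_cases h0 : r x ∈ U 0
      · have hev : ∀ᶠ x' in 𝓝 x, g x' = p := by
          refine eventually_of_mem ((hUopen 0).mem_nhds h0) (fun x' hx' => ?_)
          exact hg0 x' (fun m hm => hdisj 0 (m + 1) (by omega) _ hx' hm)
        exact continuousAt_const.congr (hev.mono (fun x' hx' => hx'.symm))
      · have hall : ∀ m, r x ∉ U m := by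
          intro m
          match m with
          | 0 => exact h0
          | (m + 1) => exact fun hm => h1 ⟨m, hm⟩
        have hgx : g x = p := hg0 x (fun k hk => hall (k + 1) hk)
        rw [ContinuousAt, hgx, Metric.tendsto_nhds]
        intro ε hε
        obtain ⟨M, hM⟩ := hqsmall ε hε
        have hWopen : IsOpen (⋂ m ∈ Finset.range (M + 2), (r ⁻¹' U m)ᶜ) :=
          isOpen_biInter_finset
            (fun m _ => ((hUclosed m).preimage hr).isOpen_compl)
        have hxW : x ∈ ⋂ m ∈ Finset.range (M + 2), (r ⁻¹' U m)ᶜ := by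
          simp only [Set.mem_iInter, Set.mem_compl_iff, Set.mem_preimage]
          intro m _
          exact hall m
        refine eventually_of_mem (hWopen.mem_nhds hxW) (fun x' hx' => ?_)
        simp only [Set.mem_iInter, Set.mem_compl_iff, Set.mem_preimage,
          Finset.mem_range] at hx'
        by_cases hx1 : ∃ k, r x' ∈ U (k + 1)
        · obtain ⟨k, hk⟩ := hx1
          have hgx' : g x' = q k := hg1 x' k hk
          have hkM : M ≤ k := by
            by_contra hlt
            exact hx' (k + 1) (by omega) hk
          rw [hgx']
          exact hM k hkM
        · push_neg at hx1
          rw [hg0 x' hx1, dist_self]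
          exact hε
  -- contradiction via retract-rigidity of g
  obtain ⟨ρ, hρc, hρi, K, hKmono, hKpos, hconv2⟩ := hX g hgcont
  have hρp : ∀ x, ρ x = p := by
    intro x
    obtain ⟨K0, hK0⟩ := hgev x
    have h1 : Tendsto (fun l => g^[K l] x) atTop (𝓝 (ρ x)) := hconv2.tendsto_at x
    have h2 : ∀ᶠ l in atTop, g^[K l] x = p := by
      filter_upwards [eventually_ge_atTop K0] with l hl
      exact hK0 _ (le_trans hl hKmono.le_apply)
    exact tendsto_nhds_unique h1 (tendsto_const_nhds.congr' (h2.mono fun l hl => hl.symm))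
  have hd0 : 0 < dist p (q 0) := dist_pos.2 (Ne.symm (hqne 0))
  obtain ⟨l, hl⟩ := (Metric.tendstoUniformly_iff.1 hconv2 _ hd0).exists
  have hx := hl (q (K l))
  rw [hρp, hgiter (K l)] at hx
  exact lt_irrefl _ hx
end

section
/- Let X be a compact metric space and let C(X) be the space of continuous maps X → X equipped with the supremum metric ρ(f,g) = sup_{x∈X} d(f(x), g(x)). If C(X) is compact, then X is retract-rigid: for every continuous f : X → X there exist a retraction r : X → X (continuous with r ∘ r = r) and a strictly increasing sequence of positive integers ⟨n_i⟩ such that f^{n_i} converges uniformly to r. -/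
open Filter

/-- If the space `C(X, X)` of continuous self-maps of a compact metric space `X` (with the
supremum metric, i.e. the topology of uniform convergence) is compact, then `X` is
retract-rigid: for every continuous `f : X → X` there is a retraction `r` (a continuous
idempotent map) and a strictly increasing sequence of positive integers `⟨n_i⟩` such that
`f^[n i]` converges uniformly to `r`. -/
theorem compact_selfmaps_implies_retractRigid
    {X : Type*} [MetricSpace X] [CompactSpace X]
    (hC : IsCompact (Set.univ : Set C(X, X))) :
    ∀ f : X → X, Continuous f →
      ∃ r : X → X, Continuous r ∧ r ∘ r = r ∧
        ∃ n : ℕ → ℕ, StrictMono n ∧ (∀ i, 0 < n i) ∧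
          TendstoUniformly (fun i (x : X) => f^[n i] x) r atTop := by
  intro f hf
  have hCS : CompactSpace C(X, X) := isCompact_univ_iff.mp hC
  -- the iterates of `f` as continuous maps
  set F : ℕ → C(X, X) := fun n => ⟨f^[n], hf.iterate n⟩ with hF
  have hFadd : ∀ a b : ℕ, F (a + b) = (F a).comp (F b) := by
    intro a b
    ext x
    simp [hF, Function.iterate_add_apply]
  -- the set of cluster points of the iterates
  set Λ : Set C(X, X) :=
    {g : C(X, X) | ∀ ε > (0 : ℝ), ∀ N : ℕ, ∃ n, N ≤ n ∧ dist (F n) g < ε} with hΛ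
  -- Λ is nonempty
  have hΛne : Λ.Nonempty := by
    obtain ⟨g, -, φ, hφ, hconv⟩ := hC.tendsto_subseq (x := F) (fun n => Set.mem_univ _)
    refine ⟨g, fun ε hε N => ?_⟩
    obtain ⟨M, hM⟩ := Metric.tendsto_atTop.mp hconv ε hε
    exact ⟨φ (max M N), le_trans (le_max_right M N) (le_trans (hφ.le_apply) (le_refl _)),
      hM (max M N) (le_max_left M N)⟩
  -- Λ is closed
  have hΛcl : IsClosed Λ := by
    rw [← isSeqClosed_iff_isClosed]
    intro u g hu hug
    intro ε hε N
    obtain ⟨k, hk⟩ := Metric.tendsto_atTop.mp hug (ε / 2) (by linarith)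
    obtain ⟨n, hn, hn'⟩ := hu k (ε / 2) (by linarith) N
    refine ⟨n, hn, ?_⟩
    calc dist (F n) g ≤ dist (F n) (u k) + dist (u k) g := dist_triangle _ _ _
      _ < ε / 2 + ε / 2 := add_lt_add hn' (hk k le_rfl)
      _ = ε := by ring
  -- Λ is closed under composition
  have hΛcomp : ∀ g ∈ Λ, ∀ h ∈ Λ, g.comp h ∈ Λ := by
    intro g hg h hh ε hε N
    -- uniform continuity of g
    have hgu : UniformContinuous g := CompactSpace.uniformContinuous_of_continuous g.continuous
    obtain ⟨δ, hδ, hδ'⟩ := Metric.uniformContinuous_iff.mp hgu (ε / 2) (by linarith)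
    obtain ⟨b, hb, hb'⟩ := hh (min δ (ε / 2)) (lt_min hδ (by linarith)) 0
    obtain ⟨a, ha, ha'⟩ := hg (ε / 2) (by linarith) N
    refine ⟨a + b, le_trans ha (Nat.le_add_right a b), ?_⟩
    rw [hFadd]
    have key : ∀ x : X, dist (((F a).comp (F b)) x) ((g.comp h) x)
        ≤ dist (F a) g + ε / 2 := by
      intro x
      have h1 : dist ((F a) ((F b) x)) (g ((F b) x)) ≤ dist (F a) g :=
        ContinuousMap.dist_apply_le_dist _
      have h2 : dist ((F b) x) (h x) < δ :=
        lt_of_le_of_lt (ContinuousMap.dist_apply_le_dist _) (lt_of_lt_of_le hb' (min_le_left _ _))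
      have h3 : dist (g ((F b) x)) (g (h x)) < ε / 2 := hδ' h2
      calc dist (((F a).comp (F b)) x) ((g.comp h) x)
          ≤ dist ((F a) ((F b) x)) (g ((F b) x)) + dist (g ((F b) x)) (g (h x)) :=
            dist_triangle _ _ _
        _ ≤ dist (F a) g + ε / 2 := add_le_add h1 h3.le
    have : dist ((F a).comp (F b)) (g.comp h) ≤ dist (F a) g + ε / 2 := by
      refine (ContinuousMap.dist_le ?_).mpr key
      positivity
    calc dist ((F a).comp (F b)) (g.comp h) ≤ dist (F a) g + ε / 2 := this
      _ < ε / 2 + ε / 2 := by linarith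
      _ = ε := by ring
  -- The family of nonempty closed subsemigroups of Λ
  set T : Set (Set C(X, X)) :=
    {S | S.Nonempty ∧ IsClosed S ∧ S ⊆ Λ ∧ ∀ g ∈ S, ∀ h ∈ S, g.comp h ∈ S} with hT
  have hΛT : Λ ∈ T := ⟨hΛne, hΛcl, le_refl _, hΛcomp⟩
  -- Zorn: get a minimal element of T
  obtain ⟨S, -, hST, hSmin⟩ := zorn_superset_nonempty T (fun c hcT hchain hcne => by
    refine ⟨⋂₀ c, ⟨?_, ?_, ?_, ?_⟩, fun s hs => Set.sInter_subset_of_mem hs⟩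
    · -- nonempty by compactness
      have : Nonempty c := hcne.to_subtype
      refine IsCompact.nonempty_sInter_of_directed_nonempty_isCompact_isClosed
        (fun u hu v hv => (hchain.total hu hv).elim
          (fun h => ⟨u, hu, le_refl _, h⟩) (fun h => ⟨v, hv, h, le_refl _⟩))
        (fun U hU => (hcT hU).1)
        (fun U hU => (hcT hU).2.1.isCompact) (fun U hU => (hcT hU).2.1)
    · exact isClosed_sInter fun U hU => (hcT hU).2.1
    · obtain ⟨s, hs⟩ := hcne
      exact (Set.sInter_subset_of_mem hs).trans (hcT hs).2.2.1
    · intro g hg h hh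
      exact Set.mem_sInter.mpr fun U hU =>
        (hcT hU).2.2.2 g (Set.mem_sInter.mp hg U hU) h (Set.mem_sInter.mp hh U hU)) Λ hΛT
  obtain ⟨hSne, hScl, hSΛ, hScomp⟩ := hST
  obtain ⟨a, haS⟩ := hSne
  -- right translation by a
  have hcompRight : Continuous fun s : C(X, X) => s.comp a := by
    have : Continuous fun s : C(X, X) => ((a, s) : C(X, X) × C(X, X)) :=
      Continuous.prodMk_right a
    exact ContinuousMap.continuous_comp'.comp this
  -- S.comp a is a nonempty closed subsemigroup of Λ, contained in S
  have hSa : (fun s : C(X, X) => s.comp a) '' S ∈ T := by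
    refine ⟨⟨a.comp a, a, haS, rfl⟩, ?_, ?_, ?_⟩
    · exact ((hScl.isCompact.image hcompRight).isClosed)
    · rintro _ ⟨s, hs, rfl⟩
      exact hSΛ (hScomp s hs a haS)
    · rintro _ ⟨s, hs, rfl⟩ _ ⟨t, ht, rfl⟩
      refine ⟨s.comp (a.comp t), hScomp s hs _ (hScomp a haS t ht), ?_⟩
      ext x
      simp [ContinuousMap.comp_apply]
  have hSaS : (fun s : C(X, X) => s.comp a) '' S ⊆ S := by
    rintro _ ⟨s, hs, rfl⟩
    exact hScomp s hs a haS
  have hSaeq : (fun s : C(X, X) => s.comp a) '' S = S := Set.Subset.antisymm hSaS (hSmin hSa hSaS)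
  -- there is e ∈ S with e.comp a = a
  have haSa : a ∈ (fun s : C(X, X) => s.comp a) '' S := hSaeq.symm ▸ haS
  obtain ⟨e, heS, hea⟩ := haSa
  -- the stabilizer of a is all of S
  have hB : {s ∈ S | s.comp a = a} ∈ T := by
    refine ⟨⟨e, heS, hea⟩, ?_, fun s hs => hSΛ hs.1, ?_⟩
    · exact IsClosed.inter hScl (isClosed_singleton.preimage hcompRight)
    · rintro g ⟨hgS, hga⟩ h ⟨hhS, hha⟩
      refine ⟨hScomp g hgS h hhS, ?_⟩
      rw [ContinuousMap.comp_assoc, hha, hga]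
  have hBeq : {s ∈ S | s.comp a = a} = S :=
    Set.Subset.antisymm (Set.sep_subset _ _) (hSmin hB (Set.sep_subset _ _))
  have haa : a.comp a = a := (hBeq.symm ▸ haS : a ∈ {s ∈ S | s.comp a = a}).2
  -- a ∈ Λ : extract the subsequence
  have haΛ : a ∈ Λ := hSΛ haS
  have key : ∀ N : ℕ, ∀ ε > (0 : ℝ), ∃ n, N ≤ n ∧ dist (F n) a < ε := by
    intro N ε hε; exact haΛ ε hε N
  -- build the sequence recursively
  have step : ∀ i : ℕ, ∀ p : ℕ, ∃ n, p + 1 ≤ n ∧ dist (F n) a < 1 / (i + 1) := by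
    intro i p
    exact key (p + 1) (1 / (i + 1)) (by positivity)
  choose! nfun hnfun1 hnfun2 using step
  set n : ℕ → ℕ := fun i => Nat.rec (nfun 0 0) (fun i prev => nfun (i + 1) prev) i with hn
  have hn0 : n 0 = nfun 0 0 := rfl
  have hnsucc : ∀ i, n (i + 1) = nfun (i + 1) (n i) := fun i => rfl
  have hnlt : ∀ i, n i < n (i + 1) := by
    intro i
    rw [hnsucc]
    exact lt_of_lt_of_le (Nat.lt_succ_self _) (hnfun1 (i + 1) (n i))
  have hmono : StrictMono n := strictMono_nat_of_lt_succ hnlt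
  have hpos : ∀ i, 0 < n i := by
    intro i
    induction i with
    | zero => exact lt_of_lt_of_le (Nat.succ_pos 0) (hnfun1 0 0)
    | succ i ih =>
      exact lt_of_lt_of_le (Nat.succ_pos _)
        (le_trans (Nat.succ_le_succ ih.le) (hnsucc i ▸ hnfun1 (i + 1) (n i)))
  have hdist : ∀ i, dist (F (n i)) a < 1 / (i + 1) := by
    intro i
    cases i with
    | zero => exact hnfun2 0 0
    | succ i => exact hnfun2 (i + 1) (n i)
  refine ⟨⇑a, a.continuous, ?_, n, hmono, hpos, ?_⟩
  · funext x
    exact congrFun (congrArg DFunLike.coe haa) x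
  · rw [Metric.tendstoUniformly_iff]
    intro ε hε
    obtain ⟨N, hN⟩ := exists_nat_one_div_lt hε
    rw [eventually_atTop]
    refine ⟨N, fun i hi x => ?_⟩
    have h1 : dist (a x) (f^[n i] x) ≤ dist (F (n i)) a := by
      rw [dist_comm]
      exact ContinuousMap.dist_apply_le_dist (f := F (n i)) (g := a) x
    have h2 : (1 : ℝ) / (i + 1) ≤ 1 / (N + 1) := by
      apply div_le_div_of_nonneg_left one_pos.le (by positivity)
      exact_mod_cast Nat.succ_le_succ hi
    calc dist (a x) (f^[n i] x) ≤ dist (F (n i)) a := h1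
      _ < 1 / (i + 1) := hdist i
      _ ≤ 1 / (N + 1) := h2
      _ < ε := hN
end
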